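/- arXiv:2302.06824 — 7 statements merged into one kernel-verified Lean document; each statement's English description precedes it below -/
import Mathlib

section
/- Let (α_i)_{i≥1} be a sequence of real numbers such that there is a constant B with m⁻¹ ∑_{i=1}^m α_i² ≤ B for all m ≥ 1. Let (ε_i)_{i≥1} be independent, identically distributed real-valued random variables on a probability space with E[ε_i] = 0 and finite variance. Then m⁻¹ ∑_{i=1}^m α_i ε_i → 0 as m → ∞ almost surely. -/
open MeasureTheory ProbabilityTheory Filter
open scoped Topology

section Aux
open Filter

private lemma abel_id (u c : ℕ → ℝ) (N : ℕ) :
    ∑ n ∈ Finset.range N, c (n+1) * (u (n+1) - u n)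
      = c N * u N - c 0 * u 0 + ∑ n ∈ Finset.range N, (c n - c (n+1)) * u n := by
  induction N with
  | zero => simp
  | succ N ih => rw [Finset.sum_range_succ, Finset.sum_range_succ, ih]; ring

/-- Deterministic Abel-summation lemma: if `0 ≤ u n ≤ B(n+1)²` and `u` is monotone,
then `∑ (u (n+1) - u n)/(n+1)³` converges. -/
private lemma summable_diff_div_cube {u : ℕ → ℝ} {B : ℝ} (hB : 0 ≤ B)
    (hmono : Monotone u) (h0 : 0 ≤ u 0)
    (hle : ∀ n, u n ≤ B * ((n : ℝ) + 1) ^ 2) :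
    Summable (fun n : ℕ => (u (n+1) - u n) / ((n : ℝ) + 1) ^ 3) := by
  have hunn : ∀ n, 0 ≤ u n := fun n => h0.trans (hmono (Nat.zero_le n))
  have hsummand : ∀ n : ℕ, (u (n+1) - u n) / ((n : ℝ) + 1) ^ 3
      = 1 / ((n+1 : ℕ) : ℝ) ^ 3 * (u (n+1) - u n) := by
    intro n; push_cast; ring
  have hAux : Summable (fun n : ℕ => 28 * B / (n : ℝ) ^ 2) := by
    have h1 : Summable (fun n : ℕ => 1 / (n : ℝ) ^ 2) :=
      Real.summable_one_div_nat_pow.2 one_lt_two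
    exact (h1.mul_left (28 * B)).congr (fun n => by rw [mul_one_div])
  refine summable_of_sum_range_le (c := 4 * B + ∑' n : ℕ, 28 * B / (n : ℝ) ^ 2)
    (fun n => div_nonneg (sub_nonneg.2 (hmono (Nat.le_succ n))) (by positivity)) (fun N => ?_)
  have hid := abel_id u (fun k : ℕ => 1 / (k : ℝ) ^ 3) N
  calc ∑ n ∈ Finset.range N, (u (n+1) - u n) / ((n : ℝ) + 1) ^ 3
      = ∑ n ∈ Finset.range N, 1 / ((n+1 : ℕ) : ℝ) ^ 3 * (u (n+1) - u n) :=
        Finset.sum_congr rfl fun n _ => hsummand n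
    _ = (1 / (N : ℝ) ^ 3) * u N - (1 / ((0 : ℕ) : ℝ) ^ 3) * u 0
          + ∑ n ∈ Finset.range N, (1 / (n : ℝ) ^ 3 - 1 / ((n+1 : ℕ) : ℝ) ^ 3) * u n := hid
    _ ≤ 4 * B + ∑' n : ℕ, 28 * B / (n : ℝ) ^ 2 := by
        have hterm1 : (1 / (N : ℝ) ^ 3) * u N ≤ 4 * B := by
          rcases Nat.eq_zero_or_pos N with h | h
          · subst h; simp; positivity
          · have hx : (1 : ℝ) ≤ (N : ℝ) := by exact_mod_cast h
            have hu4 : u N ≤ 4 * B * (N : ℝ) ^ 2 := by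
              refine (hle N).trans ?_
              have h4 : ((N : ℝ) + 1) ^ 2 ≤ 4 * (N : ℝ) ^ 2 := by nlinarith
              nlinarith [mul_le_mul_of_nonneg_left h4 hB]
            have h5 : (1 / (N : ℝ) ^ 3) * u N ≤ (1 / (N : ℝ) ^ 3) * (4 * B * (N : ℝ) ^ 2) :=
              mul_le_mul_of_nonneg_left hu4 (by positivity)
            have h6 : (1 / (N : ℝ) ^ 3) * (4 * B * (N : ℝ) ^ 2) = 4 * B / (N : ℝ) := by
              field_simp
            have h7 : 4 * B / (N : ℝ) ≤ 4 * B := div_le_self (by positivity) hx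
            linarith
        have hterm0 : (1 / ((0 : ℕ) : ℝ) ^ 3) * u 0 = 0 := by norm_num
        have hterm2 : ∑ n ∈ Finset.range N, (1 / (n : ℝ) ^ 3 - 1 / ((n+1 : ℕ) : ℝ) ^ 3) * u n
            ≤ ∑' n : ℕ, 28 * B / (n : ℝ) ^ 2 := by
          refine le_trans (Finset.sum_le_sum (fun n _ => ?_))
            (Summable.sum_le_tsum _ (fun n _ => by positivity) hAux)
          -- per-term bound: (1/n³ - 1/(n+1)³) * u n ≤ 28B/n²
          rcases Nat.eq_zero_or_pos n with h | h
          · subst h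
            simp only [Nat.cast_zero]
            norm_num
            exact hunn 0
          · have hx : (1 : ℝ) ≤ (n : ℝ) := by exact_mod_cast h
            have hx0 : (0 : ℝ) < (n : ℝ) := by linarith
            have hcast : ((n+1 : ℕ) : ℝ) = (n : ℝ) + 1 := by push_cast; ring
            rw [hcast]
            have hkey : 1 / (n : ℝ) ^ 3 - 1 / ((n : ℝ) + 1) ^ 3 ≤ 7 / (n : ℝ) ^ 4 := by
              rw [div_sub_div _ _ (by positivity) (by positivity),
                div_le_div_iff₀ (by positivity) (by positivity)]
              nlinarith [pow_nonneg hx0.le 3, pow_nonneg hx0.le 4, pow_nonneg hx0.le 5,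
                pow_nonneg hx0.le 6]
            have hu4 : u n ≤ 4 * B * (n : ℝ) ^ 2 := by
              refine (hle n).trans ?_
              have h4 : ((n : ℝ) + 1) ^ 2 ≤ 4 * (n : ℝ) ^ 2 := by nlinarith
              nlinarith [mul_le_mul_of_nonneg_left h4 hB]
            calc (1 / (n : ℝ) ^ 3 - 1 / ((n : ℝ) + 1) ^ 3) * u n
                ≤ (7 / (n : ℝ) ^ 4) * (4 * B * (n : ℝ) ^ 2) := by
                  refine mul_le_mul hkey hu4 (hunn n) (by positivity)
              _ = 28 * B / (n : ℝ) ^ 2 := by field_simp; ring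
        linarith

end Aux


/-- If `(α_i)_{i≥1}` are reals with `m⁻¹ ∑_{i=1}^m α_i² ≤ B` for all `m ≥ 1`,
and `(ε_i)_{i≥1}` are i.i.d. real random variables with mean zero and finite variance,
then `m⁻¹ ∑_{i=1}^m α_i ε_i → 0` almost surely. -/
theorem statement0
    {Ω : Type*} [MeasurableSpace Ω] (Pr : Measure Ω) [IsProbabilityMeasure Pr]
    (α : ℕ → ℝ) (B : ℝ)
    (hB : ∀ m : ℕ, 1 ≤ m → (m : ℝ)⁻¹ * ∑ i ∈ Finset.Icc 1 m, (α i) ^ 2 ≤ B)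
    (ε : ℕ → Ω → ℝ)
    (hmeas : ∀ i, Measurable (ε i))
    (hindep : iIndepFun ε Pr)
    (hident : ∀ i, IdentDistrib (ε i) (ε 1) Pr Pr)
    (hL2 : ∀ i, MemLp (ε i) 2 Pr)
    (hmean : ∀ i, ∫ ω, ε i ω ∂Pr = 0) :
    ∀ᵐ ω ∂Pr, Tendsto (fun m : ℕ => (m : ℝ)⁻¹ * ∑ i ∈ Finset.Icc 1 m, α i * ε i ω)
      atTop (𝓝 0) := by
  classical
  have hIcc : ∀ m : ℕ, Finset.Icc 1 m = Finset.Ioc 0 m := by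
    intro m; ext a; simp [Finset.mem_Icc, Finset.mem_Ioc]; omega
  set X : ℕ → Ω → ℝ := fun i ω => α i * ε i ω with hXdef
  set S : ℕ → Ω → ℝ := fun m ω => ∑ i ∈ Finset.Ioc 0 m, X i ω with hSdef
  set T : ℕ → ℝ := fun m => ∑ i ∈ Finset.Ioc 0 m, α i ^ 2 with hTdef
  set σ2 : ℝ := variance (ε 1) Pr with hσ2def
  have hσ2nn : 0 ≤ σ2 := variance_nonneg _ _
  have hXL2 : ∀ i, MemLp (X i) 2 Pr := fun i => (hL2 i).const_mul (α i)
  have hXmeas : ∀ i, Measurable (X i) := fun i => (hmeas i).const_mul (α i)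
  have hXint : ∀ i, Integrable (X i) Pr := fun i => (hXL2 i).integrable one_le_two
  -- the partial sums of `α i ^ 2`
  have hTnn : ∀ m, 0 ≤ T m := fun m => Finset.sum_nonneg fun i _ => sq_nonneg _
  have hTmono : Monotone T := by
    intro a b hab
    exact Finset.sum_le_sum_of_subset_of_nonneg (Finset.Ioc_subset_Ioc_right hab)
      (fun i _ _ => sq_nonneg _)
  have hT : ∀ m : ℕ, 1 ≤ m → T m ≤ B * m := by
    intro m hm
    have hm' : (0 : ℝ) < m := by exact_mod_cast hm
    have h1 := hB m hm
    rw [hIcc m] at h1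
    calc T m = (m : ℝ) * ((m : ℝ)⁻¹ * T m) := by field_simp
      _ ≤ (m : ℝ) * B := mul_le_mul_of_nonneg_left h1 hm'.le
      _ = B * m := mul_comm _ _
  have hB0 : 0 ≤ B := by
    have := hT 1 le_rfl
    have h0 : 0 ≤ T 1 := hTnn 1
    push_cast at this
    linarith
  -- second moments
  have hε2 : ∀ i, ∫ ω, (ε i ω) ^ 2 ∂Pr = σ2 := by
    intro i
    have h1 := variance_of_integral_eq_zero (hL2 i).aemeasurable (hmean i)
    have h2 := (hident i).variance_eq
    rw [h2] at h1
    rw [← h1, hσ2def]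
  have hX2 : ∀ i, ∫ ω, (X i ω) ^ 2 ∂Pr = α i ^ 2 * σ2 := by
    intro i
    have : ∀ ω, (X i ω) ^ 2 = α i ^ 2 * (ε i ω) ^ 2 := by
      intro ω; simp only [hXdef]; ring
    simp_rw [this]
    rw [integral_const_mul, hε2 i]
  have hSmean : ∀ m, ∫ ω, S m ω ∂Pr = 0 := by
    intro m
    simp only [hSdef]
    rw [integral_finset_sum _ (fun i _ => hXint i)]
    refine Finset.sum_eq_zero fun i _ => ?_
    show ∫ ω, α i * ε i ω ∂Pr = 0
    rw [integral_const_mul, hmean i, mul_zero]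
  have hSL2 : ∀ m, MemLp (S m) 2 Pr := fun m => memLp_finset_sum _ fun i _ => hXL2 i
  have hSmeas : ∀ m, Measurable (S m) := fun m => Finset.measurable_sum _ fun i _ => hXmeas i
  have hES2 : ∀ m, ∫ ω, (S m ω) ^ 2 ∂Pr = σ2 * T m := by
    intro m
    have hvar : variance (S m) Pr = ∫ ω, (S m ω) ^ 2 ∂Pr := by
      have h1 := variance_of_integral_eq_zero (hSL2 m).aemeasurable (hSmean m)
      simpa only [Pi.pow_apply] using h1
    rw [← hvar]
    have hpair : Set.Pairwise ↑(Finset.Ioc 0 m) fun i j => IndepFun (X i) (X j) Pr := by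
      intro i _ j _ hij
      exact (hindep.indepFun hij).comp (measurable_const_mul (α i)) (measurable_const_mul (α j))
    have hsum := IndepFun.variance_sum (fun i (_ : i ∈ Finset.Ioc 0 m) => hXL2 i) hpair
    have hSeq : S m = ∑ i ∈ Finset.Ioc 0 m, X i := by
      funext ω; simp only [hSdef]; rw [Finset.sum_apply]
    rw [hSeq, hsum, hTdef, Finset.mul_sum]
    refine Finset.sum_congr rfl fun i _ => ?_
    have h1 : variance (fun ω => α i * ε i ω) Pr = α i ^ 2 * variance (ε i) Pr :=
      variance_const_mul (α i) (ε i) Pr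
    show variance (fun ω => α i * ε i ω) Pr = σ2 * α i ^ 2
    rw [h1, (hident i).variance_eq, ← hσ2def]; ring

  -- main block estimate for a fixed δ
  have main : ∀ δ : ℝ, 0 < δ → ∀ᵐ ω ∂Pr, ∀ᶠ n : ℕ in atTop,
      ∀ m ∈ Finset.Icc (n^2) ((n+1)^2), |S m ω| < δ * (n : ℝ)^2 := by
    intro δ hδ
    set M : ℕ → Ω → ℝ := fun n ω => |S (n^2) ω| + ∑ i ∈ Finset.Ioc (n^2) ((n+1)^2), |X i ω|
      with hMdef
    have hSM : ∀ n, ∀ m ∈ Finset.Icc (n^2) ((n+1)^2), ∀ ω, |S m ω| ≤ M n ω := by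
      intro n m hm ω
      rw [Finset.mem_Icc] at hm
      have hsplit : S (n^2) ω + ∑ i ∈ Finset.Ioc (n^2) m, X i ω = S m ω := by
        simp only [hSdef]
        exact Finset.sum_Ioc_consecutive _ (Nat.zero_le _) hm.1
      calc |S m ω| = |S (n^2) ω + ∑ i ∈ Finset.Ioc (n^2) m, X i ω| := by rw [hsplit]
        _ ≤ |S (n^2) ω| + |∑ i ∈ Finset.Ioc (n^2) m, X i ω| := abs_add_le _ _
        _ ≤ |S (n^2) ω| + ∑ i ∈ Finset.Ioc (n^2) m, |X i ω| :=
            add_le_add_right (Finset.abs_sum_le_sum_abs _ _) _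
        _ ≤ M n ω := by
            simp only [hMdef]
            exact add_le_add_right (Finset.sum_le_sum_of_subset_of_nonneg
              (Finset.Ioc_subset_Ioc_right hm.2) (fun i _ _ => abs_nonneg _)) _
    have hML2 : ∀ n, MemLp (M n) 2 Pr := by
      intro n
      have h1 : MemLp (fun ω => |S (n^2) ω|) 2 Pr := (hSL2 (n^2)).abs
      have h2 : MemLp (fun ω => ∑ i ∈ Finset.Ioc (n^2) ((n+1)^2), |X i ω|) 2 Pr :=
        memLp_finset_sum _ (fun i _ => (hXL2 i).abs)
      exact h1.add h2
    have hMmeas : ∀ n, Measurable (M n) :=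
      fun n => ((hSmeas (n^2)).abs).add (Finset.measurable_sum _ fun i _ => (hXmeas i).abs)
    have hpt : ∀ n ω, M n ω ^ 2 ≤ 2 * (S (n^2) ω)^2
        + 2 * ((Finset.Ioc (n^2) ((n+1)^2)).card : ℝ)
          * ∑ i ∈ Finset.Ioc (n^2) ((n+1)^2), (X i ω)^2 := by
      intro n ω
      have h1 : (∑ i ∈ Finset.Ioc (n^2) ((n+1)^2), |X i ω|)^2
          ≤ ((Finset.Ioc (n^2) ((n+1)^2)).card : ℝ)
            * ∑ i ∈ Finset.Ioc (n^2) ((n+1)^2), (X i ω)^2 := by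
        have h := sq_sum_le_card_mul_sum_sq (s := Finset.Ioc (n^2) ((n+1)^2))
          (f := fun i => |X i ω|)
        simpa [sq_abs] using h
      have h2 := sq_abs (S (n^2) ω)
      have h3 := sq_nonneg (|S (n^2) ω| - ∑ i ∈ Finset.Ioc (n^2) ((n+1)^2), |X i ω|)
      simp only [hMdef]
      nlinarith [h1, h2, h3]
    have hEM2 : ∀ n : ℕ, ∫ ω, M n ω ^ 2 ∂Pr
        ≤ 2 * (σ2 * T (n^2)) + 2 * ((Finset.Ioc (n^2) ((n+1)^2)).card : ℝ)
            * (σ2 * (T ((n+1)^2) - T (n^2))) := by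
      intro n
      have hint1 : Integrable (fun ω => M n ω ^ 2) Pr := (hML2 n).integrable_sq
      have hint2 : Integrable (fun ω => 2 * (S (n^2) ω)^2
          + 2 * ((Finset.Ioc (n^2) ((n+1)^2)).card : ℝ)
            * ∑ i ∈ Finset.Ioc (n^2) ((n+1)^2), (X i ω)^2) Pr := by
        refine Integrable.add (((hSL2 (n^2)).integrable_sq).const_mul 2) ?_
        exact (integrable_finset_sum _ (fun i _ => (hXL2 i).integrable_sq)).const_mul _
      have hmono := integral_mono hint1 hint2 (fun ω => hpt n ω)
      refine hmono.trans ?_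
      rw [integral_add (((hSL2 (n^2)).integrable_sq).const_mul 2)
          ((integrable_finset_sum _ (fun i _ => (hXL2 i).integrable_sq)).const_mul _),
        integral_const_mul, integral_const_mul, hES2,
        integral_finset_sum _ (fun i _ => (hXL2 i).integrable_sq)]
      have hblk : ∑ i ∈ Finset.Ioc (n^2) ((n+1)^2), ∫ ω, (X i ω)^2 ∂Pr
          = σ2 * (T ((n+1)^2) - T (n^2)) := by
        have h1 : ∀ i ∈ Finset.Ioc (n^2) ((n+1)^2), ∫ ω, (X i ω)^2 ∂Pr = α i ^2 * σ2 :=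
          fun i _ => hX2 i
        rw [Finset.sum_congr rfl h1, ← Finset.sum_mul]
        have h2 := Finset.sum_Ioc_consecutive (fun i => α i ^ 2) (Nat.zero_le (n^2))
          (Nat.pow_le_pow_left (Nat.le_succ n) 2)
        have h4 : ∑ i ∈ Finset.Ioc (n^2) ((n+1)^2), α i ^ 2 = T ((n+1)^2) - T (n^2) := by
          simp only [hTdef]
          linarith [h2]
        rw [h4]; ring
      rw [hblk]
    set A : ℕ → Set Ω := fun n => {ω | δ * (n:ℝ)^2 ≤ M n ω} with hAdef
    have hPA : ∀ n : ℕ, 1 ≤ n →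
        (Pr (A n)).toReal ≤ (∫ ω, M n ω ^2 ∂Pr) / (δ * (n:ℝ)^2)^2 := by
      intro n hn
      have hn' : (0:ℝ) < (n:ℝ) := by exact_mod_cast hn
      have hpos : (0:ℝ) < (δ * (n:ℝ)^2)^2 := by positivity
      have hsub : A n ⊆ {ω | (δ * (n:ℝ)^2)^2 ≤ M n ω ^2} := by
        intro ω hω
        have h1 : δ * (n:ℝ)^2 ≤ M n ω := hω
        exact pow_le_pow_left₀ (by positivity) h1 2
      have h1 : (Pr (A n)).toReal ≤ (Pr {ω | (δ * (n:ℝ)^2)^2 ≤ M n ω ^2}).toReal :=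
        ENNReal.toReal_mono (measure_ne_top _ _) (measure_mono hsub)
      have hmark := mul_meas_ge_le_integral_of_nonneg (μ := Pr)
        (f := fun ω => M n ω ^2) (ae_of_all _ fun ω => sq_nonneg _)
        ((hML2 n).integrable_sq) ((δ * (n:ℝ)^2)^2)
      rw [le_div_iff₀ hpos]
      calc (Pr (A n)).toReal * (δ * (n:ℝ)^2)^2
          ≤ (Pr {ω | (δ * (n:ℝ)^2)^2 ≤ M n ω ^2}).toReal * (δ * (n:ℝ)^2)^2 :=
            mul_le_mul_of_nonneg_right h1 hpos.le
        _ = (δ * (n:ℝ)^2)^2 * (Pr {ω | (δ * (n:ℝ)^2)^2 ≤ M n ω ^2}).toReal := mul_comm _ _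
        _ ≤ ∫ ω, M n ω ^2 ∂Pr := hmark
    have hu_le : ∀ n : ℕ, T ((n+1)^2) ≤ B * ((n:ℝ)+1)^2 := by
      intro n
      have h := hT ((n+1)^2) (Nat.one_le_pow 2 (n+1) (Nat.succ_pos n))
      have hc : (((n+1)^2 : ℕ) : ℝ) = ((n:ℝ)+1)^2 := by push_cast; ring
      rw [hc] at h
      exact h
    have hdsum : Summable (fun n : ℕ => (T ((n+1+1)^2) - T ((n+1)^2)) / ((n:ℝ)+1)^3) := by
      exact summable_diff_div_cube (u := fun n => T ((n+1)^2)) hB0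
        (fun a b hab => hTmono (Nat.pow_le_pow_left (by omega) 2)) (hTnn _) hu_le
    set g : ℕ → ℝ := fun n => (2*σ2*B/δ^2) * (1/((n:ℝ)+1)^2)
      + (6*σ2/δ^2) * ((T ((n+1+1)^2) - T ((n+1)^2)) / ((n:ℝ)+1)^3) with hgdef
    have hg_nonneg : ∀ n, 0 ≤ g n := by
      intro n
      have hd : 0 ≤ T ((n+1+1)^2) - T ((n+1)^2) :=
        sub_nonneg.2 (hTmono (Nat.pow_le_pow_left (by omega) 2))
      refine add_nonneg (by positivity)
        (mul_nonneg (by positivity) (div_nonneg hd (by positivity)))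
    have hg_sum : Summable g := by
      refine Summable.add (Summable.mul_left _ ?_) (hdsum.mul_left _)
      have h1 : Summable (fun n : ℕ => 1/((n:ℝ))^2) := Real.summable_one_div_nat_pow.2 one_lt_two
      have h2 := (summable_nat_add_iff 1).2 h1
      exact h2.congr (fun n => by push_cast; ring)
    have hPA_le : ∀ n : ℕ, Pr (A (n+1)) ≤ ENNReal.ofReal (g n) := by
      intro n
      have h1 := hPA (n+1) (by omega)
      have hxcast : (((n+1:ℕ)):ℝ) = (n:ℝ)+1 := by push_cast; ring
      have hcard : ((Finset.Ioc ((n+1)^2) ((n+1+1)^2)).card : ℝ) = 2*(n:ℝ)+3 := by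
        rw [Nat.card_Ioc]
        have h : (n+1+1)^2 - (n+1)^2 = 2*n+3 := by
          have : (n+1+1)^2 = (n+1)^2 + (2*n+3) := by ring
          omega
        rw [h]; push_cast; ring
      have h2 : (∫ ω, M (n+1) ω ^2 ∂Pr) / (δ * (((n+1:ℕ)):ℝ)^2)^2 ≤ g n := by
        have hd : 0 ≤ T ((n+1+1)^2) - T ((n+1)^2) :=
          sub_nonneg.2 (hTmono (Nat.pow_le_pow_left (by omega) 2))
        have hnum : ∫ ω, M (n+1) ω ^2 ∂Pr
            ≤ 2*σ2*B*((n:ℝ)+1)^2 + 6*σ2*(T ((n+1+1)^2) - T ((n+1)^2))*((n:ℝ)+1) := by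
          have h := hEM2 (n+1)
          rw [hcard] at h
          have hu := hu_le n
          nlinarith [mul_nonneg (Nat.cast_nonneg (α := ℝ) n) (mul_nonneg hσ2nn hd),
            mul_le_mul_of_nonneg_left hu hσ2nn, mul_nonneg hσ2nn hd]
        rw [hxcast, div_le_iff₀ (by positivity)]
        have hδ' : δ ≠ 0 := ne_of_gt hδ
        have hx' : ((n:ℝ)+1) ≠ 0 := by positivity
        have hexp : g n * (δ * ((n:ℝ)+1)^2)^2
            = 2*σ2*B*((n:ℝ)+1)^2 + 6*σ2*(T ((n+1+1)^2) - T ((n+1)^2))*((n:ℝ)+1) := by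
          simp only [hgdef]
          field_simp
        rw [hexp]
        exact hnum
      have h3 : Pr (A (n+1)) = ENNReal.ofReal ((Pr (A (n+1))).toReal) :=
        (ENNReal.ofReal_toReal (measure_ne_top _ _)).symm
      rw [h3]
      exact ENNReal.ofReal_le_ofReal (h1.trans h2)
    have hsum_ne : (∑' n : ℕ, Pr (A (n+1))) ≠ ⊤ := by
      have h1 : (∑' n : ℕ, Pr (A (n+1))) ≤ ∑' n : ℕ, ENNReal.ofReal (g n) :=
        ENNReal.tsum_le_tsum hPA_le
      have h2 : ∑' n : ℕ, ENNReal.ofReal (g n) = ENNReal.ofReal (∑' n, g n) :=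
        (ENNReal.ofReal_tsum_of_nonneg hg_nonneg hg_sum).symm
      rw [h2] at h1
      exact ne_top_of_le_ne_top ENNReal.ofReal_ne_top h1
    have BC := ae_eventually_notMem hsum_ne
    filter_upwards [BC] with ω hω
    obtain ⟨N, hN⟩ := eventually_atTop.1 hω
    rw [eventually_atTop]
    refine ⟨N+1, fun n hn => ?_⟩
    intro m hm
    have hpred : n - 1 + 1 = n := by omega
    have h1 : ω ∉ A n := by
      have h := hN (n-1) (by omega)
      rwa [hpred] at h
    have h2 : ¬ (δ * (n:ℝ)^2 ≤ M n ω) := h1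
    exact lt_of_le_of_lt (hSM n m hm ω) (not_le.1 h2)
  -- combine over δ = 1/(k+1)
  have key : ∀ᵐ ω ∂Pr, ∀ k : ℕ, ∀ᶠ n : ℕ in atTop,
      ∀ m ∈ Finset.Icc (n^2) ((n+1)^2), |S m ω| < ((k:ℝ)+1)⁻¹ * (n:ℝ)^2 := by
    rw [ae_all_iff]
    intro k
    exact main ((k:ℝ)+1)⁻¹ (by positivity)
  filter_upwards [key] with ω hω
  rw [Metric.tendsto_atTop]
  intro r hr
  obtain ⟨k, hk⟩ := exists_nat_one_div_lt hr
  obtain ⟨N, hN⟩ := eventually_atTop.1 (hω k)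
  refine ⟨(N+1)^2, fun m hm => ?_⟩
  have hm1 : 0 < m := lt_of_lt_of_le (pow_pos (Nat.succ_pos N) 2) hm
  set n := m.sqrt with hndef
  have h1 : N + 1 ≤ n := by
    have hsq : (N+1)^2 = (N+1)*(N+1) := by ring
    have h2 : ((N+1)*(N+1)).sqrt ≤ m.sqrt := Nat.sqrt_le_sqrt (by rw [← hsq]; exact hm)
    rwa [Nat.sqrt_eq] at h2
  have hmem : m ∈ Finset.Icc (n^2) ((n+1)^2) := by
    rw [Finset.mem_Icc]
    exact ⟨Nat.sqrt_le' m, (Nat.lt_succ_sqrt' m).le⟩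
  have hb := hN n (by omega) m hmem
  have hn2m : (n^2 : ℕ) ≤ m := (Finset.mem_Icc.1 hmem).1
  have hmpos : (0:ℝ) < (m:ℝ) := by exact_mod_cast hm1
  rw [Real.dist_eq, sub_zero]
  have hfun : ∑ i ∈ Finset.Icc 1 m, α i * ε i ω = S m ω := by
    rw [hIcc m]
  rw [hfun]
  have habs : |(m:ℝ)⁻¹ * S m ω| = (m:ℝ)⁻¹ * |S m ω| := by
    rw [abs_mul, abs_of_nonneg (inv_nonneg.2 hmpos.le)]
  rw [habs]
  have hc2 : ((n:ℝ))^2 ≤ (m:ℝ) := by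
    have : ((n^2 : ℕ) : ℝ) ≤ (m:ℝ) := by exact_mod_cast hn2m
    push_cast at this
    exact this
  have hlt : (m:ℝ)⁻¹ * |S m ω| < (m:ℝ)⁻¹ * (((k:ℝ)+1)⁻¹ * (m:ℝ)) := by
    apply mul_lt_mul_of_pos_left ?_ (inv_pos.2 hmpos)
    calc |S m ω| < ((k:ℝ)+1)⁻¹ * (n:ℝ)^2 := hb
      _ ≤ ((k:ℝ)+1)⁻¹ * (m:ℝ) := mul_le_mul_of_nonneg_left hc2 (by positivity)
  have heq : (m:ℝ)⁻¹ * (((k:ℝ)+1)⁻¹ * (m:ℝ)) = ((k:ℝ)+1)⁻¹ := by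
    field_simp
  rw [heq] at hlt
  have hk2 : ((k:ℝ)+1)⁻¹ < r := by rw [inv_eq_one_div]; exact hk
  linarith
end

section
/- Let (a_i)_{i≥1} be a sequence of vectors in ℝ^p such that there is a constant B with m⁻¹ ∑_{i=1}^m ‖a_i‖² ≤ B for all m ≥ 1. Let (ε_i)_{i≥1} be independent, identically distributed random vectors in ℝ^q with E[ε_i] = 0 and with each component having finite variance. Then the p×q matrices m⁻¹ ∑_{i=1}^m a_i ε_iᵀ converge to the zero matrix as m → ∞ almost surely. -/
open MeasureTheory ProbabilityTheory Filter Matrix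
open scoped Topology ENNReal NNReal

/-- Abel-summation style bound: if the partial sums of a nonnegative sequence grow at most
linearly, then the series weighted by `1/i²` has uniformly bounded partial sums. -/
lemma abel_bound (w : ℕ → ℝ) (B : ℝ) (hw : ∀ i, 0 ≤ w i)
    (hW : ∀ m : ℕ, 1 ≤ m → ∑ i ∈ Finset.Icc 1 m, w i ≤ B * m) :
    ∀ n : ℕ, ∑ i ∈ Finset.Icc 1 n, w i / (i : ℝ) ^ 2 ≤ 2 * B := by
  have hB0 : 0 ≤ B := by
    have h1 := hW 1 le_rfl
    simp only [Finset.Icc_self, Finset.sum_singleton, Nat.cast_one, mul_one] at h1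
    exact le_trans (hw 1) h1
  -- bound on ∑ 1/i²
  have hT : ∀ n : ℕ, ∑ i ∈ Finset.Icc 1 n, ((i : ℝ) ^ 2)⁻¹ ≤ 2 - (n : ℝ)⁻¹ := by
    intro n
    induction n with
    | zero => simp
    | succ n ih =>
      rw [Finset.sum_Icc_succ_top (Nat.succ_le_succ n.zero_le)]
      rcases Nat.eq_zero_or_pos n with hn | hn
      · subst hn; norm_num
      · have hn1 : (1 : ℝ) ≤ (n : ℝ) := by exact_mod_cast hn
        have h1 : ((n : ℝ) + 1) ^ 2 > 0 := by positivity
        have h2 : (n : ℝ) > 0 := by linarith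
        have key : (((n : ℝ) + 1) ^ 2)⁻¹ ≤ (n : ℝ)⁻¹ - ((n : ℝ) + 1)⁻¹ := by
          have e : (n : ℝ)⁻¹ - ((n : ℝ) + 1)⁻¹ = ((n : ℝ) * ((n : ℝ) + 1))⁻¹ := by
            field_simp
            ring
          rw [e]
          apply inv_anti₀ (by positivity)
          nlinarith
        push_cast
        push_cast at ih
        linarith
  -- invariant by induction
  have inv : ∀ n : ℕ, ∑ i ∈ Finset.Icc 1 n, w i / (i : ℝ) ^ 2 ≤
      (∑ i ∈ Finset.Icc 1 n, w i) * ((n : ℝ) ^ 2)⁻¹ +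
        B * ((∑ i ∈ Finset.Icc 1 n, ((i : ℝ) ^ 2)⁻¹) - n * ((n : ℝ) ^ 2)⁻¹) := by
    intro n
    induction n with
    | zero => simp
    | succ n ih =>
      rw [Finset.sum_Icc_succ_top (Nat.succ_le_succ n.zero_le),
        Finset.sum_Icc_succ_top (Nat.succ_le_succ n.zero_le),
        Finset.sum_Icc_succ_top (Nat.succ_le_succ n.zero_le)]
      set W := ∑ i ∈ Finset.Icc 1 n, w i with hWdef
      set S := ∑ i ∈ Finset.Icc 1 n, w i / (i : ℝ) ^ 2 with hSdef
      set T := ∑ i ∈ Finset.Icc 1 n, ((i : ℝ) ^ 2)⁻¹ with hTdef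
      have hstep : (W - B * n) * (((n : ℝ) ^ 2)⁻¹ - (((n : ℝ) + 1) ^ 2)⁻¹) ≤ 0 := by
        rcases Nat.eq_zero_or_pos n with hn | hn
        · subst hn; simp [hWdef]
        · have h1 : W ≤ B * n := hW n hn
          have hn1 : (1 : ℝ) ≤ (n : ℝ) := by exact_mod_cast hn
          have h2 : (((n : ℝ) + 1) ^ 2)⁻¹ ≤ ((n : ℝ) ^ 2)⁻¹ := by
            apply inv_anti₀ (by positivity)
            nlinarith
          nlinarith
      push_cast
      push_cast at ih hstep
      have hdiv : w (n + 1) / ((n : ℝ) + 1) ^ 2 = w (n + 1) * (((n : ℝ) + 1) ^ 2)⁻¹ := by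
        rw [div_eq_mul_inv]
      nlinarith [hstep]
  intro n
  rcases Nat.eq_zero_or_pos n with hn | hn
  · subst hn; simp; positivity
  · have h1 := inv n
    have h2 := hW n hn
    have h3 := hT n
    have hb : (0 : ℝ) ≤ ((n : ℝ) ^ 2)⁻¹ := by positivity
    have h4 : (∑ i ∈ Finset.Icc 1 n, w i) * ((n : ℝ) ^ 2)⁻¹ ≤ B * n * ((n : ℝ) ^ 2)⁻¹ :=
      mul_le_mul_of_nonneg_right h2 hb
    have h5 : B * ((∑ i ∈ Finset.Icc 1 n, ((i : ℝ) ^ 2)⁻¹)) ≤ B * 2 := by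
      apply mul_le_mul_of_nonneg_left _ hB0
      have : (0:ℝ) ≤ (n : ℝ)⁻¹ := by positivity
      linarith
    have hsum : ∑ i ∈ Finset.Icc 1 n, w i / (i : ℝ) ^ 2 ≤
        B * n * ((n : ℝ) ^ 2)⁻¹ + B * ((∑ i ∈ Finset.Icc 1 n, ((i : ℝ) ^ 2)⁻¹)
          - n * ((n : ℝ) ^ 2)⁻¹) := by
      calc ∑ i ∈ Finset.Icc 1 n, w i / (i : ℝ) ^ 2 ≤ _ := h1
        _ ≤ _ := by linarith
    have : B * ((∑ i ∈ Finset.Icc 1 n, ((i : ℝ) ^ 2)⁻¹) - n * ((n : ℝ) ^ 2)⁻¹)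
        = B * (∑ i ∈ Finset.Icc 1 n, ((i : ℝ) ^ 2)⁻¹) - B * n * ((n : ℝ) ^ 2)⁻¹ := by ring
    rw [this] at hsum
    linarith

/-- Kronecker's lemma. -/
lemma kronecker_lemma (x : ℕ → ℝ) (l : ℝ)
    (h : Tendsto (fun n : ℕ => ∑ i ∈ Finset.Icc 1 n, x i / (i : ℝ)) atTop (𝓝 l)) :
    Tendsto (fun n : ℕ => (n : ℝ)⁻¹ * ∑ i ∈ Finset.Icc 1 n, x i) atTop (𝓝 0) := by
  set b : ℕ → ℝ := fun n : ℕ => ∑ i ∈ Finset.Icc 1 n, x i / (i : ℝ) with hb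
  have hident : ∀ n : ℕ, ∑ i ∈ Finset.Icc 1 n, x i
      = n * b n - ∑ i ∈ Finset.range n, b i := by
    intro n
    induction n with
    | zero => simp [hb]
    | succ n ih =>
      rw [Finset.sum_Icc_succ_top (Nat.succ_le_succ n.zero_le), ih, Finset.sum_range_succ]
      have hbn : b (n + 1) = b n + x (n + 1) / ((n : ℝ) + 1) := by
        rw [hb]
        simp only
        rw [Finset.sum_Icc_succ_top (Nat.succ_le_succ n.zero_le)]
        push_cast; ring
      have hne : ((n : ℝ) + 1) ≠ 0 := by positivity
      rw [hbn]
      push_cast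
      field_simp
      ring
  have hc := h.cesaro
  have h2 : Tendsto (fun n => b n - (n : ℝ)⁻¹ • ∑ i ∈ Finset.range n, b i)
      atTop (𝓝 (l - l)) := h.sub hc
  rw [sub_self] at h2
  refine h2.congr' ?_
  filter_upwards [eventually_ge_atTop 1] with n hn
  have hn0 : (n : ℝ) ≠ 0 := Nat.cast_ne_zero.2 (by omega)
  rw [hident n, smul_eq_mul]
  field_simp

/-- Strong law for weighted sums of independent, mean-zero, identically-varianced
`L²` random variables with `∑ (cᵢ/i)²` uniformly bounded. -/
lemma entry_slln {Ω : Type*} [MeasurableSpace Ω] (Pr : Measure Ω) [IsProbabilityMeasure Pr]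
    (co : ℕ → ℝ) (X : ℕ → Ω → ℝ)
    (hXmeas : ∀ i, Measurable (X i))
    (hXindep : iIndepFun X Pr)
    (hXmean : ∀ i, ∫ ω, X i ω ∂Pr = 0)
    (hXL2 : ∀ i, MemLp (X i) 2 Pr)
    (hXvar : ∀ i, variance (X i) Pr = variance (X 1) Pr)
    (C2 : ℝ) (hsum : ∀ n : ℕ, ∑ i ∈ Finset.Icc 1 n, (co i / (i : ℝ)) ^ 2 ≤ C2) :
    ∀ᵐ ω ∂Pr, Tendsto (fun m : ℕ => (m : ℝ)⁻¹ * ∑ i ∈ Finset.Icc 1 m, co i * X i ω)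
      atTop (𝓝 0) := by
  set g : ℕ → Ω → ℝ := fun i ω => (co i / (i : ℝ)) * X i ω with hg
  have hg_sm : ∀ i, StronglyMeasurable (g i) :=
    fun i => (measurable_const.mul (hXmeas i)).stronglyMeasurable
  have hg_indep : iIndepFun g Pr :=
    hXindep.comp (fun i (x : ℝ) => (co i / (i : ℝ)) * x)
      (fun i => measurable_id.const_mul _)
  have hg_L2 : ∀ i, MemLp (g i) 2 Pr := fun i => (hXL2 i).const_mul _
  have hg_int : ∀ i, Integrable (g i) Pr := fun i => (hg_L2 i).integrable one_le_two
  have hg_mean : ∀ i, ∫ ω, g i ω ∂Pr = 0 := by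
    intro i
    simp only [hg]
    rw [integral_const_mul, hXmean i, mul_zero]
  set ℱ := Filtration.natural g hg_sm with hℱ
  set F : ℕ → Ω → ℝ := fun n ω => ∑ i ∈ Finset.Icc 1 n, g i ω with hF
  have hadp : StronglyAdapted ℱ F := by
    intro n
    apply Finset.stronglyMeasurable_fun_sum
    intro i hi
    exact ((Filtration.stronglyAdapted_natural hg_sm) i).mono (ℱ.mono (Finset.mem_Icc.mp hi).2)
  have hint : ∀ n, Integrable (F n) Pr :=
    fun n => integrable_finset_sum _ fun i _ => hg_int i
  have hmart : Martingale F ℱ Pr := by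
    apply martingale_nat hadp hint
    intro n
    have hFsucc : F (n + 1) = F n + g (n + 1) := by
      funext ω
      simp only [hF, Pi.add_apply]
      rw [Finset.sum_Icc_succ_top (Nat.succ_le_succ n.zero_le)]
    have h1 : Pr[F (n + 1)|ℱ n] =ᵐ[Pr] Pr[F n|ℱ n] + Pr[g (n + 1)|ℱ n] := by
      rw [hFsucc]; exact condExp_add (hint n) (hg_int (n + 1)) _
    have h2 : Pr[F n|ℱ n] = F n :=
      condExp_of_stronglyMeasurable (ℱ.le n) (hadp n) (hint n)
    have h3 : Pr[g (n + 1)|ℱ n] =ᵐ[Pr] fun _ => ∫ ω, g (n + 1) ω ∂Pr :=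
      iIndepFun.condExp_natural_ae_eq_of_lt hg_sm hg_indep n.lt_succ_self
    filter_upwards [h1, h3] with ω hω1 hω3
    rw [hω1, Pi.add_apply, h2, hω3, hg_mean, add_zero]
  -- second moment bound
  set V := variance (X 1) Pr with hV
  have hV0 : 0 ≤ V := variance_nonneg _ _
  have hFL2 : ∀ n, MemLp (F n) 2 Pr := fun n => memLp_finsetSum _ fun i _ => hg_L2 i
  have hvar : ∀ n, variance (F n) Pr ≤ C2 * V := by
    intro n
    have hFeq : F n = ∑ i ∈ Finset.Icc 1 n, g i := by
      funext ω; rw [Finset.sum_apply]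
    rw [hFeq, IndepFun.variance_sum (fun i _ => hg_L2 i)
      (fun i _ j _ hij => hg_indep.indepFun hij)]
    have : ∀ i ∈ Finset.Icc 1 n, variance (g i) Pr = (co i / (i : ℝ)) ^ 2 * V := by
      intro i _
      rw [hg]
      rw [variance_const_mul (co i / (i : ℝ)) (X i) Pr, hXvar i]
    rw [Finset.sum_congr rfl this, ← Finset.sum_mul]
    exact mul_le_mul_of_nonneg_right (hsum n) hV0
  have hFmean : ∀ n, ∫ ω, F n ω ∂Pr = 0 := by
    intro n
    simp only [hF]
    rw [integral_finset_sum _ fun i _ => hg_int i]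
    simp [hg_mean]
  -- L¹ boundedness
  set R : NNReal := (ENNReal.ofReal (C2 * V) ^ (1 / 2 : ℝ)).toNNReal with hR
  have hRcoe : (R : ℝ≥0∞) = ENNReal.ofReal (C2 * V) ^ (1 / 2 : ℝ) :=
    ENNReal.coe_toNNReal
      (ENNReal.rpow_ne_top_of_nonneg (by norm_num) ENNReal.ofReal_ne_top)
  have hbdd : ∀ n, eLpNorm (F n) 1 Pr ≤ R := by
    intro n
    have step1 : eLpNorm (F n) 1 Pr ≤ eLpNorm (F n) 2 Pr :=
      eLpNorm_le_eLpNorm_of_exponent_le one_le_two (hFL2 n).aestronglyMeasurable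
    have step2 : eLpNorm (F n) 2 Pr = (evariance (F n) Pr) ^ (1 / 2 : ℝ) := by
      rw [evariance, hFmean n]
      rw [eLpNorm_eq_lintegral_rpow_enorm_toReal two_ne_zero ENNReal.ofNat_ne_top]
      simp only [ENNReal.toReal_ofNat, one_div, sub_zero]
      congr 1
      apply lintegral_congr
      intro ω
      rw [← ENNReal.rpow_two]
    have step3 : (evariance (F n) Pr) ^ (1 / 2 : ℝ)
        ≤ ENNReal.ofReal (C2 * V) ^ (1 / 2 : ℝ) := by
      apply ENNReal.rpow_le_rpow _ (by norm_num)
      rw [← (hFL2 n).ofReal_variance_eq]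
      exact ENNReal.ofReal_le_ofReal (hvar n)
    calc eLpNorm (F n) 1 Pr ≤ eLpNorm (F n) 2 Pr := step1
      _ = (evariance (F n) Pr) ^ (1 / 2 : ℝ) := step2
      _ ≤ ENNReal.ofReal (C2 * V) ^ (1 / 2 : ℝ) := step3
      _ = R := hRcoe.symm
  have hae := hmart.submartingale.exists_ae_tendsto_of_bdd hbdd
  filter_upwards [hae] with ω hω
  obtain ⟨l, hl⟩ := hω
  apply kronecker_lemma (fun i => co i * X i ω) l
  have heq : (fun n => ∑ i ∈ Finset.Icc 1 n, (co i * X i ω) / (i : ℝ))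
      = fun n => F n ω := by
    funext n
    apply Finset.sum_congr rfl
    intro i _
    simp only [hF, hg]
    ring
  rw [heq]
  exact hl

/-- If `(a_i)_{i≥1} ⊆ ℝ^p` satisfies `m⁻¹ ∑_{i=1}^m ‖a_i‖² ≤ B` for all
`m ≥ 1` (the squared Euclidean norm being `∑_r (a_i)_r²`), and `(ε_i)_{i≥1}` are i.i.d.
random vectors in `ℝ^q` with mean zero and finite componentwise variances, then the `p × q`
matrices `m⁻¹ ∑_{i=1}^m a_i ε_iᵀ` converge to the zero matrix almost surely. -/
theorem statement2
    {Ω : Type*} [MeasurableSpace Ω] (Pr : Measure Ω) [IsProbabilityMeasure Pr]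
    (p q : ℕ) (a : ℕ → Fin p → ℝ) (B : ℝ)
    (hB : ∀ m : ℕ, 1 ≤ m → (m : ℝ)⁻¹ * ∑ i ∈ Finset.Icc 1 m, (∑ r, (a i r) ^ 2) ≤ B)
    (ε : ℕ → Ω → Fin q → ℝ)
    (hmeas : ∀ i, Measurable (ε i))
    (hindep : iIndepFun ε Pr)
    (hident : ∀ i, IdentDistrib (ε i) (ε 1) Pr Pr)
    (hmean : ∀ i c, ∫ ω, ε i ω c ∂Pr = 0)
    (hL2 : ∀ i c, MemLp (fun ω => ε i ω c) 2 Pr) :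
    ∀ᵐ ω ∂Pr, Tendsto
      (fun m : ℕ => (m : ℝ)⁻¹ • ∑ i ∈ Finset.Icc 1 m, Matrix.vecMulVec (a i) (ε i ω))
      atTop (𝓝 (0 : Matrix (Fin p) (Fin q) ℝ)) := by
  set w : ℕ → ℝ := fun i => ∑ r, (a i r) ^ 2 with hwdef
  have hw : ∀ i, 0 ≤ w i := fun i => Finset.sum_nonneg fun r _ => sq_nonneg _
  have hWm : ∀ m : ℕ, 1 ≤ m → ∑ i ∈ Finset.Icc 1 m, w i ≤ B * m := by
    intro m hm
    have h := hB m hm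
    have hm0 : (0 : ℝ) < m := by exact_mod_cast hm
    have h2 := mul_le_mul_of_nonneg_left h hm0.le
    rw [← mul_assoc, mul_inv_cancel₀ hm0.ne', one_mul] at h2
    linarith [h2]
  have habel := abel_bound w B hw hWm
  have key : ∀ (r : Fin p) (c : Fin q), ∀ᵐ ω ∂Pr,
      Tendsto (fun m : ℕ => (m : ℝ)⁻¹ * ∑ i ∈ Finset.Icc 1 m, a i r * ε i ω c)
        atTop (𝓝 0) := by
    intro r c
    have hXmeas : ∀ i, Measurable (fun ω => ε i ω c) :=
      fun i => (measurable_pi_apply c).comp (hmeas i)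
    have hXindep : iIndepFun (fun i ω => ε i ω c) Pr :=
      hindep.comp (fun _ (v : Fin q → ℝ) => v c) (fun _ => measurable_pi_apply c)
    have hXvar : ∀ i, variance (fun ω => ε i ω c) Pr = variance (fun ω => ε 1 ω c) Pr :=
      fun i => ((hident i).comp (measurable_pi_apply c)).variance_eq
    have hsum : ∀ n : ℕ, ∑ i ∈ Finset.Icc 1 n, (a i r / (i : ℝ)) ^ 2 ≤ 2 * B := by
      intro n
      refine le_trans (Finset.sum_le_sum ?_) (habel n)
      intro i hi
      rw [div_pow]
      have h1 : (a i r) ^ 2 ≤ w i :=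
        Finset.single_le_sum (f := fun r' => (a i r') ^ 2) (fun r' _ => sq_nonneg _)
          (Finset.mem_univ r)
      have h2 : (0 : ℝ) < (i : ℝ) ^ 2 := by
        have := (Finset.mem_Icc.mp hi).1
        have : (0 : ℝ) < (i : ℝ) := by exact_mod_cast this
        positivity
      gcongr
    exact entry_slln Pr (fun i => a i r) (fun i ω => ε i ω c)
      hXmeas hXindep (fun i => hmean i c) (fun i => hL2 i c) hXvar (2 * B) hsum
  have hkey : ∀ᵐ ω ∂Pr, ∀ (r : Fin p) (c : Fin q),
      Tendsto (fun m : ℕ => (m : ℝ)⁻¹ * ∑ i ∈ Finset.Icc 1 m, a i r * ε i ω c)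
        atTop (𝓝 0) :=
    ae_all_iff.2 fun r => ae_all_iff.2 fun c => key r c
  filter_upwards [hkey] with ω hω
  apply tendsto_pi_nhds.mpr
  intro r
  apply tendsto_pi_nhds.mpr
  intro c
  have hfun : ∀ m : ℕ, ((m : ℝ)⁻¹ • ∑ i ∈ Finset.Icc 1 m, Matrix.vecMulVec (a i) (ε i ω)) r c
      = (m : ℝ)⁻¹ * ∑ i ∈ Finset.Icc 1 m, a i r * ε i ω c := by
    intro m
    simp [Matrix.smul_apply, Matrix.sum_apply, Matrix.vecMulVec_apply, smul_eq_mul]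
  exact Filter.Tendsto.congr (fun m => (hfun m).symm) (hω r c)
end

section
/- Let j < n < d be nonnegative integers. Let M ∈ ℝ^{j×d} have rank j, let P ∈ ℝ^{d×(d−j)} satisfy PᵀP = I_{d−j} and MP = 0, and let S ∈ ℝ^{d×d} be symmetric positive semidefinite. Then rank(PᵀSP) = n − j if and only if the (j+d)×d matrix obtained by stacking M on top of S has rank n. -/
/-!
Let `K = ker M ∩ ker S`. For positive semidefinite `S`, `xᵀ S x = 0` forces `S x = 0`, so
`PᵀSP x = 0` iff `P x ∈ ker S`; since `P` maps its domain isomorphically onto `ker M`, the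
kernel of `PᵀSP` has dimension `dim K`. The kernel of the stacked matrix is `K` itself, so by
rank–nullity `rank (PᵀSP) + j = (d - j - dim K) + j = d - dim K = rank [M; S]`.
-/

open Matrix Module

open scoped ComplexOrder

theorem Submodule.finrank_comap_of_injective {K V W : Type*} [DivisionRing K] [AddCommGroup V]
    [Module K V] [AddCommGroup W] [Module K W] [FiniteDimensional K V] {f : V →ₗ[K] W}
    (hf : Function.Injective f) (p : Submodule K W) :
    finrank K (p.comap f) = finrank K ↥(LinearMap.range f ⊓ p) := by
  rw [← Submodule.map_comap_eq]
  exact (Submodule.equivMapOfInjective f hf _).finrank_eq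

namespace Matrix

variable {m m' n k R 𝕜 : Type*} [Fintype n] [Fintype k] [RCLike 𝕜]

theorem rank_add_finrank_ker_mulVecLin [Field R] (A : Matrix m n R) :
    A.rank + finrank R (LinearMap.ker A.mulVecLin) = Fintype.card n := by
  rw [rank, LinearMap.finrank_range_add_finrank_ker, finrank_fintype_fun_eq_card]

theorem ker_mulVecLin_fromRows [CommSemiring R] (A : Matrix m n R) (B : Matrix m' n R) :
    LinearMap.ker (fromRows A B).mulVecLin =
      LinearMap.ker A.mulVecLin ⊓ LinearMap.ker B.mulVecLin := by
  ext v
  simp only [LinearMap.mem_ker, mulVecLin_apply, fromRows_mulVec, Submodule.mem_inf]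
  constructor
  · intro h
    exact ⟨funext fun i ↦ congrFun h (Sum.inl i), funext fun i ↦ congrFun h (Sum.inr i)⟩
  · rintro ⟨hA, hB⟩
    rw [hA, hB]
    ext (i | i) <;> rfl

theorem mulVecLin_injective_of_mul_eq_one [CommSemiring R] [DecidableEq k] {A : Matrix k n R}
    {P : Matrix n k R} (h : A * P = 1) : Function.Injective P.mulVecLin := by
  intro x y hxy
  simpa [mulVec_mulVec, h] using congrArg (A *ᵥ ·) hxy

theorem range_mulVecLin_eq_ker_of_mul_eq_zero [Field R] {M : Matrix m n R} {P : Matrix n k R}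
    (hP : Function.Injective P.mulVecLin) (hMP : M * P = 0)
    (hdim : M.rank + Fintype.card k = Fintype.card n) :
    LinearMap.range P.mulVecLin = LinearMap.ker M.mulVecLin := by
  apply Submodule.eq_of_le_of_finrank_le
  · rintro _ ⟨x, rfl⟩
    simp [mulVec_mulVec, hMP]
  · have hrange : finrank R (LinearMap.range P.mulVecLin) = Fintype.card k := by
      rw [LinearMap.finrank_range_of_inj hP, finrank_fintype_fun_eq_card]
    have := M.rank_add_finrank_ker_mulVecLin
    omega

theorem PosSemidef.ker_mulVecLin_conjTranspose_mul_mul {S : Matrix n n 𝕜} (hS : S.PosSemidef)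
    (P : Matrix n k 𝕜) :
    LinearMap.ker (Pᴴ * S * P).mulVecLin = (LinearMap.ker S.mulVecLin).comap P.mulVecLin := by
  classical
  ext x
  simp only [LinearMap.mem_ker, Submodule.mem_comap, mulVecLin_apply]
  constructor
  · intro h
    rw [← hS.dotProduct_mulVec_zero_iff, star_mulVec, ← dotProduct_mulVec, mulVec_mulVec,
      mulVec_mulVec, h, dotProduct_zero]
  · intro h
    rw [← mulVec_mulVec, ← mulVec_mulVec, h, mulVec_zero]

theorem rank_conjTranspose_mul_mul_add_rank_eq_rank_fromRows {M : Matrix m n 𝕜}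
    {P : Matrix n k 𝕜} {S : Matrix n n 𝕜} (hS : S.PosSemidef)
    (hP : Function.Injective P.mulVecLin)
    (hPM : LinearMap.range P.mulVecLin = LinearMap.ker M.mulVecLin) :
    (Pᴴ * S * P).rank + M.rank = (fromRows M S).rank := by
  have hker : finrank 𝕜 (LinearMap.ker (Pᴴ * S * P).mulVecLin) =
      finrank 𝕜 (LinearMap.ker (fromRows M S).mulVecLin) := by
    rw [hS.ker_mulVecLin_conjTranspose_mul_mul, Submodule.finrank_comap_of_injective hP, hPM,
      ker_mulVecLin_fromRows]
  have hcard : Fintype.card k = finrank 𝕜 (LinearMap.ker M.mulVecLin) := by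
    rw [← hPM, LinearMap.finrank_range_of_inj hP, finrank_fintype_fun_eq_card]
  have h₁ := (Pᴴ * S * P).rank_add_finrank_ker_mulVecLin
  have h₂ := (fromRows M S).rank_add_finrank_ker_mulVecLin
  have h₃ := M.rank_add_finrank_ker_mulVecLin
  omega

end Matrix

theorem statement5_general
    (j n d : ℕ) (hjn : j < n)
    (M : Matrix (Fin j) (Fin d) ℝ) (hM : M.rank = j)
    (P : Matrix (Fin d) (Fin (d - j)) ℝ)
    (hP1 : Pᵀ * P = 1) (hP2 : M * P = 0)
    (S : Matrix (Fin d) (Fin d) ℝ) (hS : S.PosSemidef) :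
    (Pᵀ * S * P).rank = n - j ↔ (Matrix.fromRows M S).rank = n := by
  have hjd : j ≤ d := hM ▸ M.rank_le_width
  have hPinj := mulVecLin_injective_of_mul_eq_one hP1
  have hPM := range_mulVecLin_eq_ker_of_mul_eq_zero hPinj hP2 (by simp [hM]; omega)
  have hrank := rank_conjTranspose_mul_mul_add_rank_eq_rank_fromRows hS hPinj hPM
  rw [conjTranspose_eq_transpose_of_trivial] at hrank
  omega

/-- Let `j < n < d`, `M ∈ ℝ^{j×d}` of rank `j`, `P ∈ ℝ^{d×(d−j)}` with
`PᵀP = I` and `MP = 0`, and `S ∈ ℝ^{d×d}` symmetric positive semidefinite. Then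
`rank (PᵀSP) = n − j` iff the `(j+d)×d` matrix formed by stacking `M` on top of `S` has
rank `n`. -/
theorem statement5
    (j n d : ℕ) (hjn : j < n) (hnd : n < d)
    (M : Matrix (Fin j) (Fin d) ℝ) (hM : M.rank = j)
    (P : Matrix (Fin d) (Fin (d - j)) ℝ)
    (hP1 : Pᵀ * P = 1) (hP2 : M * P = 0)
    (S : Matrix (Fin d) (Fin d) ℝ) (hS : S.PosSemidef) :
    (Pᵀ * S * P).rank = n - j ↔ (Matrix.fromRows M S).rank = n :=
  statement5_general j n d hjn M hM P hP1 hP2 S hS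
end

section
/- Let (d_i)_{i≥1} be a sequence of vectors in ℝ^q, let P̃ ∈ ℝ^{q×r} satisfy P̃ᵀP̃ = I_r, and assume L = lim_m m⁻¹ P̃ᵀ(∑_{i=1}^m d_i d_iᵀ)P̃ exists. Let (ε_i)_{i≥1} be i.i.d. random vectors in ℝ^q with E[ε_i] = 0 and covariance E[ε_i ε_iᵀ] = σ² I_q (σ > 0). Then almost surely m⁻¹ P̃ᵀ(∑_{i=1}^m (d_i + ε_i)(d_i + ε_i)ᵀ)P̃ → L + σ² I_r as m → ∞. -/
open MeasureTheory ProbabilityTheory Filter Matrix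
open scoped Topology

lemma aux_sq_tendsto : Tendsto (fun k : ℕ => k ^ 2) atTop atTop :=
  tendsto_atTop_atTop.2 fun N => ⟨N, fun m hm => le_trans hm (Nat.le_self_pow two_ne_zero m)⟩

lemma aux_sqrt_tendsto : Tendsto (fun m : ℕ => Nat.sqrt m) atTop atTop :=
  tendsto_atTop_atTop.2 fun N => ⟨N * N, fun m hm => Nat.le_sqrt.2 hm⟩

lemma aux_ratio : Tendsto (fun k : ℕ => ((k : ℝ) + 1) ^ 2 / (k : ℝ) ^ 2) atTop (𝓝 1) := by
  have h : Tendsto (fun k : ℕ => (1 + (k : ℝ)⁻¹) ^ 2) atTop (𝓝 1) := by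
    have := ((tendsto_const_nhds (x := (1 : ℝ)) (f := atTop)).add
      tendsto_inv_atTop_nhds_zero_nat).pow 2
    simpa using this
  refine h.congr' ?_
  filter_upwards [eventually_ge_atTop 1] with k hk
  have hk0 : (k : ℝ) ≠ 0 := Nat.cast_ne_zero.2 (by omega)
  field_simp

lemma aux_shift {X : ℕ → ℝ} {A : ℝ}
    (hx : Tendsto (fun m : ℕ => (m : ℝ)⁻¹ * X m) atTop (𝓝 A)) :
    Tendsto (fun k : ℕ => ((k : ℝ) ^ 2)⁻¹ * (X ((k + 1) ^ 2) - X (k ^ 2))) atTop (𝓝 0) := by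
  have h1 : Tendsto (fun k : ℕ => ((k : ℝ) ^ 2)⁻¹ * X (k ^ 2)) atTop (𝓝 A) := by
    have := hx.comp aux_sq_tendsto
    refine this.congr fun k => ?_
    simp [Function.comp]
  have h2 : Tendsto (fun k : ℕ => (((k : ℝ) + 1) ^ 2)⁻¹ * X ((k + 1) ^ 2)) atTop (𝓝 A) := by
    have := h1.comp (tendsto_add_atTop_nat 1)
    refine this.congr fun k => ?_
    simp [Function.comp]
  have h3 : Tendsto (fun k : ℕ => ((k : ℝ) + 1) ^ 2 / (k : ℝ) ^ 2 *
      ((((k : ℝ) + 1) ^ 2)⁻¹ * X ((k + 1) ^ 2))) atTop (𝓝 (1 * A)) := aux_ratio.mul h2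
  rw [one_mul] at h3
  have h4 : Tendsto (fun k : ℕ => ((k : ℝ) ^ 2)⁻¹ * X ((k + 1) ^ 2)) atTop (𝓝 A) := by
    refine h3.congr' ?_
    filter_upwards [eventually_ge_atTop 1] with k hk
    have hk0 : (k : ℝ) ≠ 0 := Nat.cast_ne_zero.2 (by omega)
    have hk1 : ((k : ℝ) + 1) ≠ 0 := by positivity
    field_simp
  have := h4.sub h1
  rw [sub_self] at this
  refine this.congr fun k => by ring

lemma aux_block (x y : ℕ → ℝ) (A B : ℝ)
    (hx : Tendsto (fun m : ℕ => (m : ℝ)⁻¹ * ∑ i ∈ Finset.Icc 1 m, x i ^ 2) atTop (𝓝 A))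
    (hy : Tendsto (fun m : ℕ => (m : ℝ)⁻¹ * ∑ i ∈ Finset.Icc 1 m, y i ^ 2) atTop (𝓝 B))
    (hsub : Tendsto (fun k : ℕ => ((k : ℝ) ^ 2)⁻¹ * ∑ i ∈ Finset.Icc 1 (k ^ 2), x i * y i)
      atTop (𝓝 0)) :
    Tendsto (fun m : ℕ => (m : ℝ)⁻¹ * ∑ i ∈ Finset.Icc 1 m, x i * y i) atTop (𝓝 0) := by
  set X : ℕ → ℝ := fun m => ∑ i ∈ Finset.Icc 1 m, x i ^ 2 with hX
  set Y : ℕ → ℝ := fun m => ∑ i ∈ Finset.Icc 1 m, y i ^ 2 with hY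
  set S : ℕ → ℝ := fun m => ∑ i ∈ Finset.Icc 1 m, x i * y i with hS
  -- split sums
  have hsplit : ∀ f : ℕ → ℝ, ∀ n m : ℕ, 1 ≤ n → n ≤ m →
      ∑ i ∈ Finset.Icc 1 m, f i = (∑ i ∈ Finset.Icc 1 n, f i) + ∑ i ∈ Finset.Ioc n m, f i := by
    intro f n m h1n hnm
    rw [← Finset.sum_union]
    · congr 1
      rw [← Finset.coe_inj, Finset.coe_union, Finset.coe_Icc, Finset.coe_Icc, Finset.coe_Ioc,
        Set.Icc_union_Ioc_eq_Icc h1n hnm]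
    · refine Finset.disjoint_left.mpr fun i hi hi' => ?_
      simp only [Finset.mem_Icc, Finset.mem_Ioc] at hi hi'
      omega
  set g : ℕ → ℝ := fun k => |((k : ℝ) ^ 2)⁻¹ * S (k ^ 2)| +
    Real.sqrt ((((k : ℝ) ^ 2)⁻¹ * (X ((k + 1) ^ 2) - X (k ^ 2))) *
      (((k : ℝ) ^ 2)⁻¹ * (Y ((k + 1) ^ 2) - Y (k ^ 2)))) with hg
  have hglim : Tendsto g atTop (𝓝 0) := by
    have h1 : Tendsto (fun k : ℕ => |((k : ℝ) ^ 2)⁻¹ * S (k ^ 2)|) atTop (𝓝 0) := by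
      simpa using hsub.abs
    have h2 := (aux_shift hx).mul (aux_shift hy)
    rw [mul_zero] at h2
    have h3 := h2.sqrt
    rw [Real.sqrt_zero] at h3
    simpa [hg] using h1.add h3
  have hcomp : Tendsto (fun m => g (Nat.sqrt m)) atTop (𝓝 0) := hglim.comp aux_sqrt_tendsto
  refine squeeze_zero_norm' ?_ hcomp
  filter_upwards [eventually_ge_atTop 1] with m hm
  set k := Nat.sqrt m with hk
  have hk1 : 1 ≤ k := Nat.le_sqrt.2 (by omega)
  have hk2m : k ^ 2 ≤ m := Nat.sqrt_le' m
  have hmk : m ≤ (k + 1) ^ 2 := le_of_lt (Nat.lt_succ_sqrt' m)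
  have hk0 : (0 : ℝ) < (k : ℝ) ^ 2 := by positivity
  have hm0 : (0 : ℝ) < (m : ℝ) := by exact_mod_cast (by omega : 0 < m)
  -- decompose S m
  have hSm : S m = S (k ^ 2) + ∑ i ∈ Finset.Ioc (k ^ 2) m, x i * y i :=
    hsplit _ _ _ (by nlinarith) hk2m
  -- Cauchy-Schwarz bound on the tail
  have htail : |∑ i ∈ Finset.Ioc (k ^ 2) m, x i * y i| ≤
      Real.sqrt ((X ((k + 1) ^ 2) - X (k ^ 2)) * (Y ((k + 1) ^ 2) - Y (k ^ 2))) := by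
    refine Real.abs_le_sqrt ?_
    calc (∑ i ∈ Finset.Ioc (k ^ 2) m, x i * y i) ^ 2
        ≤ (∑ i ∈ Finset.Ioc (k ^ 2) m, x i ^ 2) * ∑ i ∈ Finset.Ioc (k ^ 2) m, y i ^ 2 :=
          Finset.sum_mul_sq_le_sq_mul_sq _ _ _
      _ ≤ (X ((k + 1) ^ 2) - X (k ^ 2)) * (Y ((k + 1) ^ 2) - Y (k ^ 2)) := by
          have hXd : ∑ i ∈ Finset.Ioc (k ^ 2) m, x i ^ 2 ≤ X ((k + 1) ^ 2) - X (k ^ 2) := by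
            have := hsplit (fun i => x i ^ 2) (k ^ 2) ((k + 1) ^ 2) (by nlinarith) (by nlinarith)
            rw [show X ((k + 1) ^ 2) - X (k ^ 2) = ∑ i ∈ Finset.Ioc (k ^ 2) ((k + 1) ^ 2), x i ^ 2
              by rw [hX]; simp only; rw [this]; ring]
            exact Finset.sum_le_sum_of_subset_of_nonneg
              (Finset.Ioc_subset_Ioc_right hmk) fun i _ _ => sq_nonneg _
          have hYd : ∑ i ∈ Finset.Ioc (k ^ 2) m, y i ^ 2 ≤ Y ((k + 1) ^ 2) - Y (k ^ 2) := by
            have := hsplit (fun i => y i ^ 2) (k ^ 2) ((k + 1) ^ 2) (by nlinarith) (by nlinarith)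
            rw [show Y ((k + 1) ^ 2) - Y (k ^ 2) = ∑ i ∈ Finset.Ioc (k ^ 2) ((k + 1) ^ 2), y i ^ 2
              by rw [hY]; simp only; rw [this]; ring]
            exact Finset.sum_le_sum_of_subset_of_nonneg
              (Finset.Ioc_subset_Ioc_right hmk) fun i _ _ => sq_nonneg _
          exact mul_le_mul hXd hYd (Finset.sum_nonneg fun i _ => sq_nonneg _)
            (le_trans (Finset.sum_nonneg fun i _ => sq_nonneg _) hXd)
  have hXd0 : 0 ≤ X ((k + 1) ^ 2) - X (k ^ 2) := by
    have := hsplit (fun i => x i ^ 2) (k ^ 2) ((k + 1) ^ 2) (by nlinarith) (by nlinarith)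
    simp only [hX]
    rw [this]
    have : 0 ≤ ∑ i ∈ Finset.Ioc (k ^ 2) ((k + 1) ^ 2), x i ^ 2 :=
      Finset.sum_nonneg fun i _ => sq_nonneg _
    linarith
  have hYd0 : 0 ≤ Y ((k + 1) ^ 2) - Y (k ^ 2) := by
    have := hsplit (fun i => y i ^ 2) (k ^ 2) ((k + 1) ^ 2) (by nlinarith) (by nlinarith)
    simp only [hY]
    rw [this]
    have : 0 ≤ ∑ i ∈ Finset.Ioc (k ^ 2) ((k + 1) ^ 2), y i ^ 2 :=
      Finset.sum_nonneg fun i _ => sq_nonneg _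
    linarith
  -- main bound
  have h1 : ‖(m : ℝ)⁻¹ * S m‖ ≤ (m : ℝ)⁻¹ * (|S (k ^ 2)| +
      Real.sqrt ((X ((k + 1) ^ 2) - X (k ^ 2)) * (Y ((k + 1) ^ 2) - Y (k ^ 2)))) := by
    rw [Real.norm_eq_abs, abs_mul, abs_of_nonneg (le_of_lt (inv_pos.2 hm0))]
    refine mul_le_mul_of_nonneg_left ?_ (le_of_lt (inv_pos.2 hm0))
    rw [hSm]
    exact le_trans (abs_add_le _ _) (by linarith [htail])
  have hinvle : (m : ℝ)⁻¹ ≤ ((k : ℝ) ^ 2)⁻¹ := by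
    apply inv_anti₀ hk0
    exact_mod_cast hk2m
  have h2 : (m : ℝ)⁻¹ * (|S (k ^ 2)| +
      Real.sqrt ((X ((k + 1) ^ 2) - X (k ^ 2)) * (Y ((k + 1) ^ 2) - Y (k ^ 2)))) ≤ g k := by
    have hadd0 : 0 ≤ |S (k ^ 2)| +
        Real.sqrt ((X ((k + 1) ^ 2) - X (k ^ 2)) * (Y ((k + 1) ^ 2) - Y (k ^ 2))) :=
      add_nonneg (abs_nonneg _) (Real.sqrt_nonneg _)
    refine le_trans (mul_le_mul_of_nonneg_right hinvle hadd0) ?_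
    rw [hg]
    simp only
    rw [mul_add]
    gcongr
    · rw [abs_mul, abs_of_nonneg (le_of_lt (inv_pos.2 hk0))]
    · rw [show (((k : ℝ) ^ 2)⁻¹ * (X ((k + 1) ^ 2) - X (k ^ 2))) *
          (((k : ℝ) ^ 2)⁻¹ * (Y ((k + 1) ^ 2) - Y (k ^ 2))) =
          (((k : ℝ) ^ 2)⁻¹) ^ 2 * ((X ((k + 1) ^ 2) - X (k ^ 2)) * (Y ((k + 1) ^ 2) - Y (k ^ 2)))
          by ring]
      rw [Real.sqrt_mul (sq_nonneg _), Real.sqrt_sq (le_of_lt (inv_pos.2 hk0))]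
  exact le_trans h1 h2

lemma aux_bc {Ω : Type*} [MeasurableSpace Ω] (Pr : Measure Ω)
    [IsProbabilityMeasure Pr] (Z : ℕ → Ω → ℝ) (c : ℕ → ℝ)
    (hint : ∀ k, Integrable (fun ω => Z k ω ^ 2) Pr)
    (hc : Summable c)
    (hvar : ∀ k, ∫ ω, Z k ω ^ 2 ∂Pr ≤ c k) :
    ∀ᵐ ω ∂Pr, Tendsto (fun k => Z k ω) atTop (𝓝 0) := by
  have hc0 : ∀ k, 0 ≤ c k := fun k =>
    le_trans (integral_nonneg fun ω => sq_nonneg _) (hvar k)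
  have key : ∀ δ : ℝ, 0 < δ → ∀ᵐ ω ∂Pr, ∀ᶠ k in atTop, |Z k ω| < δ := by
    intro δ hδ
    have hle : ∀ k, Pr {ω | δ ≤ |Z k ω|} ≤ ENNReal.ofReal (c k / δ ^ 2) := by
      intro k
      have h1 : δ ^ 2 * (Pr {ω | δ ^ 2 ≤ Z k ω ^ 2}).toReal ≤ ∫ ω, Z k ω ^ 2 ∂Pr :=
        mul_meas_ge_le_integral_of_nonneg (Eventually.of_forall fun ω => sq_nonneg _) (hint k) _
      have hseq : {ω | δ ≤ |Z k ω|} = {ω | δ ^ 2 ≤ Z k ω ^ 2} := by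
        ext ω
        simp only [Set.mem_setOf_eq, sq_le_sq, abs_abs, abs_of_pos hδ]
      rw [hseq, ENNReal.le_ofReal_iff_toReal_le (measure_ne_top _ _)
        (div_nonneg (hc0 k) (sq_nonneg _))]
      rw [le_div_iff₀ (by positivity)]
      calc (Pr {ω | δ ^ 2 ≤ Z k ω ^ 2}).toReal * δ ^ 2
          = δ ^ 2 * (Pr {ω | δ ^ 2 ≤ Z k ω ^ 2}).toReal := by ring
        _ ≤ ∫ ω, Z k ω ^ 2 ∂Pr := h1
        _ ≤ c k := hvar k
    have hsum : (∑' k, Pr {ω | δ ≤ |Z k ω|}) ≠ ⊤ := by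
      refine ne_top_of_le_ne_top ?_ (ENNReal.tsum_le_tsum hle)
      rw [← ENNReal.ofReal_tsum_of_nonneg (fun k => div_nonneg (hc0 k) (sq_nonneg _))
        (hc.div_const _)]
      exact ENNReal.ofReal_ne_top
    filter_upwards [ae_eventually_notMem hsum] with ω hω
    filter_upwards [hω] with k hk
    simpa [not_le] using hk
  have all : ∀ᵐ ω ∂Pr, ∀ n : ℕ, ∀ᶠ k in atTop, |Z k ω| < 1 / ((n : ℝ) + 1) :=
    ae_all_iff.mpr fun n => key _ (by positivity)
  filter_upwards [all] with ω hω
  rw [NormedAddCommGroup.tendsto_nhds_zero]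
  intro e he
  obtain ⟨n, hn⟩ := exists_nat_one_div_lt he
  filter_upwards [hω n] with k hk
  rw [Real.norm_eq_abs]
  exact lt_trans hk hn

/-- Let `(d_i)_{i≥1} ⊆ ℝ^q`, let `P̃ ∈ ℝ^{q×r}` have orthonormal columns
(`P̃ᵀP̃ = I_r`), and assume `L = lim m⁻¹ P̃ᵀ(∑_{i=1}^m d_i d_iᵀ)P̃` exists. Let `(ε_i)` be
i.i.d. random vectors in `ℝ^q` with mean zero and covariance `σ² I_q` (`σ > 0`). Then
almost surely `m⁻¹ P̃ᵀ(∑_{i=1}^m (d_i + ε_i)(d_i + ε_i)ᵀ)P̃ → L + σ² I_r`. -/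
theorem statement12
    {Ω : Type*} [MeasurableSpace Ω] (Pr : Measure Ω) [IsProbabilityMeasure Pr]
    (q r : ℕ) (σ : ℝ) (hσ : 0 < σ)
    (d : ℕ → Fin q → ℝ)
    (Pt : Matrix (Fin q) (Fin r) ℝ) (hPt : Ptᵀ * Pt = 1)
    (L : Matrix (Fin r) (Fin r) ℝ)
    (hL : Tendsto (fun m : ℕ => (m : ℝ)⁻¹ •
      (Ptᵀ * (∑ i ∈ Finset.Icc 1 m, Matrix.vecMulVec (d i) (d i)) * Pt))
      atTop (𝓝 L))
    (ε : ℕ → Ω → Fin q → ℝ)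
    (hmeas : ∀ i, Measurable (ε i))
    (hindep : iIndepFun ε Pr)
    (hident : ∀ i, IdentDistrib (ε i) (ε 1) Pr Pr)
    (hmean : ∀ i c, ∫ ω, ε i ω c ∂Pr = 0)
    (hcov_int : ∀ i a b, Integrable (fun ω => ε i ω a * ε i ω b) Pr)
    (hcov : ∀ i a b, ∫ ω, ε i ω a * ε i ω b ∂Pr = if a = b then σ ^ 2 else 0) :
    ∀ᵐ ω ∂Pr, Tendsto (fun m : ℕ => (m : ℝ)⁻¹ •
      (Ptᵀ * (∑ i ∈ Finset.Icc 1 m, Matrix.vecMulVec (d i + ε i ω) (d i + ε i ω)) * Pt))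
      atTop (𝓝 (L + σ ^ 2 • (1 : Matrix (Fin r) (Fin r) ℝ))) := by
  classical
  set u : ℕ → Fin r → ℝ := fun i a => ∑ c, Pt c a * d i c with hu
  set η : ℕ → Ω → Fin r → ℝ := fun i ω a => ∑ c, Pt c a * ε i ω c with hη
  -- matrix entry reduction
  have hentry : ∀ (v : Fin q → ℝ) (a b : Fin r),
      (Ptᵀ * Matrix.vecMulVec v v * Pt) a b = (∑ c, Pt c a * v c) * (∑ c, Pt c b * v c) := by
    intro v a b
    simp only [Matrix.mul_apply, Matrix.transpose_apply, Matrix.vecMulVec_apply]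
    rw [Finset.sum_mul_sum, Finset.sum_comm]
    simp only [Finset.sum_mul]
    exact Finset.sum_congr rfl fun c' _ => Finset.sum_congr rfl fun c _ => by ring
  have hFentry : ∀ (w : ℕ → Fin q → ℝ) (m : ℕ) (a b : Fin r),
      ((m : ℝ)⁻¹ • (Ptᵀ * (∑ i ∈ Finset.Icc 1 m, Matrix.vecMulVec (w i) (w i)) * Pt)) a b
      = (m : ℝ)⁻¹ * ∑ i ∈ Finset.Icc 1 m, (∑ c, Pt c a * w i c) * (∑ c, Pt c b * w i c) := by
    intro w m a b
    rw [Matrix.smul_apply, smul_eq_mul]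
    congr 1
    rw [Matrix.mul_sum, Matrix.sum_mul, Matrix.sum_apply]
    exact Finset.sum_congr rfl fun i _ => hentry _ a b
  -- hL entrywise
  have hLab : ∀ a b : Fin r, Tendsto
      (fun m : ℕ => (m : ℝ)⁻¹ * ∑ i ∈ Finset.Icc 1 m, u i a * u i b) atTop (𝓝 (L a b)) := by
    intro a b
    have h1 : Tendsto (fun m : ℕ => ((m : ℝ)⁻¹ •
        (Ptᵀ * (∑ i ∈ Finset.Icc 1 m, Matrix.vecMulVec (d i) (d i)) * Pt)) a b)
        atTop (𝓝 (L a b)) := tendsto_pi_nhds.mp (tendsto_pi_nhds.mp hL a) b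
    exact h1.congr fun m => hFentry d m a b
  -- measurability / integrability basics
  have hmeasc : ∀ i c, Measurable (fun ω => ε i ω c) :=
    fun i c => (measurable_pi_apply c).comp (hmeas i)
  have hF : ∀ a : Fin r, Measurable (fun v : Fin q → ℝ => ∑ c, Pt c a * v c) :=
    fun a => Finset.measurable_sum _ fun c _ => (measurable_pi_apply c).const_mul _
  have hintc : ∀ i c, Integrable (fun ω => ε i ω c) Pr := by
    intro i c
    have h2 : MemLp (fun ω => ε i ω c) 2 Pr :=
      (memLp_two_iff_integrable_sq (hmeasc i c).aestronglyMeasurable).mpr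
        (by simpa [sq] using hcov_int i c c)
    exact h2.integrable one_le_two
  have hintη : ∀ i a, Integrable (fun ω => η i ω a) Pr :=
    fun i a => integrable_finset_sum _ fun c _ => (hintc i c).const_mul _
  have hmeanη : ∀ i a, ∫ ω, η i ω a ∂Pr = 0 := by
    intro i a
    simp only [hη]
    rw [integral_finset_sum _ fun c _ => (hintc i c).const_mul _]
    simp [integral_const_mul, hmean]
  have hprodeq : ∀ i (ω : Ω) (a b : Fin r), η i ω a * η i ω b
      = ∑ c, ∑ c', (Pt c a * Pt c' b) * (ε i ω c * ε i ω c') := by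
    intro i ω a b
    simp only [hη]
    rw [Finset.sum_mul_sum]
    exact Finset.sum_congr rfl fun c _ => Finset.sum_congr rfl fun c' _ => by ring
  have hintηη : ∀ i (a b : Fin r), Integrable (fun ω => η i ω a * η i ω b) Pr := by
    intro i a b
    have heq : (fun ω => η i ω a * η i ω b)
        = fun ω => ∑ c, ∑ c', (Pt c a * Pt c' b) * (ε i ω c * ε i ω c') :=
      funext fun ω => hprodeq i ω a b
    rw [heq]
    exact integrable_finset_sum _ fun c _ =>
      integrable_finset_sum _ fun c' _ => (hcov_int i c c').const_mul _
  have hPtab : ∀ a b : Fin r, (∑ c, Pt c a * Pt c b) = if a = b then 1 else 0 := by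
    intro a b
    have h := congrFun (congrFun hPt a) b
    simpa [Matrix.mul_apply, Matrix.transpose_apply, Matrix.one_apply] using h
  have hintval : ∀ i (a b : Fin r),
      ∫ ω, η i ω a * η i ω b ∂Pr = σ ^ 2 * (if a = b then 1 else 0) := by
    intro i a b
    simp_rw [hprodeq i _ a b]
    rw [integral_finset_sum _ fun c _ =>
      integrable_finset_sum _ fun c' _ => (hcov_int i c c').const_mul _]
    have hstep : ∀ c, ∫ ω, ∑ c', (Pt c a * Pt c' b) * (ε i ω c * ε i ω c') ∂Pr
        = ∑ c', (Pt c a * Pt c' b) * (if c = c' then σ ^ 2 else 0) := by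
      intro c
      rw [integral_finset_sum _ fun c' _ => (hcov_int i c c').const_mul _]
      exact Finset.sum_congr rfl fun c' _ => by rw [integral_const_mul, hcov]
    rw [Finset.sum_congr rfl fun c _ => hstep c]
    have : (∑ c, ∑ c', (Pt c a * Pt c' b) * (if c = c' then σ ^ 2 else 0))
        = σ ^ 2 * ∑ c, Pt c a * Pt c b := by
      rw [Finset.mul_sum]
      refine Finset.sum_congr rfl fun c _ => ?_
      rw [Finset.sum_eq_single c (fun c' _ hne => by rw [if_neg (Ne.symm (Ne.symm hne)).symm]; ring)
        (fun h => absurd (Finset.mem_univ c) h)]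
      rw [if_pos rfl]; ring
    rw [this, hPtab]
  -- independence
  have hindepη : ∀ i j, i ≠ j → ∀ a b : Fin r,
      IndepFun (fun ω => η i ω a) (fun ω => η j ω b) Pr := by
    intro i j hij a b
    exact (hindep.indepFun hij).comp (hF a) (hF b)
  -- SLLN for η products
  have hSLLN : ∀ a b : Fin r, ∀ᵐ ω ∂Pr, Tendsto
      (fun m : ℕ => (m : ℝ)⁻¹ * ∑ i ∈ Finset.Icc 1 m, η i ω a * η i ω b)
      atTop (𝓝 (σ ^ 2 * (if a = b then 1 else 0))) := by
    intro a b
    set G : (Fin q → ℝ) → ℝ := fun v => (∑ c, Pt c a * v c) * (∑ c, Pt c b * v c) with hG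
    have hGmeas : Measurable G := (hF a).mul (hF b)
    set Xs : ℕ → Ω → ℝ := fun i ω => η (i + 1) ω a * η (i + 1) ω b with hXs
    have h1 : Integrable (Xs 0) Pr := hintηη 1 a b
    have h2 : Pairwise (Function.onFun (IndepFun · · Pr) Xs) := by
      intro i j hij
      exact (hindep.indepFun (by omega : i + 1 ≠ j + 1)).comp hGmeas hGmeas
    have h3 : ∀ i, IdentDistrib (Xs i) (Xs 0) Pr Pr := fun i => (hident (i + 1)).comp hGmeas
    have h4 := strong_law_ae_real Xs h1 h2 h3
    have h5 : ∫ ω, Xs 0 ω ∂Pr = σ ^ 2 * (if a = b then 1 else 0) := hintval 1 a b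
    rw [h5] at h4
    filter_upwards [h4] with ω hω
    refine hω.congr fun n => ?_
    rw [div_eq_inv_mul]
    congr 1
    rw [show Finset.Icc 1 n = Finset.Ico 1 (n + 1) by rw [Finset.Ico_add_one_right_eq_Icc],
      Finset.sum_Ico_eq_sum_range]
    simp only [Nat.add_sub_cancel]
    exact Finset.sum_congr rfl fun i _ => by rw [Nat.add_comm 1 i]
  -- bound on partial sums of u² 
  have hXbound : ∀ a : Fin r, ∃ C : ℝ, 0 ≤ C ∧
      ∀ n : ℕ, (∑ i ∈ Finset.Icc 1 n, u i a ^ 2) ≤ C * n := by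
    intro a
    have hconv : Tendsto (fun m : ℕ => (m : ℝ)⁻¹ * ∑ i ∈ Finset.Icc 1 m, u i a ^ 2)
        atTop (𝓝 (L a a)) := by
      refine (hLab a a).congr fun m => ?_
      congr 1
      exact Finset.sum_congr rfl fun i _ => (sq (u i a)).symm
    obtain ⟨C, hC⟩ := hconv.bddAbove_range
    refine ⟨max C 0, le_max_right _ _, fun n => ?_⟩
    rcases Nat.eq_zero_or_pos n with h | h
    · subst h; simp
    · have h1 : (n : ℝ)⁻¹ * ∑ i ∈ Finset.Icc 1 n, u i a ^ 2 ≤ C := hC (Set.mem_range_self n)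
      have hn0 : (0 : ℝ) < (n : ℝ) := by exact_mod_cast h
      calc (∑ i ∈ Finset.Icc 1 n, u i a ^ 2)
          = (n : ℝ) * ((n : ℝ)⁻¹ * ∑ i ∈ Finset.Icc 1 n, u i a ^ 2) := by
            field_simp
        _ ≤ (n : ℝ) * C := by
            exact mul_le_mul_of_nonneg_left h1 (le_of_lt hn0)
        _ ≤ max C 0 * (n : ℝ) := by
            rw [mul_comm]
            exact mul_le_mul_of_nonneg_right (le_max_left _ _) (le_of_lt hn0)
  -- second moment of weighted sums
  have hval2 : ∀ (b : Fin r) (i j : ℕ), i ≠ j → ∫ ω, η i ω b * η j ω b ∂Pr = 0 := by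
    intro b i j hij
    have h := IndepFun.integral_fun_mul_eq_mul_integral (hindepη i j hij b b) (hintη i b).aestronglyMeasurable (hintη j b).aestronglyMeasurable
    have h2 : ∫ ω, η i ω b * η j ω b ∂Pr
        = (∫ ω, η i ω b ∂Pr) * ∫ ω, η j ω b ∂Pr := h
    rw [h2, hmeanη, zero_mul]
  have hSmom : ∀ (a b : Fin r) (n : ℕ),
      Integrable (fun ω => (∑ i ∈ Finset.Icc 1 n, u i a * η i ω b) ^ 2) Pr ∧
      ∫ ω, (∑ i ∈ Finset.Icc 1 n, u i a * η i ω b) ^ 2 ∂Pr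
        = σ ^ 2 * ∑ i ∈ Finset.Icc 1 n, u i a ^ 2 := by
    intro a b n
    have hexp : ∀ ω : Ω, (∑ i ∈ Finset.Icc 1 n, u i a * η i ω b) ^ 2
        = ∑ i ∈ Finset.Icc 1 n, ∑ j ∈ Finset.Icc 1 n,
            (u i a * u j a) * (η i ω b * η j ω b) := by
      intro ω
      rw [sq, Finset.sum_mul_sum]
      exact Finset.sum_congr rfl fun i _ => Finset.sum_congr rfl fun j _ => by ring
    have hterm_int : ∀ i j : ℕ,
        Integrable (fun ω => (u i a * u j a) * (η i ω b * η j ω b)) Pr := by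
      intro i j
      rcases eq_or_ne i j with rfl | hij
      · exact (hintηη i b b).const_mul _
      · have h1 : Integrable (fun ω => η i ω b * η j ω b) Pr :=
          IndepFun.integrable_mul (hindepη i j hij b b) (hintη i b) (hintη j b)
        exact h1.const_mul _
    constructor
    · have heq : (fun ω => (∑ i ∈ Finset.Icc 1 n, u i a * η i ω b) ^ 2)
          = fun ω => ∑ i ∈ Finset.Icc 1 n, ∑ j ∈ Finset.Icc 1 n,
              (u i a * u j a) * (η i ω b * η j ω b) := funext hexp
      rw [heq]
      exact integrable_finset_sum _ fun i _ => integrable_finset_sum _ fun j _ => hterm_int i j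
    · simp_rw [hexp]
      rw [integral_finset_sum _ fun i _ => integrable_finset_sum _ fun j _ => hterm_int i j]
      have hstep : ∀ i, ∫ ω, ∑ j ∈ Finset.Icc 1 n,
          (u i a * u j a) * (η i ω b * η j ω b) ∂Pr
          = ∑ j ∈ Finset.Icc 1 n, (u i a * u j a) * (if i = j then σ ^ 2 else 0) := by
        intro i
        rw [integral_finset_sum _ fun j _ => hterm_int i j]
        refine Finset.sum_congr rfl fun j _ => ?_
        rw [integral_const_mul]
        congr 1
        rcases eq_or_ne i j with rfl | hij
        · rw [if_pos rfl]
          simpa using hintval i b b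
        · rw [if_neg hij]
          exact hval2 b i j hij
      rw [Finset.sum_congr rfl fun i _ => hstep i]
      rw [Finset.mul_sum]
      refine Finset.sum_congr rfl fun i hi => ?_
      rw [Finset.sum_eq_single_of_mem i hi
        (fun j _ hne => by rw [if_neg fun h => hne h.symm]; ring)]
      rw [if_pos rfl]; ring
  -- the subsequence convergence for cross terms
  have hcross : ∀ a b : Fin r, ∀ᵐ ω ∂Pr, Tendsto
      (fun k : ℕ => ((k : ℝ) ^ 2)⁻¹ * ∑ i ∈ Finset.Icc 1 (k ^ 2), u i a * η i ω b)
      atTop (𝓝 0) := by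
    intro a b
    obtain ⟨C, hC0, hC⟩ := hXbound a
    refine aux_bc Pr _ (fun k => σ ^ 2 * C * ((k : ℝ) ^ 2)⁻¹) ?_ ?_ ?_
    · intro k
      have h1 := (hSmom a b (k ^ 2)).1
      have heq : (fun ω => (((k : ℝ) ^ 2)⁻¹ * ∑ i ∈ Finset.Icc 1 (k ^ 2), u i a * η i ω b) ^ 2)
          = fun ω => (((k : ℝ) ^ 2)⁻¹) ^ 2 *
              (∑ i ∈ Finset.Icc 1 (k ^ 2), u i a * η i ω b) ^ 2 := by
        funext ω; ring
      rw [heq]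
      exact h1.const_mul _
    · have hs : Summable (fun k : ℕ => ((k : ℝ) ^ 2)⁻¹) := by
        have := (Real.summable_one_div_nat_pow (p := 2)).mpr one_lt_two
        simpa [one_div] using this
      exact hs.mul_left _
    · intro k
      have heq : (fun ω => (((k : ℝ) ^ 2)⁻¹ * ∑ i ∈ Finset.Icc 1 (k ^ 2), u i a * η i ω b) ^ 2)
          = fun ω => (((k : ℝ) ^ 2)⁻¹) ^ 2 *
              (∑ i ∈ Finset.Icc 1 (k ^ 2), u i a * η i ω b) ^ 2 := by
        funext ω; ring
      rw [heq]
      rw [integral_const_mul, (hSmom a b (k ^ 2)).2]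
      rcases Nat.eq_zero_or_pos k with h | h
      · subst h; simp
      · have hk0 : (0 : ℝ) < (k : ℝ) := by exact_mod_cast h
        have hXle : (∑ i ∈ Finset.Icc 1 (k ^ 2), u i a ^ 2) ≤ C * (k : ℝ) ^ 2 := by
          have := hC (k ^ 2)
          rw [show (((k ^ 2 : ℕ) : ℝ)) = (k : ℝ) ^ 2 by push_cast; ring] at this
          exact this
        calc (((k : ℝ) ^ 2)⁻¹) ^ 2 * (σ ^ 2 * ∑ i ∈ Finset.Icc 1 (k ^ 2), u i a ^ 2)
            ≤ (((k : ℝ) ^ 2)⁻¹) ^ 2 * (σ ^ 2 * (C * (k : ℝ) ^ 2)) := by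
              gcongr
          _ = σ ^ 2 * C * ((k : ℝ) ^ 2)⁻¹ := by
              field_simp
  -- combine a.e. statements and conclude
  have H1 : ∀ᵐ ω ∂Pr, ∀ a b : Fin r, Tendsto
      (fun m : ℕ => (m : ℝ)⁻¹ * ∑ i ∈ Finset.Icc 1 m, η i ω a * η i ω b)
      atTop (𝓝 (σ ^ 2 * (if a = b then 1 else 0))) :=
    ae_all_iff.mpr fun a => ae_all_iff.mpr fun b => hSLLN a b
  have H2 : ∀ᵐ ω ∂Pr, ∀ a b : Fin r, Tendsto
      (fun k : ℕ => ((k : ℝ) ^ 2)⁻¹ * ∑ i ∈ Finset.Icc 1 (k ^ 2), u i a * η i ω b)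
      atTop (𝓝 0) :=
    ae_all_iff.mpr fun a => ae_all_iff.mpr fun b => hcross a b
  filter_upwards [H1, H2] with ω h1 h2
  refine tendsto_pi_nhds.mpr ?_
  intro a
  refine tendsto_pi_nhds.mpr ?_
  intro b
  have hsq : ∀ a' : Fin r, Tendsto
      (fun m : ℕ => (m : ℝ)⁻¹ * ∑ i ∈ Finset.Icc 1 m, η i ω a' ^ 2)
      atTop (𝓝 (σ ^ 2)) := by
    intro a'
    have h := h1 a' a'
    rw [if_pos rfl, mul_one] at h
    refine h.congr fun m => ?_
    congr 1
    exact Finset.sum_congr rfl fun i _ => (sq _).symm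
  have husq : ∀ a' : Fin r, Tendsto
      (fun m : ℕ => (m : ℝ)⁻¹ * ∑ i ∈ Finset.Icc 1 m, u i a' ^ 2)
      atTop (𝓝 (L a' a')) := by
    intro a'
    refine (hLab a' a').congr fun m => ?_
    congr 1
    exact Finset.sum_congr rfl fun i _ => (sq _).symm
  have hfun : ∀ m : ℕ, ((m : ℝ)⁻¹ • (Ptᵀ * (∑ i ∈ Finset.Icc 1 m,
      Matrix.vecMulVec (d i + ε i ω) (d i + ε i ω)) * Pt)) a b
      = ((m : ℝ)⁻¹ * ∑ i ∈ Finset.Icc 1 m, u i a * u i b)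
      + (((m : ℝ)⁻¹ * ∑ i ∈ Finset.Icc 1 m, u i a * η i ω b)
      + (((m : ℝ)⁻¹ * ∑ i ∈ Finset.Icc 1 m, u i b * η i ω a)
      + ((m : ℝ)⁻¹ * ∑ i ∈ Finset.Icc 1 m, η i ω a * η i ω b))) := by
    intro m
    rw [hFentry (fun i => d i + ε i ω) m a b]
    have hterm : ∀ i : ℕ,
        (∑ c, Pt c a * (d i + ε i ω) c) * (∑ c, Pt c b * (d i + ε i ω) c)
        = u i a * u i b + (u i a * η i ω b + (u i b * η i ω a + η i ω a * η i ω b)) := by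
      intro i
      have ha : (∑ c, Pt c a * (d i + ε i ω) c) = u i a + η i ω a := by
        rw [← Finset.sum_add_distrib]
        exact Finset.sum_congr rfl fun c _ => by simp [mul_add]
      have hb : (∑ c, Pt c b * (d i + ε i ω) c) = u i b + η i ω b := by
        rw [← Finset.sum_add_distrib]
        exact Finset.sum_congr rfl fun c _ => by simp [mul_add]
      rw [ha, hb]; ring
    rw [Finset.sum_congr rfl fun i _ => hterm i]
    rw [Finset.sum_add_distrib, Finset.sum_add_distrib, Finset.sum_add_distrib]
    ring
  have t1 := hLab a b
  have t4 := h1 a b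
  have t2 : Tendsto (fun m : ℕ => (m : ℝ)⁻¹ * ∑ i ∈ Finset.Icc 1 m, u i a * η i ω b)
      atTop (𝓝 0) := aux_block _ _ (L a a) (σ ^ 2) (husq a) (hsq b) (h2 a b)
  have t3 : Tendsto (fun m : ℕ => (m : ℝ)⁻¹ * ∑ i ∈ Finset.Icc 1 m, u i b * η i ω a)
      atTop (𝓝 0) := aux_block _ _ (L b b) (σ ^ 2) (husq b) (hsq a) (h2 b a)
  have tot := t1.add (t2.add (t3.add t4))
  have heq : (L + σ ^ 2 • (1 : Matrix (Fin r) (Fin r) ℝ)) a b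
      = L a b + (0 + (0 + σ ^ 2 * (if a = b then 1 else 0))) := by
    simp [Matrix.one_apply, Matrix.add_apply, Matrix.smul_apply, mul_ite]
  rw [heq]
  exact Tendsto.congr (fun m => (hfun m).symm) tot
end

section
/- In the row-and-column constrained errors-in-variables model of Section 5 with Assumptions 1 and 5, define for each m (on the almost-sure event where C₂₁ᵀC₂₁ is invertible) G = C₂₂ᵀC₂₂ − C₂₂ᵀC₂₁(C₂₁ᵀC₂₁)⁻¹C₂₁ᵀC₂₂. Then almost surely m⁻¹ P̃ᵀGP̃ → T̄ + σ² I as m → ∞, where I is the identity matrix of size n + ℓ − k − j. -/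
open MeasureTheory ProbabilityTheory Filter Matrix
open scoped Topology

/-- Sample Gram-Schur matrix: `G = C₂₂ᵀC₂₂ − C₂₂ᵀC₂₁(C₂₁ᵀC₂₁)⁻¹C₂₁ᵀC₂₂` where `C₂₁` has
rows `u_1,…,u_N` and `C₂₂` has rows `w_1,…,w_N`. -/
noncomputable def schurGram (k q : ℕ) (u : ℕ → Fin k → ℝ) (w : ℕ → Fin q → ℝ) (N : ℕ) :
    Matrix (Fin q) (Fin q) ℝ :=
  (∑ i ∈ Finset.Icc 1 N, Matrix.vecMulVec (w i) (w i)) -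
    (∑ i ∈ Finset.Icc 1 N, Matrix.vecMulVec (u i) (w i))ᵀ *
      (∑ i ∈ Finset.Icc 1 N, Matrix.vecMulVec (u i) (u i))⁻¹ *
      (∑ i ∈ Finset.Icc 1 N, Matrix.vecMulVec (u i) (w i))

namespace S13

/-- Sum over `Icc 1 n` as a shifted range sum. -/
lemma sum_Icc_one {M : Type*} [AddCommMonoid M] (f : ℕ → M) (n : ℕ) :
    ∑ i ∈ Finset.Icc 1 n, f i = ∑ i ∈ Finset.range n, f (i + 1) := by
  induction n with
  | zero => simp
  | succ n ih =>
    rw [Finset.sum_Icc_succ_top (by omega), ih, Finset.sum_range_succ]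

/-- Kronecker's lemma. -/
lemma kronecker (x : ℕ → ℝ) (L : ℝ)
    (h : Tendsto (fun n => ∑ i ∈ Finset.range n, ((i : ℝ) + 1)⁻¹ * x i) atTop (𝓝 L)) :
    Tendsto (fun n : ℕ => (n : ℝ)⁻¹ * ∑ i ∈ Finset.range n, x i) atTop (𝓝 0) := by
  set S : ℕ → ℝ := fun n => ∑ i ∈ Finset.range n, ((i : ℝ) + 1)⁻¹ * x i with hS
  have key : ∀ n : ℕ, ∑ i ∈ Finset.range n, x i = n * S n - ∑ i ∈ Finset.range n, S i := by
    intro n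
    induction n with
    | zero => simp [hS]
    | succ n ih =>
      rw [Finset.sum_range_succ, Finset.sum_range_succ (f := S), ih]
      have hx : x n = ((n : ℝ) + 1) * (S (n + 1) - S n) := by
        have h0 : S (n + 1) = S n + ((n : ℝ) + 1)⁻¹ * x n := Finset.sum_range_succ _ n
        rw [h0]
        have : ((n : ℝ) + 1) ≠ 0 := by positivity
        field_simp
        ring
      push_cast
      rw [hx]; ring
  have hc : Tendsto (fun n : ℕ => (n : ℝ)⁻¹ • ∑ i ∈ Finset.range n, S i) atTop (𝓝 L) :=
    h.cesaro_smul
  simp only [smul_eq_mul] at hc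
  have hsub : Tendsto (fun n : ℕ => S n - (n : ℝ)⁻¹ * ∑ i ∈ Finset.range n, S i)
      atTop (𝓝 (L - L)) := h.sub hc
  rw [sub_self] at hsub
  refine hsub.congr' ?_
  filter_upwards [eventually_ge_atTop 1] with n hn
  have hn' : (n : ℝ) ≠ 0 := by positivity
  rw [key n, mul_sub, ← mul_assoc, inv_mul_cancel₀ hn', one_mul]

/-- Summability of `a i / (i+1)^2` when partial sums of `a` grow linearly. -/
lemma aux_sum (a : ℕ → ℝ) (ha : ∀ i, 0 ≤ a i) (C : ℝ)
    (hC : ∀ n : ℕ, ∑ i ∈ Finset.range n, a i ≤ C * n) :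
    Summable (fun i : ℕ => (((i : ℝ) + 1)⁻¹) ^ 2 * a i) := by
  have hC0 : 0 ≤ C := by
    have h1 := hC 1
    have := ha 0
    simp [Finset.sum_range_one] at h1
    linarith
  apply summable_of_sum_range_le (c := 5 * C) (fun i => mul_nonneg (by positivity) (ha i))
  intro n
  have key : ∀ n : ℕ, ∑ i ∈ Finset.range n, (((i : ℝ) + 1)⁻¹) ^ 2 * a i
      ≤ (∑ i ∈ Finset.range n, a i) * (((n : ℝ) + 1)⁻¹) ^ 2 + 4 * C * (1 - ((n : ℝ) + 1)⁻¹) := by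
    intro n
    induction n with
    | zero => simp
    | succ n ih =>
      rw [Finset.sum_range_succ, Finset.sum_range_succ (f := a)]
      set A := ∑ i ∈ Finset.range n, a i with hA
      have hA0 : 0 ≤ A := Finset.sum_nonneg fun i _ => ha i
      have hAn : A + a n ≤ C * ((n : ℝ) + 1) := by
        have := hC (n + 1)
        rw [Finset.sum_range_succ, ← hA] at this
        push_cast at this
        linarith
      have han : 0 ≤ a n := ha n
      have h1 : (0 : ℝ) < (n : ℝ) + 1 := by positivity
      have h2 : (0 : ℝ) < (n : ℝ) + 2 := by positivity
      push_cast
      have hcast : ((n : ℝ) + 1 + 1) = (n : ℝ) + 2 := by ring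
      rw [hcast]
      have step : (A + a n) * (((n : ℝ) + 1)⁻¹) ^ 2 + 4 * C * (1 - ((n : ℝ) + 1)⁻¹)
          ≤ (A + a n) * (((n : ℝ) + 2)⁻¹) ^ 2 + 4 * C * (1 - ((n : ℝ) + 2)⁻¹) := by
        have e1 : (((n : ℝ) + 1)⁻¹) ^ 2 - (((n : ℝ) + 2)⁻¹) ^ 2
            = (2 * (n : ℝ) + 3) / (((n : ℝ) + 1) ^ 2 * ((n : ℝ) + 2) ^ 2) := by
          field_simp
          try ring_nf
          try norm_num
        have e2 : ((n : ℝ) + 1)⁻¹ - ((n : ℝ) + 2)⁻¹ = 1 / (((n : ℝ) + 1) * ((n : ℝ) + 2)) := by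
          field_simp
          try ring_nf
          try norm_num
        have goal2 : (A + a n) * ((2 * (n : ℝ) + 3) / (((n : ℝ) + 1) ^ 2 * ((n : ℝ) + 2) ^ 2))
            ≤ 4 * C * (1 / (((n : ℝ) + 1) * ((n : ℝ) + 2))) := by
          rw [mul_div_assoc', mul_one_div, div_le_div_iff₀ (by positivity) (by positivity)]
          nlinarith [mul_le_mul_of_nonneg_right hAn (by positivity :
            (0:ℝ) ≤ (2 * (n : ℝ) + 3) * (((n : ℝ) + 1) * ((n : ℝ) + 2))),
            sq_nonneg ((n:ℝ)+1), sq_nonneg ((n:ℝ)+2), mul_pos h1 h2,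
            mul_nonneg (mul_nonneg hC0 h1.le) h2.le]
        nlinarith [goal2, e1, e2]
      calc ∑ i ∈ Finset.range n, (((i : ℝ) + 1)⁻¹) ^ 2 * a i + (((n : ℝ) + 1)⁻¹) ^ 2 * a n
          ≤ A * (((n : ℝ) + 1)⁻¹) ^ 2 + 4 * C * (1 - ((n : ℝ) + 1)⁻¹)
            + (((n : ℝ) + 1)⁻¹) ^ 2 * a n := by linarith
        _ = (A + a n) * (((n : ℝ) + 1)⁻¹) ^ 2 + 4 * C * (1 - ((n : ℝ) + 1)⁻¹) := by ring
        _ ≤ (A + a n) * (((n : ℝ) + 2)⁻¹) ^ 2 + 4 * C * (1 - ((n : ℝ) + 2)⁻¹) := step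
      -- done
  calc ∑ i ∈ Finset.range n, (((i : ℝ) + 1)⁻¹) ^ 2 * a i
      ≤ (∑ i ∈ Finset.range n, a i) * (((n : ℝ) + 1)⁻¹) ^ 2 + 4 * C * (1 - ((n : ℝ) + 1)⁻¹) :=
        key n
    _ ≤ C * n * (((n : ℝ) + 1)⁻¹) ^ 2 + 4 * C := by
        have h1 : (0 : ℝ) < (n : ℝ) + 1 := by positivity
        have h3 : (0:ℝ) ≤ (((n : ℝ) + 1)⁻¹) ^ 2 := by positivity
        have h4 : ((n : ℝ) + 1)⁻¹ ≤ 1 := by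
          rw [inv_le_one_iff₀]; right; linarith
        have h5 : (0:ℝ) ≤ ((n : ℝ) + 1)⁻¹ := by positivity
        have := mul_le_mul_of_nonneg_right (hC n) h3
        nlinarith
    _ ≤ 5 * C := by
        have h1 : (0 : ℝ) < (n : ℝ) + 1 := by positivity
        have : C * n * (((n : ℝ) + 1)⁻¹) ^ 2 ≤ C := by
          rw [mul_assoc]
          have hx : (n : ℝ) * (((n : ℝ) + 1)⁻¹) ^ 2 ≤ 1 := by
            rw [sq, ← mul_assoc]
            have hx1 : (n : ℝ) * ((n : ℝ) + 1)⁻¹ ≤ 1 := by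
              rw [mul_inv_le_iff₀ h1]; linarith
            have h5 : (0:ℝ) ≤ ((n : ℝ) + 1)⁻¹ := by positivity
            have h4 : ((n : ℝ) + 1)⁻¹ ≤ 1 := by
              rw [inv_le_one_iff₀]; right; linarith
            nlinarith
          nlinarith
        linarith


section Transfer

variable {E : Type*} [AddCommGroup E] [Module ℝ E] [TopologicalSpace E]
  [IsTopologicalAddGroup E] [ContinuousSMul ℝ E]

lemma tendsto_shift (F : ℕ → E) (L : E) (j : ℕ)
    (h : Tendsto (fun N : ℕ => (N : ℝ)⁻¹ • F N) atTop (𝓝 L)) :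
    Tendsto (fun m : ℕ => (m : ℝ)⁻¹ • F (m - j)) atTop (𝓝 L) := by
  have h1 : Tendsto (fun m : ℕ => ((m - j : ℕ) : ℝ) / (m : ℝ)) atTop (𝓝 1) := by
    have hj : Tendsto (fun m : ℕ => 1 - (j : ℝ) / (m : ℝ)) atTop (𝓝 (1 - 0)) :=
      tendsto_const_nhds.sub (tendsto_const_div_atTop_nhds_zero_nat (j : ℝ))
    rw [sub_zero] at hj
    refine hj.congr' ?_
    filter_upwards [eventually_ge_atTop j, eventually_ge_atTop 1] with m hm hm1
    have : ((m - j : ℕ) : ℝ) = (m : ℝ) - (j : ℝ) := by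
      rw [Nat.cast_sub hm]
    rw [this]
    have hm0 : (m : ℝ) ≠ 0 := by
      have : 0 < m := hm1
      positivity
    field_simp
  have h2 : Tendsto (fun m : ℕ => ((m - j : ℕ) : ℝ)⁻¹ • F (m - j)) atTop (𝓝 L) :=
    h.comp (tendsto_sub_atTop_nat j)
  have h3 := h1.smul h2
  rw [one_smul] at h3
  refine h3.congr' ?_
  filter_upwards [eventually_gt_atTop j] with m hm
  rw [smul_smul]
  congr 1
  have hmj' : ((m - j : ℕ) : ℝ) ≠ 0 := Nat.cast_ne_zero.mpr (by omega)
  have hm0 : (m : ℝ) ≠ 0 := Nat.cast_ne_zero.mpr (by omega)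
  field_simp

lemma tendsto_unshift (F : ℕ → E) (L : E) (j : ℕ)
    (h : Tendsto (fun m : ℕ => (m : ℝ)⁻¹ • F (m - j)) atTop (𝓝 L)) :
    Tendsto (fun N : ℕ => (N : ℝ)⁻¹ • F N) atTop (𝓝 L) := by
  have h2 : Tendsto (fun N : ℕ => ((N + j : ℕ) : ℝ)⁻¹ • F N) atTop (𝓝 L) := by
    have := h.comp (tendsto_add_atTop_nat j)
    simpa only [Function.comp_def, Nat.add_sub_cancel] using this
  have h1 : Tendsto (fun N : ℕ => ((N + j : ℕ) : ℝ) / (N : ℝ)) atTop (𝓝 1) := by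
    have hj : Tendsto (fun N : ℕ => 1 + (j : ℝ) / (N : ℝ)) atTop (𝓝 (1 + 0)) :=
      tendsto_const_nhds.add (tendsto_const_div_atTop_nhds_zero_nat (j : ℝ))
    rw [add_zero] at hj
    refine hj.congr' ?_
    filter_upwards [eventually_gt_atTop 0] with N hN
    have hN0 : (N : ℝ) ≠ 0 := by positivity
    push_cast
    field_simp
  have h3 := h1.smul h2
  rw [one_smul] at h3
  refine h3.congr' ?_
  filter_upwards [eventually_gt_atTop 0] with N hN
  rw [smul_smul]
  congr 1
  have hN0 : (N : ℝ) ≠ 0 := Nat.cast_ne_zero.mpr (by omega)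
  have hNj : ((N + j : ℕ) : ℝ) ≠ 0 := Nat.cast_ne_zero.mpr (by omega)
  field_simp

end Transfer

section MatrixAux

variable {ι : Type*} [Fintype ι] [DecidableEq ι]

lemma matrix_smul_inv (c : ℝ) (hc : c ≠ 0) (A : Matrix ι ι ℝ) :
    (c • A)⁻¹ = c⁻¹ • A⁻¹ := by
  by_cases h : IsUnit A.det
  · have : Invertible c := invertibleOfNonzero hc
    rw [Matrix.inv_smul (A := A) c h, invOf_eq_inv c]
  · have h0 : A.det = 0 := by
      rw [isUnit_iff_ne_zero, not_not] at h
      exact h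
    have h2 : ¬IsUnit ((c • A).det) := by
      rw [Matrix.det_smul, h0, mul_zero, isUnit_iff_ne_zero, not_not]
    rw [Matrix.nonsing_inv_apply_not_isUnit _ h2, Matrix.nonsing_inv_apply_not_isUnit _ h,
      smul_zero]

lemma tendsto_matrix_inv (M : ℕ → Matrix ι ι ℝ) (L : Matrix ι ι ℝ) (hL : IsUnit L.det)
    (h : Tendsto M atTop (𝓝 L)) : Tendsto (fun n => (M n)⁻¹) atTop (𝓝 L⁻¹) := by
  obtain ⟨un, hun⟩ := hL
  have hc : ContinuousAt Ring.inverse L.det := by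
    rw [← hun]
    exact NormedRing.inverse_continuousAt un
  exact ((continuousAt_matrix_inv L hc).tendsto.comp h : _)

end MatrixAux


section Indep

variable {Ω : Type*} [MeasurableSpace Ω] {μ : Measure Ω}

lemma iIndepFun_shift {β : Type*} [mβ : MeasurableSpace β] {f : ℕ → Ω → β}
    (h : iIndepFun f μ) (k : ℕ) :
    iIndepFun (fun i => f (i + k)) μ := by
  rw [iIndepFun_iff_measure_inter_preimage_eq_mul] at h ⊢
  intro S sets hsets
  have e : Function.Injective (fun i : ℕ => i + k) := add_left_injective k
  have key := h (S.map ⟨fun i => i + k, e⟩) (sets := fun i => sets (i - k))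
    (by
      intro i hi
      rw [Finset.mem_map] at hi
      obtain ⟨a, ha, rfl⟩ := hi
      simpa [Nat.add_sub_cancel] using hsets a ha)
  rw [Finset.prod_map] at key
  simp only [Function.Embedding.coeFn_mk, Nat.add_sub_cancel] at key
  convert key using 2
  ext x
  simp only [Set.mem_iInter, Set.mem_preimage, Finset.mem_map, Function.Embedding.coeFn_mk]
  constructor
  · rintro hx i ⟨a, ha, rfl⟩
    simpa [Nat.add_sub_cancel] using hx a ha
  · intro hx a ha
    simpa [Nat.add_sub_cancel] using hx (a + k) ⟨a, ha, rfl⟩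

/-- Almost sure convergence of a series of independent mean-zero square-integrable
random variables with summable variances (partial sums of variances bounded). -/
lemma ae_series_converges [IsProbabilityMeasure μ] (X : ℕ → Ω → ℝ)
    (hmeas : ∀ i, Measurable (X i))
    (hindep : iIndepFun X μ)
    (hsq : ∀ i, Integrable (fun ω => X i ω ^ 2) μ)
    (hmean : ∀ i, ∫ ω, X i ω ∂μ = 0)
    (S : ℝ) (hsum : ∀ n : ℕ, ∑ i ∈ Finset.range n, ∫ ω, X i ω ^ 2 ∂μ ≤ S) :
    ∀ᵐ ω ∂μ, ∃ c, Tendsto (fun n => ∑ i ∈ Finset.range n, X i ω) atTop (𝓝 c) := by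
  have hint : ∀ i, Integrable (X i) μ := by
    intro i
    have : MemLp (X i) 2 μ :=
      (memLp_two_iff_integrable_sq (hmeas i).aestronglyMeasurable).2 (hsq i)
    exact this.integrable one_le_two
  set f : ℕ → Ω → ℝ := fun n ω => ∑ i ∈ Finset.range (n + 1), X i ω with hf
  have hsm : ∀ i, StronglyMeasurable (X i) := fun i => (hmeas i).stronglyMeasurable
  set ℱ := Filtration.natural X hsm with hℱ
  have hXmeas : ∀ i n, i ≤ n → StronglyMeasurable[ℱ n] (X i) := by
    intro i n hin
    refine ((comap_measurable (X i)).stronglyMeasurable).mono ?_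
    rw [hℱ]
    exact le_iSup₂ (f := fun j (_ : j ≤ n) => MeasurableSpace.comap (X j) inferInstance) i hin
  have hadp : StronglyAdapted ℱ f := by
    intro n
    apply Finset.stronglyMeasurable_fun_sum
    intro i hi
    exact hXmeas i n (by simpa using Nat.lt_succ_iff.mp (Finset.mem_range.mp hi))
  have hfint : ∀ n, Integrable (f n) μ := fun n => integrable_finset_sum _ fun i _ => hint i
  have hmart : Martingale f ℱ μ := by
    refine martingale_nat hadp hfint fun n => ?_
    have hsucc : f (n + 1) = f n + X (n + 1) := by
      funext ω
      simp only [hf, Pi.add_apply]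
      rw [Finset.sum_range_succ]
    rw [hsucc]
    have h1 : μ[f n + X (n + 1)|ℱ n] =ᵐ[μ] μ[f n|ℱ n] + μ[X (n + 1)|ℱ n] :=
      condExp_add (hfint n) (hint (n + 1)) _
    have h2 : μ[f n|ℱ n] = f n :=
      condExp_of_stronglyMeasurable (ℱ.le n) (hadp n) (hfint n)
    have h3 : μ[X (n + 1)|ℱ n] =ᵐ[μ] fun _ => μ[X (n + 1)] :=
      hindep.condExp_natural_ae_eq_of_lt hsm (Nat.lt_succ_self n)
    filter_upwards [h1, h3] with ω hω1 hω3
    rw [hω1, h2]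
    simp only [Pi.add_apply, hω3, hmean (n + 1), add_zero]
  -- second moment of f n
  have hprod_int : ∀ i j', Integrable (fun ω => X i ω * X j' ω) μ := by
    intro i j'
    rcases eq_or_ne i j' with rfl | hij
    · simpa [sq] using hsq i
    · exact (hindep.indepFun hij).integrable_mul (hint i) (hint j')
  have hsq_f : ∀ n, Integrable (fun ω => (f n ω) ^ 2) μ := by
    intro n
    have : (fun ω => (f n ω) ^ 2)
        = fun ω => ∑ i ∈ Finset.range (n + 1), ∑ j' ∈ Finset.range (n + 1), X i ω * X j' ω := by
      funext ω
      rw [sq, hf]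
      simp only
      rw [Finset.sum_mul_sum]
    rw [this]
    exact integrable_finset_sum _ fun i _ => integrable_finset_sum _ fun j' _ => hprod_int i j'
  have hEsq : ∀ n, ∫ ω, (f n ω) ^ 2 ∂μ ≤ S := by
    intro n
    have he : ∫ ω, (f n ω) ^ 2 ∂μ = ∑ i ∈ Finset.range (n + 1), ∫ ω, X i ω ^ 2 ∂μ := by
      have h1 : (fun ω => (f n ω) ^ 2)
          = fun ω => ∑ i ∈ Finset.range (n + 1), ∑ j' ∈ Finset.range (n + 1), X i ω * X j' ω := by
        funext ω
        rw [sq, hf]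
        simp only
        rw [Finset.sum_mul_sum]
      rw [h1, integral_finset_sum _ fun i _ =>
        integrable_finset_sum _ fun j' _ => hprod_int i j']
      have h2 : ∀ i ∈ Finset.range (n + 1),
          ∫ ω, ∑ j' ∈ Finset.range (n + 1), X i ω * X j' ω ∂μ = ∫ ω, X i ω ^ 2 ∂μ := by
        intro i himem
        rw [integral_finset_sum _ fun j' _ => hprod_int i j']
        rw [Finset.sum_eq_single i]
        · simp [sq]
        · intro j' _ hji
          have hind : IndepFun (X i) (X j') μ := hindep.indepFun (Ne.symm hji)
          have := hind.integral_mul_eq_mul_integral (hint i).aestronglyMeasurable (hint j').aestronglyMeasurable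
          have heq : ∫ ω, X i ω * X j' ω ∂μ = ∫ ω, (X i * X j') ω ∂μ := rfl
          rw [heq]
          show integral μ (X i * X j') = 0
          rw [this, hmean i, zero_mul]
        · intro hi
          exact absurd himem hi
      exact Finset.sum_congr rfl h2
    rw [he]
    exact hsum (n + 1)
  -- L¹ bound
  have hL1 : ∀ n, eLpNorm (f n) 1 μ ≤ ENNReal.ofReal (1 + S) := by
    intro n
    have habs : ∫ ω, ‖f n ω‖ ∂μ ≤ 1 + S := by
      have hb : ∀ ω, ‖f n ω‖ ≤ 1 + (f n ω) ^ 2 := by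
        intro ω
        have := sq_nonneg (|f n ω| - 1)
        rw [Real.norm_eq_abs]
        nlinarith [abs_nonneg (f n ω), sq_abs (f n ω)]
      have h1 : ∫ ω, ‖f n ω‖ ∂μ ≤ ∫ ω, (1 + (f n ω) ^ 2) ∂μ :=
        integral_mono (hfint n).norm ((integrable_const 1).add (hsq_f n)) hb
      have h2 : ∫ ω, (1 + (f n ω) ^ 2) ∂μ = 1 + ∫ ω, (f n ω) ^ 2 ∂μ := by
        rw [integral_add (integrable_const 1) (hsq_f n)]
        simp
      linarith [hEsq n]
    have : eLpNorm (f n) 1 μ = ENNReal.ofReal (∫ ω, ‖f n ω‖ ∂μ) := by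
      rw [eLpNorm_one_eq_lintegral_enorm,
        ← ofReal_integral_norm_eq_lintegral_enorm (hfint n)]
    rw [this]
    exact ENNReal.ofReal_le_ofReal habs
  have := hmart.submartingale.exists_ae_tendsto_of_bdd hL1
  filter_upwards [this] with ω ⟨c, hc⟩
  refine ⟨c, ?_⟩
  rw [← tendsto_add_atTop_iff_nat 1]
  exact hc


lemma linear_bound (s : ℕ → ℝ) (hs0 : s 0 = 0) (c : ℝ)
    (h : Tendsto (fun N : ℕ => (N : ℝ)⁻¹ * s N) atTop (𝓝 c)) :
    ∃ C : ℝ, ∀ n : ℕ, s n ≤ C * n := by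
  obtain ⟨B, hB⟩ := h.abs.bddAbove_range
  refine ⟨B, fun n => ?_⟩
  rcases Nat.eq_zero_or_pos n with rfl | hn
  · simp [hs0]
  · have h1 : |(n : ℝ)⁻¹ * s n| ≤ B := hB ⟨n, rfl⟩
    have h2 : (n : ℝ)⁻¹ * s n ≤ B := (le_abs_self _).trans h1
    have hn0 : (0 : ℝ) < n := by exact_mod_cast hn
    calc s n = (n : ℝ) * ((n : ℝ)⁻¹ * s n) := by
          field_simp
      _ ≤ (n : ℝ) * B := by
          exact mul_le_mul_of_nonneg_left h2 hn0.le
      _ = B * n := by ring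

/-- Weighted strong law: independent, mean zero, second moments with linearly growing
partial sums. -/
lemma wslln [IsProbabilityMeasure μ] (X : ℕ → Ω → ℝ)
    (hmeas : ∀ i, Measurable (X i))
    (hindep : iIndepFun X μ)
    (hsq : ∀ i, Integrable (fun ω => X i ω ^ 2) μ)
    (hmean : ∀ i, ∫ ω, X i ω ∂μ = 0)
    (C : ℝ) (hC : ∀ n : ℕ, ∑ i ∈ Finset.range n, ∫ ω, X i ω ^ 2 ∂μ ≤ C * n) :
    ∀ᵐ ω ∂μ, Tendsto (fun n : ℕ => (n : ℝ)⁻¹ * ∑ i ∈ Finset.range n, X i ω) atTop (𝓝 0) := by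
  set Y : ℕ → Ω → ℝ := fun i ω => ((i : ℝ) + 1)⁻¹ * X i ω with hY
  have hYmeas : ∀ i, Measurable (Y i) := fun i => (hmeas i).const_mul _
  have hYindep : iIndepFun Y μ :=
    hindep.comp (fun i (x : ℝ) => ((i : ℝ) + 1)⁻¹ * x) (fun i => measurable_const_mul _)
  have hYeq : ∀ i, (fun ω => Y i ω ^ 2) = fun ω => (((i : ℝ) + 1)⁻¹) ^ 2 * X i ω ^ 2 := by
    intro i
    funext ω
    simp only [hY]
    ring
  have hYsq : ∀ i, Integrable (fun ω => Y i ω ^ 2) μ := by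
    intro i
    rw [hYeq i]
    exact (hsq i).const_mul _
  have hYmean : ∀ i, ∫ ω, Y i ω ∂μ = 0 := by
    intro i
    simp only [hY]
    rw [integral_const_mul _ _, hmean i, mul_zero]
  have haux := aux_sum (fun i => ∫ ω, X i ω ^ 2 ∂μ)
    (fun i => integral_nonneg fun ω => sq_nonneg _) C hC
  have hS : ∀ n : ℕ, ∑ i ∈ Finset.range n, ∫ ω, Y i ω ^ 2 ∂μ
      ≤ ∑' i : ℕ, (((i : ℝ) + 1)⁻¹) ^ 2 * ∫ ω, X i ω ^ 2 ∂μ := by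
    intro n
    have he : ∀ i : ℕ, ∫ ω, Y i ω ^ 2 ∂μ = (((i : ℝ) + 1)⁻¹) ^ 2 * ∫ ω, X i ω ^ 2 ∂μ := by
      intro i
      rw [hYeq i, integral_const_mul _ _]
    calc ∑ i ∈ Finset.range n, ∫ ω, Y i ω ^ 2 ∂μ
        = ∑ i ∈ Finset.range n, (((i : ℝ) + 1)⁻¹) ^ 2 * ∫ ω, X i ω ^ 2 ∂μ :=
          Finset.sum_congr rfl fun i _ => he i
      _ ≤ ∑' i : ℕ, (((i : ℝ) + 1)⁻¹) ^ 2 * ∫ ω, X i ω ^ 2 ∂μ :=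
          haux.sum_le_tsum _ (fun i _ => mul_nonneg (by positivity)
            (integral_nonneg fun ω => sq_nonneg _))
  have := ae_series_converges Y hYmeas hYindep hYsq hYmean _ hS
  filter_upwards [this] with ω hω
  obtain ⟨c, hc⟩ := hω
  exact kronecker (fun i => X i ω) c hc

end Indep


section Tendsto

variable {α I J K : Type*} [Fintype I] [Fintype J] [Fintype K] {l : Filter α}

lemma tmul {f : α → Matrix I J ℝ} {g : α → Matrix J K ℝ} {F : Matrix I J ℝ}
    {G : Matrix J K ℝ} (hf : Tendsto f l (𝓝 F)) (hg : Tendsto g l (𝓝 G)) :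
    Tendsto (fun x => f x * g x) l (𝓝 (F * G)) := by
  have hcont : Continuous (fun p : Matrix I J ℝ × Matrix J K ℝ => p.1 * p.2) :=
    Continuous.matrix_mul continuous_fst continuous_snd
  exact (hcont.tendsto (F, G)).comp (hf.prodMk_nhds hg)

lemma ttrans {f : α → Matrix I J ℝ} {F : Matrix I J ℝ} (hf : Tendsto f l (𝓝 F)) :
    Tendsto (fun x => (f x)ᵀ) l (𝓝 Fᵀ) :=
  ((Continuous.matrix_transpose continuous_id).tendsto F).comp hf

end Tendsto

section Sandwich

variable {I J : Type*} [Fintype I] [Fintype J] [DecidableEq I]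

lemma smul_sandwich (c : ℝ) (hc : c ≠ 0) (X : Matrix I J ℝ) (A : Matrix I I ℝ)
    (Y : Matrix I J ℝ) :
    c • (Xᵀ * A⁻¹ * Y) = (c • X)ᵀ * (c • A)⁻¹ * (c • Y) := by
  simp only [Matrix.transpose_smul, matrix_smul_inv c hc, Matrix.smul_mul, Matrix.mul_smul,
    smul_smul]
  congr 1
  field_simp

end Sandwich

section SLLNApp

variable {Ω : Type*} [MeasurableSpace Ω] {Pr : Measure Ω} [IsProbabilityMeasure Pr] {q : ℕ}

/-- SLLN for products of coordinates of an iid sequence. -/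
lemma eps_prod_slln (ε : ℕ → Ω → Fin q → ℝ) (hmeas : ∀ i, Measurable (ε i))
    (hindep : iIndepFun ε Pr)
    (hident : ∀ i, IdentDistrib (ε i) (ε 1) Pr Pr)
    (hcov_int : ∀ i a b, Integrable (fun ω => ε i ω a * ε i ω b) Pr) (a b : Fin q) :
    ∀ᵐ ω ∂Pr, Tendsto (fun N : ℕ => (N : ℝ)⁻¹ * ∑ i ∈ Finset.Icc 1 N, ε i ω a * ε i ω b)
      atTop (𝓝 (∫ ω, ε 1 ω a * ε 1 ω b ∂Pr)) := by
  set g : (Fin q → ℝ) → ℝ := fun x => x a * x b with hg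
  have hgm : Measurable g := (measurable_pi_apply a).mul (measurable_pi_apply b)
  set X : ℕ → Ω → ℝ := fun i ω => ε (i + 1) ω a * ε (i + 1) ω b with hX
  have h0 : X 0 = fun ω => ε 1 ω a * ε 1 ω b := rfl
  have hint : Integrable (X 0) Pr := hcov_int 1 a b
  have hpind : Pairwise (Function.onFun (IndepFun · · Pr) X) := by
    intro i j hij
    have : IndepFun (ε (i + 1)) (ε (j + 1)) Pr := hindep.indepFun (by omega)
    exact this.comp hgm hgm
  have hpid : ∀ i, IdentDistrib (X i) (X 0) Pr Pr := by
    intro i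
    have h1 : IdentDistrib (ε (i + 1)) (ε 1) Pr Pr := hident (i + 1)
    exact h1.comp hgm
  have := strong_law_ae_real X hint hpind hpid
  filter_upwards [this] with ω hω
  have heq : ∀ N : ℕ, (N : ℝ)⁻¹ * ∑ i ∈ Finset.Icc 1 N, ε i ω a * ε i ω b
      = (∑ i ∈ Finset.range N, X i ω) / N := by
    intro N
    rw [sum_Icc_one (fun i => ε i ω a * ε i ω b) N, div_eq_inv_mul]
  rw [h0] at hω
  exact hω.congr (fun N => (heq N).symm) |>.congr (fun N => rfl)

/-- Weighted SLLN for a fixed coordinate of an independent mean-zero noise sequence. -/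
lemma weighted_eps_slln (ε : ℕ → Ω → Fin q → ℝ) (hmeas : ∀ i, Measurable (ε i))
    (hindep : iIndepFun ε Pr)
    (hcov_int : ∀ i b, Integrable (fun ω => ε i ω b * ε i ω b) Pr)
    (σ2 : ℝ) (hvar : ∀ i b, ∫ ω, ε i ω b * ε i ω b ∂Pr = σ2)
    (hmean : ∀ i b, ∫ ω, ε i ω b ∂Pr = 0)
    (w : ℕ → ℝ) (b : Fin q) (C : ℝ)
    (hC : ∀ N : ℕ, ∑ i ∈ Finset.Icc 1 N, w i ^ 2 ≤ C * N) :
    ∀ᵐ ω ∂Pr, Tendsto (fun N : ℕ => (N : ℝ)⁻¹ * ∑ i ∈ Finset.Icc 1 N, w i * ε i ω b)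
      atTop (𝓝 0) := by
  have hσ2 : 0 ≤ σ2 := by
    rw [← hvar 1 b]
    exact integral_nonneg fun ω => mul_self_nonneg _
  set X : ℕ → Ω → ℝ := fun i ω => w (i + 1) * ε (i + 1) ω b with hX
  have hXmeas : ∀ i, Measurable (X i) :=
    fun i => ((measurable_pi_apply b).comp (hmeas (i + 1))).const_mul _
  have hXindep : iIndepFun X Pr := by
    have h1 := iIndepFun_shift hindep 1
    exact h1.comp (fun i (x : Fin q → ℝ) => w (i + 1) * x b)
      (fun i => (measurable_pi_apply b).const_mul _)
  have hXsqeq : ∀ i, (fun ω => X i ω ^ 2)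
      = fun ω => w (i + 1) ^ 2 * (ε (i + 1) ω b * ε (i + 1) ω b) := by
    intro i; funext ω; simp only [hX]; ring
  have hXsq : ∀ i, Integrable (fun ω => X i ω ^ 2) Pr := by
    intro i
    rw [hXsqeq i]
    exact (hcov_int (i + 1) b).const_mul _
  have hXmean : ∀ i, ∫ ω, X i ω ∂Pr = 0 := by
    intro i
    simp only [hX]
    rw [integral_const_mul _ _, hmean (i + 1) b, mul_zero]
  have hXC : ∀ n : ℕ, ∑ i ∈ Finset.range n, ∫ ω, X i ω ^ 2 ∂Pr ≤ (C * σ2) * n := by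
    intro n
    have he : ∀ i, ∫ ω, X i ω ^ 2 ∂Pr = w (i + 1) ^ 2 * σ2 := by
      intro i
      rw [hXsqeq i, integral_const_mul _ _, hvar (i + 1) b]
    calc ∑ i ∈ Finset.range n, ∫ ω, X i ω ^ 2 ∂Pr
        = (∑ i ∈ Finset.range n, w (i + 1) ^ 2) * σ2 := by
          rw [Finset.sum_mul]
          exact Finset.sum_congr rfl fun i _ => he i
      _ = (∑ i ∈ Finset.Icc 1 n, w i ^ 2) * σ2 := by
          rw [sum_Icc_one (fun i => w i ^ 2) n]
      _ ≤ (C * n) * σ2 := mul_le_mul_of_nonneg_right (hC n) hσ2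
      _ = (C * σ2) * n := by ring
  have := wslln X hXmeas hXindep hXsq hXmean (C * σ2) hXC
  filter_upwards [this] with ω hω
  have heq : ∀ N : ℕ, (N : ℝ)⁻¹ * ∑ i ∈ Finset.Icc 1 N, w i * ε i ω b
      = (N : ℝ)⁻¹ * ∑ i ∈ Finset.range N, X i ω := by
    intro N
    rw [sum_Icc_one (fun i => w i * ε i ω b) N]
  exact hω.congr fun N => (heq N).symm

end SLLNApp


section Entries

variable {q r : ℕ}

lemma entry_helper (P : Matrix (Fin q) (Fin r) ℝ) (x : ℕ → Fin q → ℝ) (y : ℕ → Fin q → ℝ)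
    (N : ℕ) (a : Fin r) (b : Fin q) :
    (Pᵀ * ∑ i ∈ Finset.Icc 1 N, Matrix.vecMulVec (x i) (y i)) a b
      = ∑ i ∈ Finset.Icc 1 N, (∑ c, P c a * x i c) * y i b := by
  simp only [Matrix.mul_apply, Matrix.sum_apply, Matrix.transpose_apply,
    Matrix.vecMulVec_apply, Finset.mul_sum, Finset.sum_mul]
  rw [Finset.sum_comm]
  exact Finset.sum_congr rfl fun i _ => Finset.sum_congr rfl fun c _ => by ring

lemma entry_helper2 (P : Matrix (Fin q) (Fin r) ℝ) (x : ℕ → Fin q → ℝ) (N : ℕ) (a : Fin r) :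
    (Pᵀ * (∑ i ∈ Finset.Icc 1 N, Matrix.vecMulVec (x i) (x i)) * P) a a
      = ∑ i ∈ Finset.Icc 1 N, (∑ c, P c a * x i c) ^ 2 := by
  rw [Matrix.mul_apply]
  simp only [entry_helper, Finset.sum_mul]
  rw [Finset.sum_comm]
  refine Finset.sum_congr rfl fun i _ => ?_
  rw [sq, Finset.sum_mul_sum]
  exact Finset.sum_congr rfl fun d _ => Finset.sum_congr rfl fun c _ => by ring

end Entries

end S13

/-- In the row-and-column constrained errors-in-variables model
(Section 5) with Assumptions 1 and 5, almost surely
`m⁻¹ P̃ᵀGP̃ → T̄ + σ² I` as `m → ∞`, where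
`G = C₂₂ᵀC₂₂ − C₂₂ᵀC₂₁(C₂₁ᵀC₂₁)⁻¹C₂₁ᵀC₂₂`, `C₂₁ = C̄₂₁` and `C₂₂ = C̄₂₂ + E`. -/
theorem statement13
    {Ω : Type*} [MeasurableSpace Ω] (Pr : Measure Ω) [IsProbabilityMeasure Pr]
    (n l k j : ℕ) (hl : 1 ≤ l) (hk : k ≤ n) (hj : j ≤ n - k) (σ : ℝ) (hσ : 0 < σ)
    -- the fixed full-row-rank matrix C̄₁₂ and the orthonormal-column matrix P̃
    (C12b : Matrix (Fin j) (Fin (n + l - k)) ℝ) (hC12rank : C12b.rank = j)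
    (Pt : Matrix (Fin (n + l - k)) (Fin (n + l - k - j)) ℝ)
    (hPt1 : Ptᵀ * Pt = 1) (hPt2 : C12b * Pt = 0)
    -- deterministic rows of C̄₂₁ and C̄₂₂
    (u : ℕ → Fin k → ℝ) (v : ℕ → Fin (n + l - k) → ℝ)
    -- Assumption 1 (noise)
    (ε : ℕ → Ω → Fin (n + l - k) → ℝ)
    (hmeas : ∀ i, Measurable (ε i))
    (hindep : iIndepFun ε Pr)
    (hident : ∀ i, IdentDistrib (ε i) (ε 1) Pr Pr)
    (hmean : ∀ i c, ∫ ω, ε i ω c ∂Pr = 0)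
    (hcov_int : ∀ i a b, Integrable (fun ω => ε i ω a * ε i ω b) Pr)
    (hcov : ∀ i a b, ∫ ω, ε i ω a * ε i ω b ∂Pr = if a = b then σ ^ 2 else 0)
    -- Assumption 5
    (L11 : Matrix (Fin k) (Fin k) ℝ) (L12 : Matrix (Fin k) (Fin (n + l - k)) ℝ)
    (hL11 : Tendsto (fun m : ℕ => (m : ℝ)⁻¹ • ∑ i ∈ Finset.Icc 1 (m - j),
      Matrix.vecMulVec (u i) (u i)) atTop (𝓝 L11))
    (hL12 : Tendsto (fun m : ℕ => (m : ℝ)⁻¹ • ∑ i ∈ Finset.Icc 1 (m - j),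
      Matrix.vecMulVec (u i) (v i)) atTop (𝓝 L12))
    (hL11pos : L11.PosDef)
    (Tb : Matrix (Fin (n + l - k - j)) (Fin (n + l - k - j)) ℝ)
    (hTb : Tendsto (fun m : ℕ => (m : ℝ)⁻¹ •
      (Ptᵀ * schurGram k (n + l - k) u v (m - j) * Pt)) atTop (𝓝 Tb))
    (hTbrank : Tb.rank = n - j - k) :
    ∀ᵐ ω ∂Pr, Tendsto (fun m : ℕ => (m : ℝ)⁻¹ •
      (Ptᵀ * schurGram k (n + l - k) u (fun i => v i + ε i ω) (m - j) * Pt)) atTop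
      (𝓝 (Tb + σ ^ 2 • (1 : Matrix (Fin (n + l - k - j)) (Fin (n + l - k - j)) ℝ))) := by
  classical
  -- deterministic N-scaled limits
  have hA : Tendsto (fun N : ℕ => (N : ℝ)⁻¹ • ∑ i ∈ Finset.Icc 1 N,
      Matrix.vecMulVec (u i) (u i)) atTop (𝓝 L11) := S13.tendsto_unshift _ L11 j hL11
  have hB : Tendsto (fun N : ℕ => (N : ℝ)⁻¹ • ∑ i ∈ Finset.Icc 1 N,
      Matrix.vecMulVec (u i) (v i)) atTop (𝓝 L12) := S13.tendsto_unshift _ L12 j hL12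
  have hG : Tendsto (fun N : ℕ => (N : ℝ)⁻¹ • (Ptᵀ * schurGram k (n + l - k) u v N * Pt))
      atTop (𝓝 Tb) := S13.tendsto_unshift _ Tb j hTb
  have hdet : IsUnit L11.det := isUnit_iff_ne_zero.mpr (ne_of_gt hL11pos.det_pos)
  have hAinv : Tendsto (fun N : ℕ => (((N : ℝ)⁻¹ • ∑ i ∈ Finset.Icc 1 N,
      Matrix.vecMulVec (u i) (u i)))⁻¹) atTop (𝓝 L11⁻¹) :=
    S13.tendsto_matrix_inv _ L11 hdet hA
  -- generalized limit of the correction term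
  have hQgen : ∀ D : ℕ → Matrix (Fin k) (Fin (n + l - k)) ℝ,
      Tendsto (fun N : ℕ => (N : ℝ)⁻¹ • D N) atTop (𝓝 L12) →
      Tendsto (fun N : ℕ => (N : ℝ)⁻¹ • (Ptᵀ * ((D N)ᵀ *
        (∑ i ∈ Finset.Icc 1 N, Matrix.vecMulVec (u i) (u i))⁻¹ * D N) * Pt)) atTop
        (𝓝 (Ptᵀ * (L12ᵀ * L11⁻¹ * L12) * Pt)) := by
    intro D hD
    have h1 : Tendsto (fun N : ℕ => Ptᵀ * (((N : ℝ)⁻¹ • D N)ᵀ *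
        (((N : ℝ)⁻¹ • ∑ i ∈ Finset.Icc 1 N, Matrix.vecMulVec (u i) (u i)))⁻¹ *
        ((N : ℝ)⁻¹ • D N)) * Pt) atTop (𝓝 (Ptᵀ * (L12ᵀ * L11⁻¹ * L12) * Pt)) :=
      S13.tmul (S13.tmul tendsto_const_nhds
        (S13.tmul (S13.tmul (S13.ttrans hD) hAinv) hD)) tendsto_const_nhds
    apply Tendsto.congr' _ h1
    filter_upwards [eventually_ge_atTop 1] with N hN
    have hN0 : ((N : ℝ))⁻¹ ≠ 0 := inv_ne_zero (Nat.cast_ne_zero.mpr (by omega))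
    rw [← S13.smul_sandwich _ hN0, Matrix.mul_smul, Matrix.smul_mul]
  have hQ1 := hQgen _ hB
  -- limit of the sandwiched Svv
  have hVid : ∀ N : ℕ, Ptᵀ * (∑ i ∈ Finset.Icc 1 N, Matrix.vecMulVec (v i) (v i)) * Pt
      = Ptᵀ * schurGram k (n + l - k) u v N * Pt
        + Ptᵀ * ((∑ i ∈ Finset.Icc 1 N, Matrix.vecMulVec (u i) (v i))ᵀ
            * (∑ i ∈ Finset.Icc 1 N, Matrix.vecMulVec (u i) (u i))⁻¹
            * (∑ i ∈ Finset.Icc 1 N, Matrix.vecMulVec (u i) (v i))) * Pt := by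
    intro N
    rw [schurGram, Matrix.mul_sub, Matrix.sub_mul]
    abel
  have hVlim : Tendsto (fun N : ℕ => (N : ℝ)⁻¹ •
      (Ptᵀ * (∑ i ∈ Finset.Icc 1 N, Matrix.vecMulVec (v i) (v i)) * Pt)) atTop
      (𝓝 (Tb + Ptᵀ * (L12ᵀ * L11⁻¹ * L12) * Pt)) := by
    refine (hG.add hQ1).congr fun N => ?_
    rw [hVid N, smul_add]
  -- weight bounds
  have hW1 : ∀ a : Fin k, ∃ C : ℝ, ∀ N : ℕ,
      ∑ i ∈ Finset.Icc 1 N, u i a ^ 2 ≤ C * N := by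
    intro a
    have h1 := tendsto_pi_nhds.mp (tendsto_pi_nhds.mp hA a) a
    refine S13.linear_bound _ ?_ (L11 a a) ?_
    · rw [Finset.Icc_eq_empty (by omega), Finset.sum_empty]
    · refine h1.congr fun N => ?_
      simp only [Matrix.smul_apply, smul_eq_mul, Matrix.sum_apply,
        Matrix.vecMulVec_apply, ← sq]
  have hW2 : ∀ a : Fin (n + l - k - j), ∃ C : ℝ, ∀ N : ℕ,
      ∑ i ∈ Finset.Icc 1 N, (∑ c, Pt c a * v i c) ^ 2 ≤ C * N := by
    intro a
    have h1 := tendsto_pi_nhds.mp (tendsto_pi_nhds.mp hVlim a) a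
    refine S13.linear_bound _ ?_ ((Tb + Ptᵀ * (L12ᵀ * L11⁻¹ * L12) * Pt) a a) ?_
    · rw [Finset.Icc_eq_empty (by omega), Finset.sum_empty]
    · refine h1.congr fun N => ?_
      simp only [Matrix.smul_apply, smul_eq_mul]
      rw [S13.entry_helper2]
  -- almost sure events
  have hvar' : ∀ (i : ℕ) (b : Fin (n + l - k)), ∫ ω, ε i ω b * ε i ω b ∂Pr = σ ^ 2 := by
    intro i b
    simpa using hcov i b b
  have hE1 : ∀ᵐ ω ∂Pr, ∀ a b : Fin (n + l - k),
      Tendsto (fun N : ℕ => (N : ℝ)⁻¹ * ∑ i ∈ Finset.Icc 1 N, ε i ω a * ε i ω b) atTop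
        (𝓝 (if a = b then σ ^ 2 else 0)) := by
    rw [ae_all_iff]
    intro a
    rw [ae_all_iff]
    intro b
    have h1 := S13.eps_prod_slln ε hmeas hindep hident hcov_int a b
    rw [hcov 1 a b] at h1
    exact h1
  have hE2 : ∀ᵐ ω ∂Pr, ∀ (a : Fin k) (b : Fin (n + l - k)),
      Tendsto (fun N : ℕ => (N : ℝ)⁻¹ * ∑ i ∈ Finset.Icc 1 N, u i a * ε i ω b) atTop
        (𝓝 0) := by
    rw [ae_all_iff]
    intro a
    rw [ae_all_iff]
    intro b
    obtain ⟨C, hC⟩ := hW1 a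
    exact S13.weighted_eps_slln ε hmeas hindep (fun i b => hcov_int i b b) (σ ^ 2) hvar'
      (fun i b => hmean i b) (fun i => u i a) b C hC
  have hE3 : ∀ᵐ ω ∂Pr, ∀ (a : Fin (n + l - k - j)) (b : Fin (n + l - k)),
      Tendsto (fun N : ℕ => (N : ℝ)⁻¹ *
        ∑ i ∈ Finset.Icc 1 N, (∑ c, Pt c a * v i c) * ε i ω b) atTop (𝓝 0) := by
    rw [ae_all_iff]
    intro a
    rw [ae_all_iff]
    intro b
    obtain ⟨C, hC⟩ := hW2 a
    exact S13.weighted_eps_slln ε hmeas hindep (fun i b => hcov_int i b b) (σ ^ 2) hvar'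
      (fun i b => hmean i b) (fun i => ∑ c, Pt c a * v i c) b C hC
  filter_upwards [hE1, hE2, hE3] with ω h1 h2 h3
  -- matrix-level ω-limits
  have hSee : Tendsto (fun N : ℕ => (N : ℝ)⁻¹ • ∑ i ∈ Finset.Icc 1 N,
      Matrix.vecMulVec (ε i ω) (ε i ω)) atTop
      (𝓝 (σ ^ 2 • (1 : Matrix (Fin (n + l - k)) (Fin (n + l - k)) ℝ))) := by
    refine tendsto_pi_nhds.mpr ?_
    intro a
    refine tendsto_pi_nhds.mpr ?_
    intro b
    have hv := h1 a b
    have hlim : (σ ^ 2 • (1 : Matrix (Fin (n + l - k)) (Fin (n + l - k)) ℝ)) a b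
        = if a = b then σ ^ 2 else 0 := by
      simp [Matrix.smul_apply, Matrix.one_apply, mul_ite]
    rw [hlim]
    refine hv.congr fun N => ?_
    simp only [Matrix.smul_apply, Matrix.sum_apply, Matrix.vecMulVec_apply, smul_eq_mul]
  have hBue : Tendsto (fun N : ℕ => (N : ℝ)⁻¹ • ∑ i ∈ Finset.Icc 1 N,
      Matrix.vecMulVec (u i) (ε i ω)) atTop
      (𝓝 (0 : Matrix (Fin k) (Fin (n + l - k)) ℝ)) := by
    refine tendsto_pi_nhds.mpr ?_
    intro a
    refine tendsto_pi_nhds.mpr ?_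
    intro b
    have hv := h2 a b
    have hlim : (0 : Matrix (Fin k) (Fin (n + l - k)) ℝ) a b = 0 := rfl
    rw [hlim]
    refine hv.congr fun N => ?_
    simp only [Matrix.smul_apply, Matrix.sum_apply, Matrix.vecMulVec_apply, smul_eq_mul]
  have hPSve : Tendsto (fun N : ℕ => (N : ℝ)⁻¹ • (Ptᵀ * ∑ i ∈ Finset.Icc 1 N,
      Matrix.vecMulVec (v i) (ε i ω))) atTop
      (𝓝 (0 : Matrix (Fin (n + l - k - j)) (Fin (n + l - k)) ℝ)) := by
    refine tendsto_pi_nhds.mpr ?_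
    intro a
    refine tendsto_pi_nhds.mpr ?_
    intro b
    have hv := h3 a b
    have hlim : (0 : Matrix (Fin (n + l - k - j)) (Fin (n + l - k)) ℝ) a b = 0 := rfl
    rw [hlim]
    refine hv.congr fun N => ?_
    simp only [Matrix.smul_apply, smul_eq_mul]
    rw [S13.entry_helper]
  -- combined limits
  have hBsum : Tendsto (fun N : ℕ => (N : ℝ)⁻¹ •
      (∑ i ∈ Finset.Icc 1 N, Matrix.vecMulVec (u i) (v i)
        + ∑ i ∈ Finset.Icc 1 N, Matrix.vecMulVec (u i) (ε i ω))) atTop (𝓝 L12) := by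
    have h4 := hB.add hBue
    rw [add_zero] at h4
    refine h4.congr fun N => ?_
    rw [smul_add]
  have hQ2 := hQgen _ hBsum
  -- algebraic identities
  have hsum1 : ∀ N : ℕ, ∑ i ∈ Finset.Icc 1 N, Matrix.vecMulVec (v i + ε i ω) (v i + ε i ω)
      = ∑ i ∈ Finset.Icc 1 N, Matrix.vecMulVec (v i) (v i)
        + (∑ i ∈ Finset.Icc 1 N, Matrix.vecMulVec (v i) (ε i ω)
           + (∑ i ∈ Finset.Icc 1 N, Matrix.vecMulVec (v i) (ε i ω))ᵀ
           + ∑ i ∈ Finset.Icc 1 N, Matrix.vecMulVec (ε i ω) (ε i ω)) := by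
    intro N
    ext a b
    simp only [Matrix.add_apply, Matrix.sum_apply, Matrix.transpose_apply,
      Matrix.vecMulVec_apply, Pi.add_apply]
    rw [← Finset.sum_add_distrib, ← Finset.sum_add_distrib, ← Finset.sum_add_distrib]
    exact Finset.sum_congr rfl fun i _ => by ring
  have hsum2 : ∀ N : ℕ, ∑ i ∈ Finset.Icc 1 N, Matrix.vecMulVec (u i) (v i + ε i ω)
      = ∑ i ∈ Finset.Icc 1 N, Matrix.vecMulVec (u i) (v i)
        + ∑ i ∈ Finset.Icc 1 N, Matrix.vecMulVec (u i) (ε i ω) := by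
    intro N
    ext a b
    simp only [Matrix.add_apply, Matrix.sum_apply, Matrix.vecMulVec_apply, Pi.add_apply]
    rw [← Finset.sum_add_distrib]
    exact Finset.sum_congr rfl fun i _ => by ring
  have hkey : ∀ N : ℕ, Ptᵀ * schurGram k (n + l - k) u (fun i => v i + ε i ω) N * Pt
      = Ptᵀ * schurGram k (n + l - k) u v N * Pt
        + ((Ptᵀ * ∑ i ∈ Finset.Icc 1 N, Matrix.vecMulVec (v i) (ε i ω)) * Pt
           + ((Ptᵀ * ∑ i ∈ Finset.Icc 1 N, Matrix.vecMulVec (v i) (ε i ω)) * Pt)ᵀ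
           + Ptᵀ * (∑ i ∈ Finset.Icc 1 N, Matrix.vecMulVec (ε i ω) (ε i ω)) * Pt)
        - (Ptᵀ * ((∑ i ∈ Finset.Icc 1 N, Matrix.vecMulVec (u i) (v i)
              + ∑ i ∈ Finset.Icc 1 N, Matrix.vecMulVec (u i) (ε i ω))ᵀ
            * (∑ i ∈ Finset.Icc 1 N, Matrix.vecMulVec (u i) (u i))⁻¹
            * (∑ i ∈ Finset.Icc 1 N, Matrix.vecMulVec (u i) (v i)
              + ∑ i ∈ Finset.Icc 1 N, Matrix.vecMulVec (u i) (ε i ω))) * Pt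
           - Ptᵀ * ((∑ i ∈ Finset.Icc 1 N, Matrix.vecMulVec (u i) (v i))ᵀ
            * (∑ i ∈ Finset.Icc 1 N, Matrix.vecMulVec (u i) (u i))⁻¹
            * (∑ i ∈ Finset.Icc 1 N, Matrix.vecMulVec (u i) (v i))) * Pt) := by
    intro N
    simp only [schurGram]
    rw [hsum1 N, hsum2 N]
    simp only [Matrix.sub_mul, Matrix.mul_sub, Matrix.add_mul, Matrix.mul_add,
      Matrix.transpose_mul, Matrix.transpose_transpose, Matrix.mul_assoc]
    abel
  -- tendsto of the pieces
  have ht2 : Tendsto (fun N : ℕ => (N : ℝ)⁻¹ • ((Ptᵀ * ∑ i ∈ Finset.Icc 1 N,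
      Matrix.vecMulVec (v i) (ε i ω)) * Pt)) atTop (𝓝 0) := by
    have h4 := S13.tmul hPSve (tendsto_const_nhds (x := Pt))
    rw [Matrix.zero_mul] at h4
    refine h4.congr fun N => ?_
    rw [Matrix.smul_mul]
  have ht3 : Tendsto (fun N : ℕ => (N : ℝ)⁻¹ • ((Ptᵀ * ∑ i ∈ Finset.Icc 1 N,
      Matrix.vecMulVec (v i) (ε i ω)) * Pt)ᵀ) atTop (𝓝 0) := by
    have h4 := S13.ttrans ht2
    rw [Matrix.transpose_zero] at h4
    refine h4.congr fun N => ?_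
    rw [Matrix.transpose_smul]
  have ht4 : Tendsto (fun N : ℕ => (N : ℝ)⁻¹ • (Ptᵀ * (∑ i ∈ Finset.Icc 1 N,
      Matrix.vecMulVec (ε i ω) (ε i ω)) * Pt)) atTop
      (𝓝 (σ ^ 2 • (1 : Matrix (Fin (n + l - k - j)) (Fin (n + l - k - j)) ℝ))) := by
    have h4 := S13.tmul (S13.tmul (tendsto_const_nhds (x := Ptᵀ)) hSee)
      (tendsto_const_nhds (x := Pt))
    have hlim : Ptᵀ * (σ ^ 2 • (1 : Matrix (Fin (n + l - k)) (Fin (n + l - k)) ℝ)) * Pt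
        = σ ^ 2 • (1 : Matrix (Fin (n + l - k - j)) (Fin (n + l - k - j)) ℝ) := by
      rw [Matrix.mul_smul, Matrix.smul_mul, Matrix.mul_one, hPt1]
    rw [hlim] at h4
    refine h4.congr fun N => ?_
    rw [Matrix.mul_smul, Matrix.smul_mul]
  -- final assembly
  have hfin := (hG.add ((ht2.add ht3).add ht4)).sub (hQ2.sub hQ1)
  have hval : (Tb + ((0 + 0) + σ ^ 2 • (1 : Matrix (Fin (n + l - k - j))
        (Fin (n + l - k - j)) ℝ)))
      - (Ptᵀ * (L12ᵀ * L11⁻¹ * L12) * Pt - Ptᵀ * (L12ᵀ * L11⁻¹ * L12) * Pt)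
      = Tb + σ ^ 2 • (1 : Matrix (Fin (n + l - k - j)) (Fin (n + l - k - j)) ℝ) := by
    simp
  rw [hval] at hfin
  apply S13.tendsto_shift
    (fun N => Ptᵀ * schurGram k (n + l - k) u (fun i => v i + ε i ω) N * Pt) _ j
  refine hfin.congr fun N => ?_
  rw [hkey N, smul_sub, smul_add, smul_add, smul_add, smul_sub]
end

section
/- Let (u_i)_{i≥1} be a sequence in ℝ^k and (v_i)_{i≥1} a sequence in ℝ^{q} such that m⁻¹ ∑_{i=1}^m ‖u_i‖² and m⁻¹ ∑_{i=1}^m ‖v_i‖² are bounded in m. Let (ε_i)_{i≥1} be i.i.d. random vectors in ℝ^{q} with mean zero and finite componentwise variances, and for each m let C̄₂₁ ∈ ℝ^{m×k}, C̄₂₂ ∈ ℝ^{m×q}, E ∈ ℝ^{m×q} be the matrices with rows u_1,…,u_m, v_1,…,v_m, ε_1,…,ε_m respectively. Then almost surely m⁻¹ C̄₂₁ᵀE → 0 and m⁻¹ C̄₂₂ᵀE → 0 as m → ∞. -/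
open MeasureTheory ProbabilityTheory Filter Matrix
open scoped Topology ENNReal

lemma st18_ae_tendsto {Ω : Type*} [MeasurableSpace Ω] (Pr : Measure Ω)
    (f : ℕ → Ω → ℝ) (hint : ∀ n, Integrable (f n) Pr) (hnn : ∀ n ω, 0 ≤ f n ω)
    (hsum : Summable fun n => ∫ ω, f n ω ∂Pr) :
    ∀ᵐ ω ∂Pr, Tendsto (fun n => f n ω) atTop (𝓝 0) := by
  have h1 : ∀ n, ∫⁻ ω, ENNReal.ofReal (f n ω) ∂Pr = ENNReal.ofReal (∫ ω, f n ω ∂Pr) :=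
    fun n => (ofReal_integral_eq_lintegral_ofReal (hint n) (ae_of_all _ (hnn n))).symm
  have hmeas : ∀ n, AEMeasurable (fun ω => ENNReal.ofReal (f n ω)) Pr :=
    fun n => ENNReal.measurable_ofReal.comp_aemeasurable (hint n).aemeasurable
  have h2 : ∫⁻ ω, ∑' n, ENNReal.ofReal (f n ω) ∂Pr ≠ ∞ := by
    rw [lintegral_tsum hmeas]
    simp_rw [h1]
    rw [← ENNReal.ofReal_tsum_of_nonneg (fun n => integral_nonneg (hnn n)) hsum]
    exact ENNReal.ofReal_ne_top
  have h3 : ∀ᵐ ω ∂Pr, ∑' n, ENNReal.ofReal (f n ω) ≠ ∞ :=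
    (ae_lt_top' (AEMeasurable.ennreal_tsum hmeas) h2).mono fun ω h => h.ne
  filter_upwards [h3] with ω hω
  have hs : Summable fun n => (ENNReal.ofReal (f n ω)).toReal := ENNReal.summable_toReal hω
  have : (fun n => (ENNReal.ofReal (f n ω)).toReal) = fun n => f n ω := by
    ext n; exact ENNReal.toReal_ofReal (hnn n ω)
  rw [this] at hs
  exact hs.tendsto_atTop_zero

lemma st18_sum_inv_sq (N : ℕ) : ∑ n ∈ Finset.Icc 1 N, ((n : ℝ) ^ 2)⁻¹ ≤ 2 := by
  have key : ∀ N : ℕ, ∑ n ∈ Finset.Icc 1 N, ((n : ℝ) ^ 2)⁻¹ ≤ 2 - (N : ℝ)⁻¹ := by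
    intro N
    induction N with
    | zero => simp
    | succ N ih =>
      rw [Finset.sum_Icc_succ_top (Nat.le_add_left 1 N)]
      rcases Nat.eq_zero_or_pos N with rfl | hN
      · norm_num
      have hN' : (1 : ℝ) ≤ (N : ℝ) := by exact_mod_cast hN
      have h1 : ((N : ℝ) + 1) ≠ 0 := by positivity
      have h2 : (N : ℝ) ≠ 0 := by positivity
      have : (((N : ℕ) + 1 : ℕ) : ℝ) = (N : ℝ) + 1 := by push_cast; ring
      rw [this]
      have : (((N : ℝ) + 1) ^ 2)⁻¹ ≤ (N : ℝ)⁻¹ - ((N : ℝ) + 1)⁻¹ := by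
        rw [inv_eq_one_div, inv_eq_one_div, inv_eq_one_div, div_sub_div _ _ h2 h1,
          div_le_div_iff₀ (by positivity) (by positivity)]
        nlinarith
      linarith
  calc ∑ n ∈ Finset.Icc 1 N, ((n : ℝ) ^ 2)⁻¹ ≤ 2 - (N : ℝ)⁻¹ := key N
    _ ≤ 2 := by have : (0:ℝ) ≤ (N:ℝ)⁻¹ := by positivity
                linarith

lemma st18_abel (Q d : ℕ → ℝ) (N : ℕ) :
    ∑ n ∈ Finset.Icc 1 N, (Q (n + 1) - Q n) * d n
      = Q (N + 1) * d (N + 1) - Q 1 * d 1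
        + ∑ n ∈ Finset.Icc 1 N, Q (n + 1) * (d n - d (n + 1)) := by
  induction N with
  | zero => simp
  | succ N ih =>
    rw [Finset.sum_Icc_succ_top (Nat.le_add_left 1 N),
      Finset.sum_Icc_succ_top (Nat.le_add_left 1 N), ih]
    ring

lemma st18_summable (P : ℕ → ℝ) (B : ℝ) (hB : 0 ≤ B) (hnn : ∀ m, 0 ≤ P m)
    (hmono : Monotone P) (hPB : ∀ m, P m ≤ B * m) :
    Summable (fun n : ℕ => (P ((n + 1) ^ 2) - P (n ^ 2)) * (3 * ((n : ℝ) ^ 3)⁻¹)) := by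
  set t : ℕ → ℝ := fun n => (P ((n + 1) ^ 2) - P (n ^ 2)) * (3 * ((n : ℝ) ^ 3)⁻¹) with ht
  have htnn : ∀ n, 0 ≤ t n := by
    intro n
    apply mul_nonneg
    · exact sub_nonneg.mpr (hmono (Nat.pow_le_pow_left (Nat.le_succ n) 2))
    · positivity
  apply summable_of_sum_range_le htnn (c := 171 * B)
  intro N
  have hsub : Finset.range N ⊆ Finset.Icc 0 N := by
    intro n hn; simp at hn ⊢; omega
  have h0 : ∑ n ∈ Finset.range N, t n ≤ ∑ n ∈ Finset.Icc 0 N, t n :=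
    Finset.sum_le_sum_of_subset_of_nonneg hsub (fun n _ _ => htnn n)
  have hins : Finset.Icc 0 N = Finset.cons 0 (Finset.Ioc 0 N) (by simp) :=
    Finset.Icc_eq_cons_Ioc (Nat.zero_le N)
  have ht0 : t 0 = 0 := by simp [ht]
  have h1 : ∑ n ∈ Finset.Icc 0 N, t n = ∑ n ∈ Finset.Icc 1 N, t n := by
    rw [hins, Finset.sum_cons, ht0, zero_add, ← Finset.Icc_add_one_left_eq_Ioc, zero_add]
  -- Abel
  have habel := st18_abel (fun n => P (n ^ 2)) (fun n => 3 * ((n : ℝ) ^ 3)⁻¹) N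
  have hy : (1 : ℝ) ≤ (N : ℝ) + 1 := by have := Nat.cast_nonneg (α := ℝ) N; linarith
  have hboundary : P ((N + 1) ^ 2) * (3 * (((N : ℝ) + 1) ^ 3)⁻¹) ≤ 3 * B := by
    set y : ℝ := (N : ℝ) + 1 with hyy
    have hy0 : (0 : ℝ) < y := by positivity
    have hP : P ((N + 1) ^ 2) ≤ B * y ^ 2 := by
      have := hPB ((N + 1) ^ 2)
      have hc : (((N + 1) ^ 2 : ℕ) : ℝ) = y ^ 2 := by push_cast [hyy]; ring
      linarith [hc ▸ this]
    calc P ((N + 1) ^ 2) * (3 * (y ^ 3)⁻¹) ≤ B * y ^ 2 * (3 * (y ^ 3)⁻¹) := by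
          apply mul_le_mul_of_nonneg_right hP (by positivity)
      _ = 3 * B / y := by field_simp
      _ ≤ 3 * B := div_le_self (by positivity) hy
  have hterm : ∀ n ∈ Finset.Icc 1 N,
      P ((n + 1) ^ 2) * (3 * ((n : ℝ) ^ 3)⁻¹ - 3 * (((n : ℝ) + 1) ^ 3)⁻¹)
        ≤ 84 * B * ((n : ℝ) ^ 2)⁻¹ := by
    intro n hn
    have hn1 : 1 ≤ n := (Finset.mem_Icc.mp hn).1
    set x : ℝ := (n : ℝ) with hxx
    have hx : (1 : ℝ) ≤ x := by rw [hxx]; exact_mod_cast hn1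
    have hx0 : (0 : ℝ) < x := by linarith
    have hd_le : 3 * (x ^ 3)⁻¹ - 3 * ((x + 1) ^ 3)⁻¹ ≤ 21 * (x ^ 4)⁻¹ := by
      rw [inv_eq_one_div, inv_eq_one_div, inv_eq_one_div, mul_one_div, mul_one_div,
        mul_one_div, div_sub_div _ _ (by positivity) (by positivity),
        div_le_div_iff₀ (by positivity) (by positivity)]
      nlinarith [pow_nonneg hx0.le 3, pow_nonneg hx0.le 4, pow_nonneg hx0.le 5,
        pow_nonneg hx0.le 6]
    have hd_nn : 0 ≤ 3 * (x ^ 3)⁻¹ - 3 * ((x + 1) ^ 3)⁻¹ := by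
      have : ((x + 1) ^ 3)⁻¹ ≤ (x ^ 3)⁻¹ := by
        apply inv_anti₀ (by positivity); nlinarith
      linarith
    have hP : P ((n + 1) ^ 2) ≤ B * (x + 1) ^ 2 := by
      have := hPB ((n + 1) ^ 2)
      have hc : (((n + 1) ^ 2 : ℕ) : ℝ) = (x + 1) ^ 2 := by push_cast [hxx]; ring
      linarith [hc ▸ this]
    calc P ((n + 1) ^ 2) * (3 * (x ^ 3)⁻¹ - 3 * ((x + 1) ^ 3)⁻¹)
        ≤ B * (x + 1) ^ 2 * (21 * (x ^ 4)⁻¹) :=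
          mul_le_mul hP hd_le hd_nn (by positivity)
      _ ≤ B * (4 * x ^ 2) * (21 * (x ^ 4)⁻¹) := by
          apply mul_le_mul_of_nonneg_right _ (by positivity)
          apply mul_le_mul_of_nonneg_left _ hB
          nlinarith
      _ = 84 * B * (x ^ 2)⁻¹ := by field_simp; ring
  have hsum2 : ∑ n ∈ Finset.Icc 1 N, P ((n + 1) ^ 2) * (3 * ((n : ℝ) ^ 3)⁻¹ - 3 * (((n : ℝ) + 1) ^ 3)⁻¹)
      ≤ 84 * B * 2 := by
    calc ∑ n ∈ Finset.Icc 1 N, P ((n + 1) ^ 2) * (3 * ((n : ℝ) ^ 3)⁻¹ - 3 * (((n : ℝ) + 1) ^ 3)⁻¹)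
        ≤ ∑ n ∈ Finset.Icc 1 N, 84 * B * ((n : ℝ) ^ 2)⁻¹ := Finset.sum_le_sum hterm
      _ = 84 * B * ∑ n ∈ Finset.Icc 1 N, ((n : ℝ) ^ 2)⁻¹ := by rw [Finset.mul_sum]
      _ ≤ 84 * B * 2 := by
          apply mul_le_mul_of_nonneg_left (st18_sum_inv_sq N) (by positivity)
  have hq1 : 0 ≤ P (1 ^ 2) * (3 * ((1 : ℝ) ^ 3)⁻¹) := by
    apply mul_nonneg (hnn _); norm_num
  rw [h1] at h0
  refine h0.trans ?_
  push_cast at habel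
  rw [show (∑ n ∈ Finset.Icc 1 N, t n) = ∑ n ∈ Finset.Icc 1 N,
    (P ((n + 1) ^ 2) - P (n ^ 2)) * (3 * ((n : ℝ) ^ 3)⁻¹) from rfl, habel]
  nlinarith [hboundary, hsum2, hq1]

lemma st18_key {Ω : Type*} [MeasurableSpace Ω] (Pr : Measure Ω) [IsProbabilityMeasure Pr]
    (x : ℕ → ℝ) (B : ℝ) (hB : 0 ≤ B)
    (hx : ∀ m : ℕ, 1 ≤ m → ∑ i ∈ Finset.Ioc 0 m, x i ^ 2 ≤ B * m)
    (Y : ℕ → Ω → ℝ)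
    (hY2 : ∀ i, MemLp (Y i) 2 Pr)
    (hmean : ∀ i, ∫ ω, Y i ω ∂Pr = 0)
    (hind : ∀ i j, i ≠ j → IndepFun (Y i) (Y j) Pr)
    (σ2 : ℝ) (hσ : ∀ i, ∫ ω, (Y i ω) ^ 2 ∂Pr = σ2) :
    ∀ᵐ ω ∂Pr,
      Tendsto (fun m : ℕ => (m : ℝ)⁻¹ * ∑ i ∈ Finset.Ioc 0 m, x i * Y i ω) atTop (𝓝 0) := by
  -- basic facts
  have hσnn : 0 ≤ σ2 := (hσ 0) ▸ integral_nonneg fun ω => sq_nonneg _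
  have Yint : ∀ i, Integrable (Y i) Pr := fun i => (hY2 i).integrable one_le_two
  have YYint : ∀ i j, Integrable (fun ω => Y i ω * Y j ω) Pr := by
    intro i j
    rcases eq_or_ne i j with rfl | h
    · have := (hY2 i).integrable_sq
      simpa [pow_two] using this
    · exact (hind i j h).integrable_mul (Yint i) (Yint j)
  -- second moment of weighted sums
  have E2 : ∀ s : Finset ℕ, ∫ ω, (∑ i ∈ s, x i * Y i ω) ^ 2 ∂Pr = σ2 * ∑ i ∈ s, x i ^ 2 := by
    intro s
    have expand : (fun ω => (∑ i ∈ s, x i * Y i ω) ^ 2)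
        = fun ω => ∑ i ∈ s, ∑ j ∈ s, x i * x j * (Y i ω * Y j ω) := by
      funext ω
      rw [pow_two, Finset.sum_mul_sum]
      exact Finset.sum_congr rfl fun i _ => Finset.sum_congr rfl fun j _ => by ring
    rw [expand, integral_finset_sum _
      (fun i _ => integrable_finset_sum _ fun j _ => ((YYint i j).const_mul _))]
    have hinner : ∀ i ∈ s, ∫ ω, ∑ j ∈ s, x i * x j * (Y i ω * Y j ω) ∂Pr = x i ^ 2 * σ2 := by
      intro i hi
      rw [integral_finset_sum _ (fun j _ => ((YYint i j).const_mul _))]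
      have hterm : ∀ j ∈ s, ∫ ω, x i * x j * (Y i ω * Y j ω) ∂Pr
          = if j = i then x i ^ 2 * σ2 else 0 := by
        intro j hj
        rw [integral_const_mul]
        rcases eq_or_ne j i with rfl | hne
        · rw [if_pos rfl]
          have hYY : ∫ ω, Y j ω * Y j ω ∂Pr = σ2 := by
            rw [← hσ j]; congr 1; funext ω; ring
          rw [hYY]; ring
        · rw [if_neg hne]
          have h := (hind i j (Ne.symm hne)).integral_mul_eq_mul_integral (Yint i).1 (Yint j).1
          have h' : ∫ ω, Y i ω * Y j ω ∂Pr = 0 := by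
            have he : (fun ω => Y i ω * Y j ω) = Y i * Y j := rfl
            rw [he, h, hmean i, zero_mul]
          rw [h', mul_zero]
      rw [Finset.sum_congr rfl hterm, Finset.sum_ite_eq' s i fun _ => x i ^ 2 * σ2, if_pos hi]
    rw [Finset.sum_congr rfl hinner, ← Finset.sum_mul, mul_comm]
  -- partial sums of x²
  set P : ℕ → ℝ := fun N => ∑ i ∈ Finset.Ioc 0 N, x i ^ 2 with hPdef
  have hPnn : ∀ m, 0 ≤ P m := fun m => Finset.sum_nonneg fun i _ => sq_nonneg _
  have hPmono : Monotone P := fun a b hab =>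
    Finset.sum_le_sum_of_subset_of_nonneg (Finset.Ioc_subset_Ioc_right hab)
      fun i _ _ => sq_nonneg _
  have hPB : ∀ m, P m ≤ B * m := by
    intro m
    rcases Nat.eq_zero_or_pos m with rfl | hm
    · simp [hPdef]
    · exact (hx m hm).trans (le_of_eq rfl)
  have hT : ∀ n : ℕ, P (n ^ 2) + ∑ i ∈ Finset.Ioc (n ^ 2) ((n + 1) ^ 2), x i ^ 2
      = P ((n + 1) ^ 2) :=
    fun n => Finset.sum_Ioc_consecutive _ (Nat.zero_le _)
      (Nat.pow_le_pow_left (Nat.le_succ n) 2)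
  have hTnn : ∀ n : ℕ, 0 ≤ P ((n + 1) ^ 2) - P (n ^ 2) :=
    fun n => sub_nonneg.mpr (hPmono (Nat.pow_le_pow_left (Nat.le_succ n) 2))
  -- the random quantities
  set S : ℕ → Ω → ℝ := fun N ω => ∑ i ∈ Finset.Ioc 0 N, x i * Y i ω with hSdef
  set W : ℕ → Ω → ℝ := fun n ω => ∑ i ∈ Finset.Ioc (n ^ 2) ((n + 1) ^ 2), Y i ω ^ 2 with hWdef
  have hSL2 : ∀ N, MemLp (S N) 2 Pr := by
    intro N
    have h := memLp_finset_sum' (Finset.Ioc 0 N)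
      (fun i (_ : i ∈ Finset.Ioc 0 N) => (hY2 i).const_mul (x i))
    have he : (∑ i ∈ Finset.Ioc 0 N, fun ω => x i * Y i ω) = S N := by
      funext ω; simp [hSdef, Finset.sum_apply]
    rwa [he] at h
  have hWnn : ∀ n ω, 0 ≤ W n ω := fun n ω => Finset.sum_nonneg fun i _ => sq_nonneg _
  have hWint : ∀ n, Integrable (W n) Pr :=
    fun n => integrable_finset_sum _ fun i _ => (hY2 i).integrable_sq
  have hEW : ∀ n, ∫ ω, W n ω ∂Pr = ((2 * n + 1 : ℕ) : ℝ) * σ2 := by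
    intro n
    rw [hWdef]
    simp only
    rw [integral_finset_sum _ fun i _ => (hY2 i).integrable_sq,
      Finset.sum_congr rfl fun i _ => hσ i, Finset.sum_const, Nat.card_Ioc, nsmul_eq_mul]
    congr 2
    have h : (n + 1) ^ 2 = n ^ 2 + (2 * n + 1) := by ring
    rw [h, Nat.add_sub_cancel_left]
  -- the two sequences of nonnegative random variables
  set f : ℕ → Ω → ℝ := fun n ω => ((n : ℝ) ^ 2)⁻¹ ^ 2 * S (n ^ 2) ω ^ 2 with hfdef
  set g : ℕ → Ω → ℝ := fun n ω =>
    ((n : ℝ) ^ 2)⁻¹ ^ 2 * (P ((n + 1) ^ 2) - P (n ^ 2)) * W n ω with hgdef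
  have hfint : ∀ n, Integrable (f n) Pr := fun n => ((hSL2 (n ^ 2)).integrable_sq).const_mul _
  have hgint : ∀ n, Integrable (g n) Pr := fun n => (hWint n).const_mul _
  have hfnn : ∀ n ω, 0 ≤ f n ω := fun n ω => mul_nonneg (by positivity) (sq_nonneg _)
  have hgnn : ∀ n ω, 0 ≤ g n ω :=
    fun n ω => mul_nonneg (mul_nonneg (by positivity) (hTnn n)) (hWnn n ω)
  -- integral bounds and summability for f
  have hfI : ∀ n, ∫ ω, f n ω ∂Pr ≤ σ2 * B * ((n : ℝ) ^ 2)⁻¹ := by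
    intro n
    have : ∫ ω, f n ω ∂Pr = ((n : ℝ) ^ 2)⁻¹ ^ 2 * (σ2 * P (n ^ 2)) := by
      rw [hfdef]; simp only
      rw [integral_const_mul, E2 (Finset.Ioc 0 (n ^ 2))]
    rw [this]
    rcases Nat.eq_zero_or_pos n with rfl | hn
    · simp
    · have hy : (0 : ℝ) < (n : ℝ) ^ 2 := by positivity
      have hPb : P (n ^ 2) ≤ B * (n : ℝ) ^ 2 := by
        have := hPB (n ^ 2)
        have hc : ((n ^ 2 : ℕ) : ℝ) = (n : ℝ) ^ 2 := by push_cast; ring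
        linarith [hc ▸ this]
      calc ((n : ℝ) ^ 2)⁻¹ ^ 2 * (σ2 * P (n ^ 2))
          ≤ ((n : ℝ) ^ 2)⁻¹ ^ 2 * (σ2 * (B * (n : ℝ) ^ 2)) := by
            apply mul_le_mul_of_nonneg_left _ (by positivity)
            exact mul_le_mul_of_nonneg_left hPb hσnn
        _ = σ2 * B * ((n : ℝ) ^ 2)⁻¹ := by field_simp
  have hfsum : Summable fun n => ∫ ω, f n ω ∂Pr := by
    apply Summable.of_nonneg_of_le (fun n => integral_nonneg (hfnn n)) hfI
    have : Summable fun n : ℕ => ((n : ℝ) ^ 2)⁻¹ := Real.summable_nat_pow_inv.mpr one_lt_two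
    exact this.mul_left _
  -- integral bounds and summability for g
  have hgI : ∀ n, ∫ ω, g n ω ∂Pr
      ≤ σ2 * ((P ((n + 1) ^ 2) - P (n ^ 2)) * (3 * ((n : ℝ) ^ 3)⁻¹)) := by
    intro n
    have : ∫ ω, g n ω ∂Pr
        = ((n : ℝ) ^ 2)⁻¹ ^ 2 * (P ((n + 1) ^ 2) - P (n ^ 2)) * (((2 * n + 1 : ℕ) : ℝ) * σ2) := by
      rw [hgdef]; simp only
      rw [integral_const_mul, hEW n]
    rw [this]
    rcases Nat.eq_zero_or_pos n with rfl | hn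
    · simp
    · have hn1 : (1 : ℝ) ≤ (n : ℝ) := by exact_mod_cast hn
      have hcoef : ((n : ℝ) ^ 2)⁻¹ ^ 2 * ((2 * n + 1 : ℕ) : ℝ) ≤ 3 * ((n : ℝ) ^ 3)⁻¹ := by
        have hc : ((2 * n + 1 : ℕ) : ℝ) = 2 * (n : ℝ) + 1 := by push_cast; ring
        rw [hc]
        rw [show ((n : ℝ) ^ 2)⁻¹ ^ 2 = ((n : ℝ) ^ 4)⁻¹ by
          rw [inv_pow, ← pow_mul]]
        rw [inv_eq_one_div, inv_eq_one_div, div_mul_eq_mul_div, mul_one_div,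
          div_le_div_iff₀ (by positivity) (by positivity)]
        nlinarith [pow_nonneg (by linarith : (0:ℝ) ≤ (n:ℝ)) 3]
      calc ((n : ℝ) ^ 2)⁻¹ ^ 2 * (P ((n + 1) ^ 2) - P (n ^ 2)) * (((2 * n + 1 : ℕ) : ℝ) * σ2)
          = (((n : ℝ) ^ 2)⁻¹ ^ 2 * ((2 * n + 1 : ℕ) : ℝ)) * ((P ((n + 1) ^ 2) - P (n ^ 2)) * σ2) := by
            ring
        _ ≤ (3 * ((n : ℝ) ^ 3)⁻¹) * ((P ((n + 1) ^ 2) - P (n ^ 2)) * σ2) :=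
            mul_le_mul_of_nonneg_right hcoef (mul_nonneg (hTnn n) hσnn)
        _ = σ2 * ((P ((n + 1) ^ 2) - P (n ^ 2)) * (3 * ((n : ℝ) ^ 3)⁻¹)) := by ring
  have hgsum : Summable fun n => ∫ ω, g n ω ∂Pr := by
    apply Summable.of_nonneg_of_le (fun n => integral_nonneg (hgnn n)) hgI
    exact (st18_summable P B hB hPnn hPmono hPB).mul_left σ2
  -- a.e. convergence of f and g
  have haef := st18_ae_tendsto Pr f hfint hfnn hfsum
  have haeg := st18_ae_tendsto Pr g hgint hgnn hgsum
  filter_upwards [haef, haeg] with ω h1 h2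
  -- assembly
  have hG : Tendsto (fun n => Real.sqrt (f n ω) + Real.sqrt (g n ω)) atTop (𝓝 0) := by
    have hs1 : Tendsto (fun n => Real.sqrt (f n ω)) atTop (𝓝 0) := by
      have := (Real.continuous_sqrt.tendsto' 0 0 Real.sqrt_zero).comp h1
      exact this
    have hs2 : Tendsto (fun n => Real.sqrt (g n ω)) atTop (𝓝 0) := by
      have := (Real.continuous_sqrt.tendsto' 0 0 Real.sqrt_zero).comp h2
      exact this
    simpa using hs1.add hs2
  have hNat : Tendsto Nat.sqrt atTop atTop := by
    apply tendsto_atTop_atTop.mpr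
    intro b
    exact ⟨b * b, fun m hm => le_trans (le_of_eq (Nat.sqrt_eq b).symm) (Nat.sqrt_le_sqrt hm)⟩
  refine squeeze_zero_norm' (a := fun m => Real.sqrt (f (Nat.sqrt m) ω) + Real.sqrt (g (Nat.sqrt m) ω)) ?_ (hG.comp hNat)
  · filter_upwards [eventually_ge_atTop 1] with m hm
    set n := Nat.sqrt m with hndef
    have hn1 : 1 ≤ n := Nat.sqrt_pos.mpr hm
    have hn2 : n ^ 2 ≤ m := Nat.sqrt_le' m
    have hm2 : m < (n + 1) ^ 2 := Nat.lt_succ_sqrt' m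
    have hmpos : (0 : ℝ) < (m : ℝ) := by exact_mod_cast hm
    have hnpos : (0 : ℝ) < (n : ℝ) ^ 2 := by
      have : (0:ℕ) < n := hn1
      positivity
    have hminv : (m : ℝ)⁻¹ ≤ ((n : ℝ) ^ 2)⁻¹ := by
      apply inv_anti₀ hnpos
      have : ((n ^ 2 : ℕ) : ℝ) ≤ (m : ℝ) := by exact_mod_cast hn2
      push_cast at this
      linarith
    have hsplit : ∑ i ∈ Finset.Ioc 0 m, x i * Y i ω
        = S (n ^ 2) ω + ∑ i ∈ Finset.Ioc (n ^ 2) m, x i * Y i ω :=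
      (Finset.sum_Ioc_consecutive _ (Nat.zero_le _) hn2).symm
    have hCS : |∑ i ∈ Finset.Ioc (n ^ 2) m, x i * Y i ω|
        ≤ Real.sqrt ((∑ i ∈ Finset.Ioc (n ^ 2) ((n + 1) ^ 2), x i ^ 2) * W n ω) := by
      have step1 : |∑ i ∈ Finset.Ioc (n ^ 2) m, x i * Y i ω|
          ≤ ∑ i ∈ Finset.Ioc (n ^ 2) ((n + 1) ^ 2), |x i| * |Y i ω| := by
        refine (Finset.abs_sum_le_sum_abs _ _).trans ?_
        have : ∀ i ∈ Finset.Ioc (n ^ 2) m, |x i * Y i ω| = |x i| * |Y i ω| :=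
          fun i _ => abs_mul _ _
        rw [Finset.sum_congr rfl this]
        exact Finset.sum_le_sum_of_subset_of_nonneg
          (Finset.Ioc_subset_Ioc_right hm2.le)
          (fun i _ _ => mul_nonneg (abs_nonneg _) (abs_nonneg _))
      refine step1.trans ?_
      rw [Real.le_sqrt (Finset.sum_nonneg fun i _ => mul_nonneg (abs_nonneg _) (abs_nonneg _))
        (mul_nonneg (Finset.sum_nonneg fun i _ => sq_nonneg _) (hWnn n ω))]
      have := Finset.sum_mul_sq_le_sq_mul_sq (Finset.Ioc (n ^ 2) ((n + 1) ^ 2))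
        (fun i => |x i|) (fun i => |Y i ω|)
      simpa [sq_abs, hWdef] using this
    have hfs : Real.sqrt (f n ω) = ((n : ℝ) ^ 2)⁻¹ * |S (n ^ 2) ω| := by
      rw [hfdef]; simp only
      rw [Real.sqrt_mul (sq_nonneg _), Real.sqrt_sq_eq_abs, Real.sqrt_sq_eq_abs,
        abs_of_nonneg (by positivity : (0:ℝ) ≤ ((n : ℝ) ^ 2)⁻¹)]
    have hgs : Real.sqrt (g n ω) = ((n : ℝ) ^ 2)⁻¹
        * Real.sqrt ((∑ i ∈ Finset.Ioc (n ^ 2) ((n + 1) ^ 2), x i ^ 2) * W n ω) := by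
      have hTval : P ((n + 1) ^ 2) - P (n ^ 2)
          = ∑ i ∈ Finset.Ioc (n ^ 2) ((n + 1) ^ 2), x i ^ 2 := by
        linarith [hT n]
      have : g n ω = (((n : ℝ) ^ 2)⁻¹) ^ 2
          * ((∑ i ∈ Finset.Ioc (n ^ 2) ((n + 1) ^ 2), x i ^ 2) * W n ω) := by
        rw [hgdef]; simp only [hTval]; ring
      rw [this, Real.sqrt_mul (sq_nonneg _), Real.sqrt_sq_eq_abs,
        abs_of_nonneg (by positivity : (0:ℝ) ≤ ((n : ℝ) ^ 2)⁻¹)]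
    rw [hfs, hgs]
    calc ‖(m : ℝ)⁻¹ * ∑ i ∈ Finset.Ioc 0 m, x i * Y i ω‖
        = (m : ℝ)⁻¹ * |∑ i ∈ Finset.Ioc 0 m, x i * Y i ω| := by
          rw [Real.norm_eq_abs, abs_mul, abs_of_nonneg (inv_nonneg.mpr hmpos.le)]
      _ ≤ ((n : ℝ) ^ 2)⁻¹ * (|S (n ^ 2) ω| + |∑ i ∈ Finset.Ioc (n ^ 2) m, x i * Y i ω|) := by
          apply mul_le_mul hminv _ (abs_nonneg _) (by positivity)
          rw [hsplit]; exact abs_add_le _ _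
      _ ≤ ((n : ℝ) ^ 2)⁻¹ * (|S (n ^ 2) ω|
            + Real.sqrt ((∑ i ∈ Finset.Ioc (n ^ 2) ((n + 1) ^ 2), x i ^ 2) * W n ω)) := by
          apply mul_le_mul_of_nonneg_left _ (by positivity)
          linarith [hCS]
      _ = ((n : ℝ) ^ 2)⁻¹ * |S (n ^ 2) ω| + ((n : ℝ) ^ 2)⁻¹
            * Real.sqrt ((∑ i ∈ Finset.Ioc (n ^ 2) ((n + 1) ^ 2), x i ^ 2) * W n ω) := by ring

/-- Let `(u_i)_{i≥1} ⊆ ℝ^k` and `(v_i)_{i≥1} ⊆ ℝ^q` with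
`m⁻¹ ∑_{i=1}^m ‖u_i‖²` and `m⁻¹ ∑_{i=1}^m ‖v_i‖²` bounded in `m`, and let `(ε_i)` be i.i.d.
random vectors in `ℝ^q` with mean zero and finite componentwise variances. With `C̄₂₁`,
`C̄₂₂`, `E` the matrices with rows `u_i`, `v_i`, `ε_i` respectively, almost surely
`m⁻¹ C̄₂₁ᵀE → 0` and `m⁻¹ C̄₂₂ᵀE → 0`. -/
theorem statement18
    {Ω : Type*} [MeasurableSpace Ω] (Pr : Measure Ω) [IsProbabilityMeasure Pr]
    (k q : ℕ) (u : ℕ → Fin k → ℝ) (v : ℕ → Fin q → ℝ) (B : ℝ)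
    (hBu : ∀ m : ℕ, 1 ≤ m → (m : ℝ)⁻¹ * ∑ i ∈ Finset.Icc 1 m, (∑ a, (u i a) ^ 2) ≤ B)
    (hBv : ∀ m : ℕ, 1 ≤ m → (m : ℝ)⁻¹ * ∑ i ∈ Finset.Icc 1 m, (∑ b, (v i b) ^ 2) ≤ B)
    (ε : ℕ → Ω → Fin q → ℝ)
    (hmeas : ∀ i, Measurable (ε i))
    (hindep : iIndepFun ε Pr)
    (hident : ∀ i, IdentDistrib (ε i) (ε 1) Pr Pr)
    (hmean : ∀ i c, ∫ ω, ε i ω c ∂Pr = 0)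
    (hL2 : ∀ i c, MemLp (fun ω => ε i ω c) 2 Pr) :
    ∀ᵐ ω ∂Pr,
      Tendsto (fun m : ℕ => (m : ℝ)⁻¹ • ∑ i ∈ Finset.Icc 1 m,
        Matrix.vecMulVec (u i) (ε i ω)) atTop (𝓝 (0 : Matrix (Fin k) (Fin q) ℝ)) ∧
      Tendsto (fun m : ℕ => (m : ℝ)⁻¹ • ∑ i ∈ Finset.Icc 1 m,
        Matrix.vecMulVec (v i) (ε i ω)) atTop (𝓝 (0 : Matrix (Fin q) (Fin q) ℝ)) := by
  have hB0 : 0 ≤ B := by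
    have h := hBu 1 le_rfl
    have h0 : (0 : ℝ) ≤ (1 : ℝ)⁻¹ * ∑ i ∈ Finset.Icc 1 1, (∑ a, (u i a) ^ 2) := by
      apply mul_nonneg (by norm_num)
      exact Finset.sum_nonneg fun i _ => Finset.sum_nonneg fun a _ => sq_nonneg _
    simpa using h0.trans (by simpa using h)
  -- column-wise bounds
  have hxu : ∀ a : Fin k, ∀ m : ℕ, 1 ≤ m → ∑ i ∈ Finset.Ioc 0 m, (u i a) ^ 2 ≤ B * m := by
    intro a m hm
    have h := hBu m hm
    have hmpos : (0 : ℝ) < (m : ℝ) := by exact_mod_cast hm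
    have h2 : ∑ i ∈ Finset.Icc 1 m, (∑ a', (u i a') ^ 2) ≤ B * m := by
      have := mul_le_mul_of_nonneg_left h hmpos.le
      rw [← mul_assoc, mul_inv_cancel₀ hmpos.ne', one_mul] at this
      linarith
    refine le_trans ?_ h2
    rw [← Finset.Icc_add_one_left_eq_Ioc]
    exact Finset.sum_le_sum fun i _ => Finset.single_le_sum (f := fun a' => (u i a') ^ 2) (fun a' _ => sq_nonneg _)
      (Finset.mem_univ a)
  have hxv : ∀ b : Fin q, ∀ m : ℕ, 1 ≤ m → ∑ i ∈ Finset.Ioc 0 m, (v i b) ^ 2 ≤ B * m := by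
    intro b m hm
    have h := hBv m hm
    have hmpos : (0 : ℝ) < (m : ℝ) := by exact_mod_cast hm
    have h2 : ∑ i ∈ Finset.Icc 1 m, (∑ b', (v i b') ^ 2) ≤ B * m := by
      have := mul_le_mul_of_nonneg_left h hmpos.le
      rw [← mul_assoc, mul_inv_cancel₀ hmpos.ne', one_mul] at this
      linarith
    refine le_trans ?_ h2
    rw [← Finset.Icc_add_one_left_eq_Ioc]
    exact Finset.sum_le_sum fun i _ => Finset.single_le_sum (f := fun b' => (v i b') ^ 2) (fun b' _ => sq_nonneg _)
      (Finset.mem_univ b)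
  -- scalar conclusion for arbitrary weight sequences
  have main : ∀ x : ℕ → ℝ, (∀ m : ℕ, 1 ≤ m → ∑ i ∈ Finset.Ioc 0 m, x i ^ 2 ≤ B * m) →
      ∀ c : Fin q, ∀ᵐ ω ∂Pr,
        Tendsto (fun m : ℕ => (m : ℝ)⁻¹ * ∑ i ∈ Finset.Ioc 0 m, x i * ε i ω c)
          atTop (𝓝 0) := by
    intro x hx c
    refine st18_key Pr x B hB0 hx (fun i ω => ε i ω c) (fun i => hL2 i c)
      (fun i => hmean i c) ?_ (∫ ω, (ε 1 ω c) ^ 2 ∂Pr) ?_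
    · intro i j hij
      exact (hindep.indepFun hij).comp (measurable_pi_apply c) (measurable_pi_apply c)
    · intro i
      have hid := (hident i).comp
        (show Measurable fun y : Fin q → ℝ => (y c) ^ 2 from (measurable_pi_apply c).pow_const 2)
      exact hid.integral_eq
  have h1 : ∀ᵐ ω ∂Pr, ∀ p : Fin k × Fin q,
      Tendsto (fun m : ℕ => (m : ℝ)⁻¹ * ∑ i ∈ Finset.Ioc 0 m, u i p.1 * ε i ω p.2)
        atTop (𝓝 0) :=
    ae_all_iff.mpr fun p => main (fun i => u i p.1) (hxu p.1) p.2
  have h2 : ∀ᵐ ω ∂Pr, ∀ p : Fin q × Fin q,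
      Tendsto (fun m : ℕ => (m : ℝ)⁻¹ * ∑ i ∈ Finset.Ioc 0 m, v i p.1 * ε i ω p.2)
        atTop (𝓝 0) :=
    ae_all_iff.mpr fun p => main (fun i => v i p.1) (hxv p.1) p.2
  filter_upwards [h1, h2] with ω hu' hv'
  constructor
  · apply tendsto_pi_nhds.mpr
    intro a
    rw [tendsto_pi_nhds]
    intro c
    have he : (fun m : ℕ => ((m : ℝ)⁻¹ • ∑ i ∈ Finset.Icc 1 m,
        Matrix.vecMulVec (u i) (ε i ω)) a c)
        = fun m : ℕ => (m : ℝ)⁻¹ * ∑ i ∈ Finset.Ioc 0 m, u i a * ε i ω c := by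
      funext m
      rw [← Finset.Icc_add_one_left_eq_Ioc]
      simp [Matrix.smul_apply, Matrix.sum_apply, Matrix.vecMulVec_apply]
    rw [show ((0 : Matrix (Fin k) (Fin q) ℝ) a c) = 0 from rfl, he]
    exact hu' (a, c)
  · apply tendsto_pi_nhds.mpr
    intro b
    rw [tendsto_pi_nhds]
    intro c
    have he : (fun m : ℕ => ((m : ℝ)⁻¹ • ∑ i ∈ Finset.Icc 1 m,
        Matrix.vecMulVec (v i) (ε i ω)) b c)
        = fun m : ℕ => (m : ℝ)⁻¹ * ∑ i ∈ Finset.Ioc 0 m, v i b * ε i ω c := by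
      funext m
      rw [← Finset.Icc_add_one_left_eq_Ioc]
      simp [Matrix.smul_apply, Matrix.sum_apply, Matrix.vecMulVec_apply]
    rw [show ((0 : Matrix (Fin q) (Fin q) ℝ) b c) = 0 from rfl, he]
    exact hv' (b, c)
end

section
/- Let A_u ∈ ℝ^{j×n} be a fixed matrix and let (ā_i)_{i≥1} be a sequence of vectors in ℝ^n; for each m let A_l^{(m)} ∈ ℝ^{m×n} be the matrix with rows ā_1,…,ā_m, and assume S_A := lim_m m⁻¹ (A_l^{(m)})ᵀA_l^{(m)} exists. If the (j+n)×n matrix obtained by stacking A_u on top of S_A has rank n, then there exists M such that for all m ≥ M the (j+m)×n matrix obtained by stacking A_u on top of A_l^{(m)} has rank n; consequently, for all m ≥ M, any X, X' ∈ ℝ^{n×ℓ} satisfying [A_u; A_l^{(m)}]·X = [A_u; A_l^{(m)}]·X' are equal. -/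
open Filter Matrix
open scoped Topology

/-- A matrix with `n` columns whose `mulVec` kernel is trivial has rank `n`. -/
lemma aux_rank_eq_of_ker {m' : Type*} [Fintype m'] {n : ℕ}
    (A : Matrix m' (Fin n) ℝ) (h : ∀ x : Fin n → ℝ, A *ᵥ x = 0 → x = 0) :
    A.rank = n := by
  have hinj : Function.Injective A.mulVecLin := by
    rw [← LinearMap.ker_eq_bot, eq_bot_iff]
    intro x hx
    simp only [LinearMap.mem_ker, Matrix.mulVecLin_apply] at hx
    simpa using h x hx
  rw [Matrix.rank, LinearMap.finrank_range_of_inj hinj]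
  simp

/-- A matrix with `n` columns and rank `n` has trivial `mulVec` kernel. -/
lemma aux_ker_of_rank_eq {m' : Type*} [Fintype m'] {n : ℕ}
    (A : Matrix m' (Fin n) ℝ) (h : A.rank = n) :
    ∀ x : Fin n → ℝ, A *ᵥ x = 0 → x = 0 := by
  have hk := LinearMap.finrank_range_add_finrank_ker A.mulVecLin
  rw [Module.finrank_fin_fun] at hk
  rw [Matrix.rank] at h
  have hker : LinearMap.ker A.mulVecLin = ⊥ := Submodule.finrank_eq_zero.mp (by omega)
  intro x hx
  have : x ∈ LinearMap.ker A.mulVecLin := by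
    simpa [LinearMap.mem_ker, Matrix.mulVecLin_apply] using hx
  simpa [hker] using this


lemma aux_dot_self_nonneg {k : Type*} [Fintype k] (v : k → ℝ) : 0 ≤ v ⬝ᵥ v :=
  Finset.sum_nonneg fun i _ => mul_self_nonneg _

lemma aux_sum_mulVec {k : Type*} [Fintype k] {ι : Type*} (s : Finset ι)
    (f : ι → Matrix k k ℝ) (x : k → ℝ) :
    (∑ i ∈ s, f i) *ᵥ x = ∑ i ∈ s, f i *ᵥ x := by
  classical
  induction s using Finset.induction_on with
  | empty => simp [Matrix.zero_mulVec]
  | insert a s h ih => simp [Finset.sum_insert h, Matrix.add_mulVec, ih]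

lemma aux_vecMulVec_mulVec {k : Type*} [Fintype k] (v w x : k → ℝ) :
    Matrix.vecMulVec v w *ᵥ x = (w ⬝ᵥ x) • v := by
  funext r
  simp [Matrix.mulVec, Matrix.vecMulVec_apply, dotProduct, Finset.mul_sum,
    mul_assoc, mul_comm, mul_left_comm]

lemma aux_dot_sum {k : Type*} [Fintype k] {ι : Type*} (s : Finset ι)
    (x : k → ℝ) (g : ι → (k → ℝ)) :
    x ⬝ᵥ (∑ i ∈ s, g i) = ∑ i ∈ s, x ⬝ᵥ g i := by
  classical
  induction s using Finset.induction_on with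
  | empty => simp
  | insert a s h ih => simp [Finset.sum_insert h, dotProduct_add, ih]

/-- Let `A_u ∈ ℝ^{j×n}` be fixed and `(ā_i)_{i≥1} ⊆ ℝ^n`; let
`A_l^{(m)} ∈ ℝ^{m×n}` have rows `ā_1,…,ā_m` and assume `S_A = lim m⁻¹ (A_l^{(m)})ᵀA_l^{(m)}`
exists. If `rank [A_u; S_A] = n` then there is `M` such that for all `m ≥ M`,
`rank [A_u; A_l^{(m)}] = n`, and consequently any `X, X' ∈ ℝ^{n×ℓ}` with
`[A_u; A_l^{(m)}]·X = [A_u; A_l^{(m)}]·X'` are equal. -/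
theorem statement19
    (j n ℓ : ℕ)
    (Au : Matrix (Fin j) (Fin n) ℝ) (abar : ℕ → Fin n → ℝ)
    (SA : Matrix (Fin n) (Fin n) ℝ)
    (hSA : Tendsto (fun m : ℕ => (m : ℝ)⁻¹ • ∑ i ∈ Finset.Icc 1 m,
      Matrix.vecMulVec (abar i) (abar i)) atTop (𝓝 SA))
    (hrank : (Matrix.fromRows Au SA).rank = n) :
    ∃ M : ℕ, ∀ m ≥ M,
      (Matrix.fromRows Au (Matrix.of fun (i : Fin m) r => abar (i.1 + 1) r)).rank = n ∧
      ∀ X X' : Matrix (Fin n) (Fin ℓ) ℝ,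
        Matrix.fromRows Au (Matrix.of fun (i : Fin m) r => abar (i.1 + 1) r) * X =
          Matrix.fromRows Au (Matrix.of fun (i : Fin m) r => abar (i.1 + 1) r) * X' →
        X = X' := by
  classical
  set Ms : ℕ → Matrix (Fin n) (Fin n) ℝ := fun m =>
    (m : ℝ)⁻¹ • ∑ i ∈ Finset.Icc 1 m, Matrix.vecMulVec (abar i) (abar i) with hMs
  -- quadratic form of Ms m is nonnegative
  have hquad : ∀ m (x : Fin n → ℝ), 0 ≤ x ⬝ᵥ Ms m *ᵥ x := by
    intro m x
    have : x ⬝ᵥ Ms m *ᵥ x =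
        (m : ℝ)⁻¹ * ∑ i ∈ Finset.Icc 1 m, (abar i ⬝ᵥ x) * (abar i ⬝ᵥ x) := by
      simp only [hMs, Matrix.smul_mulVec, dotProduct_smul, smul_eq_mul]
      congr 1
      rw [aux_sum_mulVec, aux_dot_sum]
      refine Finset.sum_congr rfl fun i _ => ?_
      rw [aux_vecMulVec_mulVec, dotProduct_smul]
      simp [dotProduct_comm, mul_comm]
    rw [this]
    have h1 : (0:ℝ) ≤ (m : ℝ)⁻¹ := by positivity
    exact mul_nonneg h1 (Finset.sum_nonneg fun i _ => mul_self_nonneg _)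
  -- each Ms m is symmetric
  have hsymm : ∀ m, (Ms m)ᵀ = Ms m := by
    intro m
    ext i k
    simp only [hMs, Matrix.transpose_apply, Matrix.smul_apply, Matrix.sum_apply,
      Matrix.vecMulVec_apply, smul_eq_mul]
    congr 1
    exact Finset.sum_congr rfl fun _ _ => mul_comm _ _
  -- SA is positive semidefinite
  have hSAherm : SA.IsHermitian := by
    have htr : Tendsto (fun m => (Ms m)ᵀ) atTop (𝓝 SAᵀ) :=
      ((continuous_id.matrix_transpose).tendsto SA).comp hSA
    simp only [hsymm] at htr
    have : SAᵀ = SA := tendsto_nhds_unique htr hSA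
    simpa [Matrix.IsHermitian, Matrix.conjTranspose_eq_transpose_of_trivial] using this
  have hSAquad : ∀ x : Fin n → ℝ, 0 ≤ x ⬝ᵥ SA *ᵥ x := by
    intro x
    have hc : Tendsto (fun m => x ⬝ᵥ Ms m *ᵥ x) atTop (𝓝 (x ⬝ᵥ SA *ᵥ x)) := by
      have hcont : Continuous fun A : Matrix (Fin n) (Fin n) ℝ => x ⬝ᵥ A *ᵥ x :=
        (continuous_const.dotProduct (continuous_id.matrix_mulVec continuous_const))
      exact (hcont.tendsto SA).comp hSA
    exact ge_of_tendsto' hc fun m => hquad m x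
  have hSApsd : SA.PosSemidef := .of_dotProduct_mulVec_nonneg hSAherm (fun x => by simpa using hSAquad x)
  -- the limit matrix P = Auᵀ Au + SA is positive definite
  set P : Matrix (Fin n) (Fin n) ℝ := Auᵀ * Au + SA with hPdef
  have hAuquad : ∀ x : Fin n → ℝ, x ⬝ᵥ (Auᵀ * Au) *ᵥ x = (Au *ᵥ x) ⬝ᵥ (Au *ᵥ x) := by
    intro x
    rw [← Matrix.mulVec_mulVec, Matrix.dotProduct_mulVec, Matrix.vecMul_transpose]
  have hP : P.PosDef := by
    refine .of_dotProduct_mulVec_pos ((show (Auᵀ * Au).IsHermitian by simpa using Matrix.isHermitian_conjTranspose_mul_self Au).add hSAherm) fun x hx => ?_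
    have hne : x ⬝ᵥ P *ᵥ x ≠ 0 := by
      intro h0
      rw [hPdef, Matrix.add_mulVec, dotProduct_add, hAuquad] at h0
      have h1 : (Au *ᵥ x) ⬝ᵥ (Au *ᵥ x) = 0 ∧ x ⬝ᵥ SA *ᵥ x = 0 := by
        constructor
        · linarith [hSAquad x, aux_dot_self_nonneg (Au *ᵥ x)]
        · linarith [hSAquad x, aux_dot_self_nonneg (Au *ᵥ x)]
      have hAux : Au *ᵥ x = 0 := dotProduct_self_eq_zero.mp h1.1
      have hSAx : SA *ᵥ x = 0 := by
        have := (hSApsd.dotProduct_mulVec_zero_iff x).mp (by simpa using h1.2)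
        exact this
      have hfr : (Matrix.fromRows Au SA) *ᵥ x = 0 := by
        rw [Matrix.fromRows_mulVec, hAux, hSAx]
        ext (i | i) <;> simp
      exact hx (aux_ker_of_rank_eq _ hrank x hfr)
    have hge : 0 ≤ x ⬝ᵥ P *ᵥ x := by
      rw [hPdef, Matrix.add_mulVec, dotProduct_add, hAuquad]
      exact add_nonneg (aux_dot_self_nonneg _) (hSAquad x)
    simpa using lt_of_le_of_ne hge (Ne.symm hne)
  -- eventually det (Auᵀ Au + Ms m) ≠ 0
  have hten : Tendsto (fun m => Auᵀ * Au + Ms m) atTop (𝓝 P) := by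
    simpa using (tendsto_const_nhds.add hSA)
  have hdet : Tendsto (fun m => (Auᵀ * Au + Ms m).det) atTop (𝓝 P.det) :=
    ((continuous_id.matrix_det).tendsto P).comp hten
  have hev : ∀ᶠ m in atTop, (Auᵀ * Au + Ms m).det ≠ 0 :=
    hdet.eventually_ne hP.det_pos.ne'
  obtain ⟨M, hM⟩ := eventually_atTop.mp hev
  refine ⟨M, fun m hm => ?_⟩
  set Al : Matrix (Fin m) (Fin n) ℝ := Matrix.of fun (i : Fin m) r => abar (i.1 + 1) r with hAl
  -- trivial kernel of the stacked matrix
  have hker : ∀ x : Fin n → ℝ, (Matrix.fromRows Au Al) *ᵥ x = 0 → x = 0 := by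
    intro x hx
    rw [Matrix.fromRows_mulVec] at hx
    have hAux : Au *ᵥ x = 0 := by
      funext i
      have := congrFun hx (Sum.inl i)
      simpa using this
    have hAlx : ∀ i : ℕ, i ∈ Finset.Icc 1 m → abar i ⬝ᵥ x = 0 := by
      intro i hi
      rw [Finset.mem_Icc] at hi
      have hlt : i - 1 < m := by omega
      have := congrFun hx (Sum.inr ⟨i - 1, hlt⟩)
      have h' : abar (i - 1 + 1) ⬝ᵥ x = 0 := by
        simpa [hAl, Matrix.mulVec, dotProduct] using this
      have hi1 : i - 1 + 1 = i := by omega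
      rwa [hi1] at h'
    have hMsx : Ms m *ᵥ x = 0 := by
      rw [hMs]
      simp only [Matrix.smul_mulVec]
      have hsum : (∑ i ∈ Finset.Icc 1 m, Matrix.vecMulVec (abar i) (abar i)) *ᵥ x = 0 := by
        rw [aux_sum_mulVec]
        refine Finset.sum_eq_zero fun i hi => ?_
        rw [aux_vecMulVec_mulVec, hAlx i hi, zero_smul]
      rw [hsum, smul_zero]
    have hGx : (Auᵀ * Au + Ms m) *ᵥ x = 0 := by
      rw [Matrix.add_mulVec, ← Matrix.mulVec_mulVec, hAux, hMsx]
      simp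
    have hunit : IsUnit (Auᵀ * Au + Ms m) :=
      (Matrix.isUnit_iff_isUnit_det _).mpr (Ne.isUnit (hM m hm))
    have hinj := Matrix.mulVec_injective_iff_isUnit.mpr hunit
    have := hinj (a₁ := x) (a₂ := 0) (by simpa using hGx)
    simpa using this
  refine ⟨aux_rank_eq_of_ker _ hker, fun X X' hXX => ?_⟩
  have hcol : ∀ c : Fin ℓ, (fun r => X r c - X' r c) = 0 := by
    intro c
    apply hker
    funext i
    have h1 := congrFun (congrFun hXX i) c
    simp only [Matrix.mul_apply] at h1
    simp [Matrix.mulVec, dotProduct, mul_sub, Finset.sum_sub_distrib, h1]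
  ext r c
  have := congrFun (hcol c) r
  simpa [sub_eq_zero] using this
end
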